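/- arXiv:2211.15267 — 10 statements merged into one kernel-verified Lean document; each statement's English description precedes it below -/
import Mathlib

section
/- Let F be a field and n a natural number with |F| > n. If g_1, ..., g_s ∈ F[x] are polynomials of degree at most n that are linearly independent over F, then there exist elements β_1, ..., β_s ∈ F such that the s×s matrix whose (i,j)-entry is g_i(β_j) is nonsingular (has nonzero determinant). -/
open Polynomial

lemma aux_li_det {F : Type*} [Field F] {α : Type*} :
    ∀ (s : ℕ) (v : Fin s → (α → F)), LinearIndependent F v →
    ∃ β : Fin s → α, (Matrix.of fun i j : Fin s => v i (β j)).det ≠ 0 := by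
  intro s
  induction s with
  | zero =>
    intro v _
    exact ⟨Fin.elim0, by simp [Matrix.det_fin_zero]⟩
  | succ s ih =>
    intro v hv
    obtain ⟨β', hβ'⟩ := ih (v ∘ Fin.castSucc)
      (hv.comp Fin.castSucc (Fin.castSucc_injective s))
    by_contra h
    push_neg at h
    set c : Fin (s + 1) → F := fun i =>
      (-1 : F) ^ ((i : ℕ) + s) *
        (Matrix.of fun k l : Fin s => v (i.succAbove k) (β' l)).det with hc
    have hsum : ∀ x : α, ∑ i, c i * v i x = 0 := by
      intro x
      have hdet := h (Fin.snoc β' x)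
      rw [Matrix.det_succ_column _ (Fin.last s)] at hdet
      rw [← hdet]
      apply Finset.sum_congr rfl
      intro i _
      have h3 : ((Matrix.of fun i j : Fin (s+1) => v i (Fin.snoc (α := fun _ => α) β' x j)).submatrix
          i.succAbove (Fin.last s).succAbove)
          = Matrix.of fun k l : Fin s => v (i.succAbove k) (β' l) := by
        ext k l
        simp [Fin.succAbove_last]
      rw [h3, hc]
      simp [Fin.snoc_last]
      ring
    have hzero : ∑ i ∈ Finset.univ, c i • v i = 0 := by
      funext x
      simpa [Finset.sum_apply] using hsum x
    have hlast : c (Fin.last s) = 0 :=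
      linearIndependent_iff'.mp hv Finset.univ c hzero (Fin.last s) (Finset.mem_univ _)
    apply hβ'
    have heq : (Matrix.of fun i j : Fin s => (v ∘ Fin.castSucc) i (β' j)) =
        (Matrix.of fun k l : Fin s => v ((Fin.last s).succAbove k) (β' l)) := by
      ext k l
      simp [Fin.succAbove_last]
    rw [heq]
    have hlast' : (-1 : F) ^ (s + s) *
        (Matrix.of fun k l : Fin s => v ((Fin.last s).succAbove k) (β' l)).det = 0 := hlast
    rwa [Even.neg_one_pow ⟨s, rfl⟩, one_mul] at hlast'

/-- Let `F` be a field and `n` a natural number with `|F| > n`.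
If `g 1, ..., g s ∈ F[x]` are polynomials of degree at most `n` that are linearly
independent over `F`, then there exist elements `β 1, ..., β s ∈ F` such that the
`s × s` matrix whose `(i,j)` entry is `(g i).eval (β j)` has nonzero determinant. -/
theorem stmt_0 (F : Type*) [Field F] (n s : ℕ)
    (hF : (n : Cardinal) < Cardinal.mk F)
    (g : Fin s → Polynomial F)
    (hdeg : ∀ i, (g i).natDegree ≤ n)
    (hli : LinearIndependent F g) :
    ∃ β : Fin s → F,
      (Matrix.of fun i j : Fin s => (g i).eval (β j)).det ≠ 0 := by
  have hv : LinearIndependent F (fun i : Fin s => fun x : F => (g i).eval x) := by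
    rw [linearIndependent_iff']
    intro t c hc i hi
    have hp : (∑ j ∈ t, c j • g j) = 0 := by
      apply Polynomial.eq_zero_of_forall_eval_zero_of_natDegree_lt_card
      · intro r
        have := congrFun hc r
        simpa [Polynomial.eval_finset_sum, Finset.sum_apply] using this
      · refine lt_of_le_of_lt ?_ hF
        rw [Nat.cast_le]
        apply Polynomial.natDegree_sum_le_of_forall_le
        intro j _
        exact le_trans (Polynomial.natDegree_smul_le _ _) (hdeg j)
    exact linearIndependent_iff'.mp hli t c hp i hi
  exact aux_li_det s _ hv
end

section
/- Let F be a field, n a natural number, and N > k_1 > k_2 ≥ 1 integers. For j = 1, 2 let G_j = {g_{1,j}, ..., g_{k_j,j}} ⊆ F[x] be a set of k_j polynomials of degree at most n that are linearly independent over F. If |F| > (C(N−1, k_1−1) + C(N−1, k_2−1))·n, then there exist N points α_1, ..., α_N ∈ F such that for each j ∈ {1,2} and every subset S ⊆ {1,...,N} with |S| = k_j, the k_j × k_j matrix whose (i,s)-entry is g_{i,j}(α_s) for s ∈ S is invertible. Consequently, any F-linear combination f_j(x) = Σ_{i=1}^{k_j} a_{i,j} g_{i,j}(x) is uniquely determined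 by its values at any k_j of the points α_1,...,α_N. -/
open Polynomial Submodule

/-- For a proper subspace `W` of `F^k`, there is a nonzero polynomial `q` of degree `≤ n`
(a combination of the `g i`) such that whenever `q.eval x ≠ 0`, the evaluation vector of the
`g i` at `x` avoids `W`. -/
lemma funct_exists {F : Type*} [Field F] {k n : ℕ} (g : Fin k → Polynomial F)
    (hdeg : ∀ i, (g i).natDegree ≤ n) (hli : LinearIndependent F g)
    (W : Submodule F (Fin k → F)) (hW : W < ⊤) :
    ∃ q : Polynomial F, q ≠ 0 ∧ q.natDegree ≤ n ∧
      ∀ x : F, q.eval x ≠ 0 → (fun i => (g i).eval x) ∉ W := by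
  obtain ⟨f, hf0, hfW⟩ := W.exists_dual_map_eq_bot_of_lt_top hW inferInstance
  set φ : Fin k → F := fun i => f (Pi.single i 1) with hφ
  have hfx : ∀ x : Fin k → F, f x = ∑ i, x i * φ i := by
    intro x
    conv_lhs => rw [pi_eq_sum_univ x]
    rw [map_sum]
    refine Finset.sum_congr rfl fun i _ => ?_
    rw [map_smul, smul_eq_mul]
    congr 1
    exact congrArg f (by funext j; simp [Pi.single_apply, eq_comm])
  refine ⟨∑ i, Polynomial.C (φ i) * g i, ?_, ?_, ?_⟩
  · intro h
    have hφ0 : ∀ i, φ i = 0 := by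
      have := (Fintype.linearIndependent_iff.mp hli) φ ?_
      · exact this
      · simpa [Polynomial.smul_eq_C_mul] using h
    apply hf0
    apply LinearMap.ext
    intro x
    rw [hfx x]
    simp [hφ0]
  · exact Polynomial.natDegree_sum_le_of_forall_le _ _ fun i _ =>
      (Polynomial.natDegree_C_mul_le _ _).trans (hdeg i)
  · intro x hx hmem
    apply hx
    have : f (fun i => (g i).eval x) = 0 := by
      have : f (fun i => (g i).eval x) ∈ W.map f := Submodule.mem_map_of_mem hmem
      rwa [hfW, Submodule.mem_bot] at this
    rw [hfx] at this
    rw [← this]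
    rw [Polynomial.eval_finset_sum]
    refine Finset.sum_congr rfl fun i _ => ?_
    rw [Polynomial.eval_mul, Polynomial.eval_C, mul_comm]

/-- Invariant: every choice of at most `k` of the points gives linearly independent
evaluation columns. -/
def EvalInv {F : Type*} [Field F] {k m : ℕ} (g : Fin k → Polynomial F) (α : Fin m → F) : Prop :=
  ∀ r : ℕ, r ≤ k → ∀ s : Fin r → Fin m, Function.Injective s →
    LinearIndependent F (fun t : Fin r => fun i : Fin k => (g i).eval (α (s t)))

lemma eval_inv_step {F : Type*} [Field F] {k n m : ℕ} (hk : 1 ≤ k)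
    (g : Fin k → Polynomial F) (hdeg : ∀ i, (g i).natDegree ≤ n)
    (hli : LinearIndependent F g) (α : Fin m → F) (hα : EvalInv g α) :
    ∃ Q : Polynomial F, Q ≠ 0 ∧ Q.natDegree ≤ m.choose (min m (k - 1)) * n ∧
      ∀ β : F, Q.eval β ≠ 0 → EvalInv g (Fin.snoc α β) := by
  classical
  set t := min m (k - 1) with ht
  set vf : Fin m → (Fin k → F) := fun x => fun i => (g i).eval (α x) with hvf
  -- for each subset `T` of size `t`, produce the avoiding polynomial
  have hex : ∀ T ∈ Finset.powersetCard t (Finset.univ : Finset (Fin m)),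
      ∃ q : Polynomial F, q ≠ 0 ∧ q.natDegree ≤ n ∧
        ∀ x : F, q.eval x ≠ 0 →
          (fun i => (g i).eval x) ∉ Submodule.span F ((T.image vf : Finset (Fin k → F)) : Set (Fin k → F)) := by
    intro T hT
    refine funct_exists g hdeg hli _ ?_
    have hcard : ((T.image vf : Finset (Fin k → F)) : Set (Fin k → F)).toFinset.card < Module.finrank F (Fin k → F) := by
      rw [Finset.toFinset_coe, Module.finrank_fin_fun]
      calc (T.image vf).card ≤ T.card := Finset.card_image_le
        _ = t := (Finset.mem_powersetCard.mp hT).2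
        _ ≤ k - 1 := min_le_right _ _
        _ < k := by omega
    exact span_lt_top_of_card_lt_finrank hcard
  choose! q hq0 hqd hqnm using hex
  refine ⟨∏ T ∈ Finset.powersetCard t (Finset.univ : Finset (Fin m)), q T, ?_, ?_, ?_⟩
  · rw [Finset.prod_ne_zero_iff]
    exact fun T hT => hq0 T hT
  · refine (Polynomial.natDegree_prod_le _ _).trans ?_
    calc ∑ T ∈ Finset.powersetCard t (Finset.univ : Finset (Fin m)), (q T).natDegree
        ≤ (Finset.powersetCard t (Finset.univ : Finset (Fin m))).card * n := by
          rw [← smul_eq_mul]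
          exact Finset.sum_le_card_nsmul _ _ n fun T hT => hqd T hT
      _ = m.choose t * n := by rw [Finset.card_powersetCard, Finset.card_univ, Fintype.card_fin]
  · intro β hβ r hr s hs
    have hqβ : ∀ T ∈ Finset.powersetCard t (Finset.univ : Finset (Fin m)),
        (q T).eval β ≠ 0 := by
      rw [Polynomial.eval_prod, Finset.prod_ne_zero_iff] at hβ
      exact hβ
    by_cases hlast : ∀ u, s u ≠ Fin.last m
    · -- no new point involved: reduce to the old invariant
      set s' : Fin r → Fin m := fun u => ⟨(s u).val, Fin.val_lt_last (hlast u)⟩ with hs'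
      have heq : (fun u : Fin r => fun i : Fin k => (g i).eval ((Fin.snoc α β : Fin (m+1) → F) (s u)))
          = fun u => vf (s' u) := by
        funext u i
        have : s u = Fin.castSucc (s' u) := by ext; rfl
        rw [this, Fin.snoc_castSucc]
      rw [heq]
      refine hα r hr s' fun u u' h => hs ?_
      have hv := congrArg Fin.val h
      exact Fin.ext hv
    · push_neg at hlast
      obtain ⟨u, hu⟩ := hlast
      cases r with
      | zero => exact u.elim0
      | succ r' =>
        set e := Equiv.swap (0 : Fin (r' + 1)) u with he
        rw [← linearIndependent_equiv e]
        set w : Fin (r' + 1) → (Fin k → F) :=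
          (fun u : Fin (r' + 1) => fun i : Fin k => (g i).eval ((Fin.snoc α β : Fin (m+1) → F) (s u))) ∘ e with hw
        show LinearIndependent F w
        have hse0 : s (e 0) = Fin.last m := by rw [he]; simpa using hu
        have hse : ∀ u' : Fin r', s (e u'.succ) ≠ Fin.last m := by
          intro u' h
          rw [← hse0] at h
          exact (Fin.succ_ne_zero u') (e.injective (hs h))
        set c : Fin r' → Fin m := fun u' => ⟨(s (e u'.succ)).val, Fin.val_lt_last (hse u')⟩ with hc
        have hcinj : Function.Injective c := by
          intro a b h
          have hv := congrArg Fin.val h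
          exact Fin.succ_injective _ (e.injective (hs (Fin.ext hv)))
        have htail : Fin.tail w = fun u' => vf (c u') := by
          funext u' i
          show (g i).eval ((Fin.snoc α β : Fin (m+1) → F) (s (e u'.succ))) = (g i).eval (α (c u'))
          have : s (e u'.succ) = Fin.castSucc (c u') := by ext; rfl
          rw [this, Fin.snoc_castSucc]
        rw [← Fin.cons_self_tail w, linearIndependent_fin_cons]
        constructor
        · rw [htail]
          exact hα r' (by omega) c hcinj
        · -- the new vector avoids the span of the old ones
          have hw0 : w 0 = fun i => (g i).eval β := by
            funext i
            show (g i).eval ((Fin.snoc α β : Fin (m+1) → F) (s (e 0))) = _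
            rw [hse0]
            simp [Fin.snoc_last]
          set T : Finset (Fin m) := Finset.image c Finset.univ with hT
          have hTcard : T.card = r' := by
            rw [hT, Finset.card_image_of_injective _ hcinj, Finset.card_univ, Fintype.card_fin]
          have hr'm : r' ≤ m := by
            simpa using Fintype.card_le_of_injective c hcinj
          obtain ⟨T', hTT', _, hT'card⟩ :=
            Finset.exists_subsuperset_card_eq (n := t) (Finset.subset_univ T)
              (by rw [hTcard]; exact le_min hr'm (by omega))
              (by rw [Finset.card_univ, Fintype.card_fin]; exact min_le_left _ _)
          have hT'mem : T' ∈ Finset.powersetCard t (Finset.univ : Finset (Fin m)) :=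
            Finset.mem_powersetCard.mpr ⟨Finset.subset_univ _, hT'card⟩
          intro hmem
          refine hqnm T' hT'mem β (hqβ T' hT'mem) ?_
          rw [← hw0]
          refine Submodule.span_mono ?_ hmem
          intro x hx
          obtain ⟨u', rfl⟩ := hx
          rw [htail]
          simp only [Finset.coe_image, Set.mem_image]
          exact ⟨c u', by simp [hT, hTT' (Finset.mem_image_of_mem c (Finset.mem_univ u'))], rfl⟩

lemma inv_conseq {F : Type*} [Field F] {k N : ℕ} (g : Fin k → Polynomial F)
    {α : Fin N → F} (hInv : EvalInv g α) :
    (∀ s : Fin k → Fin N, Function.Injective s →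
        (Matrix.of fun i j : Fin k => (g i).eval (α (s j))).det ≠ 0) ∧
    (∀ s : Fin k → Fin N, Function.Injective s → ∀ a a' : Fin k → F,
        (∀ j, (∑ i, a i • g i).eval (α (s j)) = (∑ i, a' i • g i).eval (α (s j))) →
        a = a') := by
  have hdet : ∀ s : Fin k → Fin N, Function.Injective s →
      (Matrix.of fun i j : Fin k => (g i).eval (α (s j))).det ≠ 0 := by
    intro s hs
    have hli := hInv k le_rfl s hs
    have hU : IsUnit (Matrix.of fun i j : Fin k => (g i).eval (α (s j))) := by
      rw [← Matrix.linearIndependent_cols_iff_isUnit]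
      exact hli
    exact ((Matrix.isUnit_iff_isUnit_det _).mp hU).ne_zero
  refine ⟨hdet, ?_⟩
  intro s hs a a' h
  set M := Matrix.of fun i j : Fin k => (g i).eval (α (s j)) with hM
  have hU : IsUnit M := (Matrix.isUnit_iff_isUnit_det _).mpr (isUnit_iff_ne_zero.mpr (hdet s hs))
  refine Matrix.vecMul_injective_iff_isUnit.mpr hU ?_
  funext j
  have hj := h j
  simp only [Polynomial.eval_finset_sum, Polynomial.eval_smul, smul_eq_mul] at hj
  simpa [Matrix.vecMul, dotProduct, hM] using hj


/-- Given `N > k₁ > k₂ ≥ 1` and, for `j = 1, 2`, a family of `kⱼ`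
linearly independent polynomials of degree at most `n` over a field `F` with
`|F| > (C(N-1,k₁-1) + C(N-1,k₂-1))·n`, there exist `N` points `α 1, ..., α N ∈ F`
such that for each `j` and every choice of `kⱼ` of the points, the corresponding
evaluation matrix is invertible; consequently any linear combination
`f_j = Σ aᵢ gᵢⱼ` is uniquely determined by its values at any `kⱼ` of the points. -/
theorem stmt_1 (F : Type*) [Field F] (n N k₁ k₂ : ℕ)
    (hk : 1 ≤ k₂) (hk12 : k₂ < k₁) (hkN : k₁ < N)
    (g₁ : Fin k₁ → Polynomial F) (g₂ : Fin k₂ → Polynomial F)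
    (hdeg₁ : ∀ i, (g₁ i).natDegree ≤ n) (hdeg₂ : ∀ i, (g₂ i).natDegree ≤ n)
    (hli₁ : LinearIndependent F g₁) (hli₂ : LinearIndependent F g₂)
    (hF : ((((N - 1).choose (k₁ - 1) + (N - 1).choose (k₂ - 1)) * n : ℕ) : Cardinal)
            < Cardinal.mk F) :
    ∃ α : Fin N → F,
      (∀ s : Fin k₁ → Fin N, Function.Injective s →
          (Matrix.of fun i j : Fin k₁ => (g₁ i).eval (α (s j))).det ≠ 0) ∧
      (∀ s : Fin k₂ → Fin N, Function.Injective s →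
          (Matrix.of fun i j : Fin k₂ => (g₂ i).eval (α (s j))).det ≠ 0) ∧
      (∀ s : Fin k₁ → Fin N, Function.Injective s → ∀ a a' : Fin k₁ → F,
          (∀ j, (∑ i, a i • g₁ i).eval (α (s j)) = (∑ i, a' i • g₁ i).eval (α (s j))) →
          a = a') ∧
      (∀ s : Fin k₂ → Fin N, Function.Injective s → ∀ a a' : Fin k₂ → F,
          (∀ j, (∑ i, a i • g₂ i).eval (α (s j)) = (∑ i, a' i • g₂ i).eval (α (s j))) →
          a = a') := by
  classical
  have hk₁ : 1 ≤ k₁ := by omega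
  have key : ∀ m : ℕ, m ≤ N → ∃ α : Fin m → F, EvalInv g₁ α ∧ EvalInv g₂ α := by
    intro m
    induction m with
    | zero =>
      intro _
      refine ⟨Fin.elim0, ?_, ?_⟩ <;>
      · intro r hr s hs
        cases r with
        | zero => exact linearIndependent_empty_type
        | succ r' => exact (s 0).elim0
    | succ m ih =>
      intro hm
      obtain ⟨α, h1, h2⟩ := ih (by omega)
      obtain ⟨Q₁, hQ₁0, hQ₁d, hQ₁⟩ := eval_inv_step hk₁ g₁ hdeg₁ hli₁ α h1
      obtain ⟨Q₂, hQ₂0, hQ₂d, hQ₂⟩ := eval_inv_step hk g₂ hdeg₂ hli₂ α h2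
      have hchoose : ∀ k : ℕ, 1 ≤ k → k ≤ N →
          m.choose (min m (k - 1)) ≤ (N - 1).choose (k - 1) := by
        intro k hk1 hkN'
        rcases le_or_gt m (k - 1) with h | h
        · rw [min_eq_left h, Nat.choose_self]
          exact Nat.one_le_iff_ne_zero.mpr (Nat.choose_pos (by omega)).ne'
        · rw [min_eq_right h.le]
          exact Nat.choose_le_choose _ (by omega)
      have hdQ : (((Q₁ * Q₂).natDegree : ℕ) : Cardinal) < Cardinal.mk F := by
        refine lt_of_le_of_lt ?_ hF
        rw [Nat.cast_le]
        calc (Q₁ * Q₂).natDegree ≤ Q₁.natDegree + Q₂.natDegree := Polynomial.natDegree_mul_le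
          _ ≤ (N - 1).choose (k₁ - 1) * n + (N - 1).choose (k₂ - 1) * n :=
              Nat.add_le_add
                (hQ₁d.trans (Nat.mul_le_mul_right n (hchoose k₁ hk₁ (by omega))))
                (hQ₂d.trans (Nat.mul_le_mul_right n (hchoose k₂ hk (by omega))))
          _ = ((N - 1).choose (k₁ - 1) + (N - 1).choose (k₂ - 1)) * n := (add_mul _ _ _).symm
      obtain ⟨β, hβ⟩ :=
        Polynomial.exists_eval_ne_zero_of_natDegree_lt_card _ (mul_ne_zero hQ₁0 hQ₂0) hdQ
      rw [Polynomial.eval_mul, mul_ne_zero_iff] at hβ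
      exact ⟨Fin.snoc α β, hQ₁ β hβ.1, hQ₂ β hβ.2⟩
  obtain ⟨α, h1, h2⟩ := key N le_rfl
  obtain ⟨hd1, hu1⟩ := inv_conseq g₁ h1
  obtain ⟨hd2, hu2⟩ := inv_conseq g₂ h2
  exact ⟨α, hd1, hd2, hu1, hu2⟩
end

section
/- Let F be a field, n ≥ 1, and let β_1, ..., β_n be n distinct elements of F satisfying β_i β_j ≠ 1 for all 1 ≤ i, j ≤ n. Define g_1(x) = x^{n−1} and g_i(x) = x^{n−i} + x^{n−2+i} for i ∈ {2, ..., n}. Then the determinant of the n×n matrix whose (i,j)-entry is g_i(β_j) equals ∏_{1 ≤ i < j ≤ n} (β_j − β_i)(β_i β_j − 1). -/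
open Polynomial Matrix Finset

private lemma dickson_aux (K : Type*) [Field K] : ∀ m : ℕ,
    (Polynomial.dickson 1 (1 : K) (m + 1)).Monic ∧
      (Polynomial.dickson 1 (1 : K) (m + 1)).natDegree = m + 1
  | 0 => ⟨by simpa using monic_X, by simp⟩
  | 1 => by
    have h2 : Polynomial.dickson 1 (1 : K) 2 = X ^ 2 - C 2 := by
      rw [Polynomial.dickson_two, map_ofNat (Polynomial.C : K →+* K[X]) 2, Polynomial.C_1]
      push_cast
      ring
    constructor
    · rw [h2]; exact monic_X_pow_sub_C _ (by norm_num)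
    · rw [h2, natDegree_X_pow_sub_C]
  | m + 2 => by
    obtain ⟨h1m, h1d⟩ := dickson_aux K m
    obtain ⟨h2m, h2d⟩ := dickson_aux K (m + 1)
    have hrec : Polynomial.dickson 1 (1 : K) (m + 3)
        = X * Polynomial.dickson 1 (1 : K) (m + 2) - Polynomial.dickson 1 (1 : K) (m + 1) := by
      have := Polynomial.dickson_add_two 1 (1 : K) (m + 1)
      simpa using this
    have hm : (X * Polynomial.dickson 1 (1 : K) (m + 2)).Monic := monic_X.mul h2m
    have hdeg : (X * Polynomial.dickson 1 (1 : K) (m + 2)).natDegree = m + 3 := by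
      rw [monic_X.natDegree_mul h2m, natDegree_X, h2d]
      omega
    have hlt : (Polynomial.dickson 1 (1 : K) (m + 1)).natDegree
        < (X * Polynomial.dickson 1 (1 : K) (m + 2)).natDegree := by
      rw [hdeg, h1d]; omega
    constructor
    · rw [hrec]
      exact hm.sub_of_left (Polynomial.degree_lt_degree hlt)
    · rw [hrec, natDegree_sub_eq_left_of_natDegree_lt hlt, hdeg]

private lemma key_det (K : Type*) [Field K] (n : ℕ) (z : Fin n → K) (hz : ∀ j, z j ≠ 0) :
    (Matrix.of fun i j : Fin n =>
        if (i : ℕ) = 0 then z j ^ (n - 1)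
        else z j ^ (n - 1 - (i : ℕ)) + z j ^ (n - 1 + (i : ℕ))).det
      = ∏ q ∈ Finset.univ.filter (fun q : Fin n × Fin n => q.1 < q.2),
          ((z q.2 - z q.1) * (z q.1 * z q.2 - 1)) := by
  classical
  set p : Fin n → K[X] := fun i => if (i : ℕ) = 0 then 1 else Polynomial.dickson 1 1 (i : ℕ)
    with hp
  set t : Fin n → K := fun j => z j + (z j)⁻¹ with ht
  have hdegp : ∀ i : Fin n, (p i).natDegree = (i : ℕ) := by
    intro i
    by_cases h0 : (i : ℕ) = 0
    · simp [hp, h0]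
    · obtain ⟨m, hm⟩ := Nat.exists_eq_succ_of_ne_zero h0
      simp only [hp, if_neg h0, hm]
      exact (dickson_aux K m).2
  have hmonp : ∀ i : Fin n, (p i).Monic := by
    intro i
    by_cases h0 : (i : ℕ) = 0
    · simp [hp, h0, monic_one]
    · obtain ⟨m, hm⟩ := Nat.exists_eq_succ_of_ne_zero h0
      simp only [hp, if_neg h0, hm]
      exact (dickson_aux K m).1
  have hentry : ∀ i j : Fin n,
      (if (i : ℕ) = 0 then z j ^ (n - 1)
        else z j ^ (n - 1 - (i : ℕ)) + z j ^ (n - 1 + (i : ℕ)))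
      = z j ^ (n - 1) * (p i).eval (t j) := by
    intro i j
    by_cases h0 : (i : ℕ) = 0
    · simp [hp, h0]
    · have hin : (i : ℕ) ≤ n - 1 := by omega
      have heval : (p i).eval (t j) = z j ^ (i : ℕ) + ((z j)⁻¹) ^ (i : ℕ) := by
        simp only [hp, if_neg h0, ht]
        exact Polynomial.dickson_one_one_eval_add_inv (z j) (z j)⁻¹
          (mul_inv_cancel₀ (hz j)) _
      rw [if_neg h0, heval, mul_add]
      have e1 : z j ^ (n - 1) * ((z j)⁻¹) ^ (i : ℕ) = z j ^ (n - 1 - (i : ℕ)) := by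
        have hsum : n - 1 = (n - 1 - (i : ℕ)) + (i : ℕ) := by omega
        rw [hsum, pow_add, mul_assoc, inv_pow, mul_inv_cancel₀ (pow_ne_zero _ (hz j)),
          mul_one]
        congr 1
        omega
      have e2 : z j ^ (n - 1) * z j ^ (i : ℕ) = z j ^ (n - 1 + (i : ℕ)) := by
        rw [← pow_add]
      rw [e1, e2, add_comm]
  have hM : (Matrix.of fun i j : Fin n =>
        if (i : ℕ) = 0 then z j ^ (n - 1)
        else z j ^ (n - 1 - (i : ℕ)) + z j ^ (n - 1 + (i : ℕ)))
      = Matrix.of fun i j : Fin n =>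
          (z j ^ (n - 1)) * ((Matrix.of fun i j : Fin n => (p i).eval (t j)) i j) := by
    ext i j
    exact hentry i j
  rw [hM, Matrix.det_mul_row]
  have hdet2 : (Matrix.of fun i j : Fin n => (p i).eval (t j)).det
      = (Matrix.vandermonde t).det := by
    rw [← Matrix.det_transpose]
    have e : (Matrix.of fun i j : Fin n => (p i).eval (t j))ᵀ
        = Matrix.of fun i j : Fin n => (p j).eval (t i) := by
      ext i j; rfl
    rw [e, ← Matrix.det_eval_matrixOfPolynomials_eq_det_vandermonde t p hdegp hmonp]
  rw [hdet2, Matrix.det_vandermonde]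
  -- rewrite RHS as a nested product
  have hR : (∏ q ∈ Finset.univ.filter (fun q : Fin n × Fin n => q.1 < q.2),
          ((z q.2 - z q.1) * (z q.1 * z q.2 - 1)))
      = ∏ i : Fin n, ∏ j ∈ Ioi i, ((z j - z i) * (z i * z j - 1)) := by
    rw [Finset.prod_filter, ← Finset.univ_product_univ]
    refine (Finset.prod_product' (s := (Finset.univ : Finset (Fin n)))
      (t := (Finset.univ : Finset (Fin n)))
      (f := fun i j => if i < j then (z j - z i) * (z i * z j - 1) else 1)).trans ?_
    refine Finset.prod_congr rfl fun i _ => ?_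
    rw [← Finset.prod_filter]
    congr 1
    exact Finset.filter_lt_eq_Ioi
  rw [hR]
  have hL : (∏ j, z j ^ (n - 1)) = ∏ i : Fin n, ∏ j ∈ Ioi i, (z i * z j) := by
    have h2 : (∏ i : Fin n, ∏ j ∈ Ioi i, z j) = ∏ j : Fin n, ∏ i ∈ Iio j, z j := by
      refine Finset.prod_comm' ?_
      intro x y
      simp [Finset.mem_Ioi, Finset.mem_Iio, and_comm]
    calc (∏ j, z j ^ (n - 1))
        = ∏ j : Fin n, (z j ^ (n - 1 - (j : ℕ)) * z j ^ (j : ℕ)) := by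
          refine Finset.prod_congr rfl fun j _ => ?_
          rw [← pow_add]
          congr 1
          omega
      _ = (∏ j : Fin n, z j ^ (n - 1 - (j : ℕ))) * ∏ j : Fin n, z j ^ (j : ℕ) := by
          rw [Finset.prod_mul_distrib]
      _ = (∏ i : Fin n, ∏ j ∈ Ioi i, z i) * ∏ i : Fin n, ∏ j ∈ Ioi i, z j := by
          congr 1
          · refine Finset.prod_congr rfl fun i _ => ?_
            rw [Finset.prod_const, Fin.card_Ioi]
          · rw [h2]
            refine Finset.prod_congr rfl fun j _ => ?_
            rw [Finset.prod_const, Fin.card_Iio]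
      _ = ∏ i : Fin n, ∏ j ∈ Ioi i, (z i * z j) := by
          rw [← Finset.prod_mul_distrib]
          refine Finset.prod_congr rfl fun i _ => ?_
          rw [← Finset.prod_mul_distrib]
  rw [hL, ← Finset.prod_mul_distrib]
  refine Finset.prod_congr rfl fun i _ => ?_
  rw [← Finset.prod_mul_distrib]
  refine Finset.prod_congr rfl fun j _ => ?_
  have hi := hz i
  have hj := hz j
  simp only [ht]
  field_simp
  ring

set_option maxHeartbeats 1000000 in
set_option synthInstance.maxHeartbeats 400000 in
/-- Let `β 1, ..., β n` be distinct elements of a field `F` with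
`β i * β j ≠ 1` for all `i, j`. With `g₁(x) = x^(n-1)` and
`gᵢ(x) = x^(n-i) + x^(n-2+i)` for `i ∈ {2,...,n}` (written here 0-indexed:
row `i` has entry `β j ^ (n-1)` if `i = 0` and `β j ^ (n-1-i) + β j ^ (n-1+i)`
otherwise), the determinant of the matrix `(gᵢ(β j))` equals
`∏_{i < j} (β j - β i)(β i β j - 1)`. -/
theorem stmt_2 (F : Type*) [Field F] (n : ℕ) (hn : 1 ≤ n)
    (β : Fin n → F) (hinj : Function.Injective β)
    (hβ : ∀ i j, β i * β j ≠ 1) :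
    (Matrix.of fun i j : Fin n =>
        if (i : ℕ) = 0 then β j ^ (n - 1)
        else β j ^ (n - 1 - (i : ℕ)) + β j ^ (n - 1 + (i : ℕ))).det
      = ∏ q ∈ Finset.univ.filter (fun q : Fin n × Fin n => q.1 < q.2),
          ((β q.2 - β q.1) * (β q.1 * β q.2 - 1)) := by
  classical
  set A := MvPolynomial (Fin n) F with hA
  set K := FractionRing A with hK
  set φ : A →+* K := algebraMap A K with hφ
  have hφinj : Function.Injective φ := IsFractionRing.injective A K
  set z : Fin n → K := fun j => φ (MvPolynomial.X j) with hzdef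
  have hz : ∀ j, z j ≠ 0 := by
    intro j
    simp only [hzdef]
    rw [map_ne_zero_iff φ hφinj]
    exact MvPolynomial.X_ne_zero j
  set M : Matrix (Fin n) (Fin n) A := Matrix.of fun i j =>
    if (i : ℕ) = 0 then MvPolynomial.X j ^ (n - 1)
    else MvPolynomial.X j ^ (n - 1 - (i : ℕ)) + MvPolynomial.X j ^ (n - 1 + (i : ℕ)) with hMdef
  have hmap : φ.mapMatrix M = Matrix.of fun i j : Fin n =>
      if (i : ℕ) = 0 then z j ^ (n - 1)
      else z j ^ (n - 1 - (i : ℕ)) + z j ^ (n - 1 + (i : ℕ)) := by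
    ext i j
    simp only [RingHom.mapMatrix_apply, Matrix.map_apply, Matrix.of_apply, hMdef, hzdef]
    by_cases h0 : (i : ℕ) = 0
    · rw [if_pos h0, if_pos h0, φ.map_pow]
    · rw [if_neg h0, if_neg h0, φ.map_add, φ.map_pow, φ.map_pow]
  have h1 : φ M.det = φ (∏ q ∈ Finset.univ.filter (fun q : Fin n × Fin n => q.1 < q.2),
      ((MvPolynomial.X q.2 - MvPolynomial.X q.1)
        * (MvPolynomial.X q.1 * MvPolynomial.X q.2 - 1))) := by
    rw [RingHom.map_det, hmap, key_det K n z hz, map_prod φ]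
    refine Finset.prod_congr rfl fun q _ => ?_
    simp only [hzdef, φ.map_mul, φ.map_sub, φ.map_one]
  have h2 : M.det = ∏ q ∈ Finset.univ.filter (fun q : Fin n × Fin n => q.1 < q.2),
      ((MvPolynomial.X q.2 - MvPolynomial.X q.1)
        * (MvPolynomial.X q.1 * MvPolynomial.X q.2 - 1)) := hφinj h1
  have h3 := congrArg (MvPolynomial.eval β) h2
  rw [RingHom.map_det, map_prod (MvPolynomial.eval β)] at h3
  have hmap2 : (MvPolynomial.eval β).mapMatrix M = Matrix.of fun i j : Fin n =>
      if (i : ℕ) = 0 then β j ^ (n - 1)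
      else β j ^ (n - 1 - (i : ℕ)) + β j ^ (n - 1 + (i : ℕ)) := by
    ext i j
    simp only [RingHom.mapMatrix_apply, Matrix.map_apply, Matrix.of_apply, hMdef]
    by_cases h0 : (i : ℕ) = 0
    · rw [if_pos h0, if_pos h0, (MvPolynomial.eval β).map_pow, MvPolynomial.eval_X]
    · rw [if_neg h0, if_neg h0, (MvPolynomial.eval β).map_add, (MvPolynomial.eval β).map_pow, (MvPolynomial.eval β).map_pow, MvPolynomial.eval_X]
  rw [hmap2] at h3
  rw [h3]
  refine Finset.prod_congr rfl fun q _ => ?_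
  simp only [(MvPolynomial.eval β).map_mul, (MvPolynomial.eval β).map_sub,
    (MvPolynomial.eval β).map_one, MvPolynomial.eval_X]
end

section
/- Let F be a field, n ≥ 1, and let β_1, ..., β_n be n distinct elements of F satisfying β_i β_j ≠ 1 for all 1 ≤ i, j ≤ n. Define g_i(x) = x^{n+i} − x^{n−i} for i ∈ {1, ..., n}. Then the determinant of the n×n matrix whose (i,j)-entry is g_i(β_j) equals ∏_{i=1}^{n} (β_i^2 − 1) · ∏_{1 ≤ i < j ≤ n} (β_j − β_i)(β_i β_j − 1). -/
open Polynomial Finset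

noncomputable def chebS (K : Type*) [Field K] : ℕ → K[X]
  | 0 => 1
  | 1 => Polynomial.X
  | (i+2) => Polynomial.X * chebS K (i+1) - chebS K i

lemma chebS_natDegree_le (K : Type*) [Field K] : ∀ i, (chebS K i).natDegree ≤ i := by
  intro i
  induction i using Nat.twoStepInduction with
  | zero => simp [chebS]
  | one => simpa [chebS] using Polynomial.natDegree_X_le
  | more i ih0 ih1 =>
    rw [chebS]
    refine (Polynomial.natDegree_sub_le _ _).trans ?_
    refine max_le ((Polynomial.natDegree_mul_le).trans ?_) (ih0.trans (by omega))
    have := Polynomial.natDegree_X_le (R := K)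
    omega

lemma chebS_coeff_top (K : Type*) [Field K] : ∀ i, (chebS K i).coeff i = 1 := by
  intro i
  induction i using Nat.twoStepInduction with
  | zero => simp [chebS]
  | one => simp [chebS]
  | more i ih0 ih1 =>
    rw [chebS, Polynomial.coeff_sub, Polynomial.coeff_X_mul, ih1,
      Polynomial.coeff_eq_zero_of_natDegree_lt (lt_of_le_of_lt (chebS_natDegree_le K i) (by omega)),
      sub_zero]

lemma chebS_eval {K : Type*} [Field K] {x : K} (hx : x ≠ 0) :
    ∀ i, (chebS K i).eval (x + x⁻¹) * x ^ i = ∑ k ∈ Finset.range (i+1), (x^2) ^ k := by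
  have hinv : x⁻¹ * x = 1 := inv_mul_cancel₀ hx
  intro i
  induction i using Nat.twoStepInduction with
  | zero => simp [chebS]
  | one =>
    simp only [chebS, Polynomial.eval_X]
    rw [Finset.sum_range_succ, Finset.sum_range_one]
    ring_nf
    linear_combination hinv
  | more i ih0 ih1 =>
    rw [chebS]
    simp only [Polynomial.eval_sub, Polynomial.eval_mul, Polynomial.eval_X]
    have hA2 := Finset.sum_range_succ (fun k => (x^2)^k) (i+1+1)
    have hA1 := Finset.sum_range_succ (fun k => (x^2)^k) (i+1)
    linear_combination (x^2+1) * ih1 - x^2 * ih0 - hA2 + x^2 * hA1 +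
      ((chebS K (i+1)).eval (x + x⁻¹) * x ^ (i+1)) * hinv

lemma prod_pairs {M : Type*} [CommMonoid M] {n : ℕ} (f : Fin n → Fin n → M) :
    ∏ q ∈ Finset.univ.filter (fun q : Fin n × Fin n => q.1 < q.2), f q.1 q.2
      = ∏ i : Fin n, ∏ j ∈ Finset.Ioi i, f i j := by
  rw [Finset.prod_sigma']
  refine Finset.prod_nbij' (fun q => (⟨q.1, q.2⟩ : (_ : Fin n) × Fin n)) (fun q => (q.1, q.2))
    ?_ ?_ ?_ ?_ ?_
  · intro q hq
    simp only [Finset.mem_filter] at hq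
    simp [Finset.mem_sigma, Finset.mem_Ioi, hq.2]
  · intro q hq
    simp only [Finset.mem_sigma, Finset.mem_Ioi] at hq
    simp [hq.2]
  · intro q _; rfl
  · intro q _; rfl
  · intro q _; rfl

lemma key {K : Type*} [Field K] (n : ℕ) (x : Fin n → K) (hx : ∀ j, x j ≠ 0) :
    (Matrix.of fun i j : Fin n =>
        x j ^ (n + 1 + (i : ℕ)) - x j ^ (n - 1 - (i : ℕ))).det
      = (∏ i, (x i ^ 2 - 1)) *
        ∏ i : Fin n, ∏ j ∈ Finset.Ioi i, ((x j - x i) * (x i * x j - 1)) := by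
  have step1 : (Matrix.of fun i j : Fin n =>
      x j ^ (n + 1 + (i : ℕ)) - x j ^ (n - 1 - (i : ℕ)))
      = Matrix.of fun i j : Fin n => (x j ^ 2 - 1) *
          (Matrix.of fun i j : Fin n =>
            x j ^ (n - 1 - (i : ℕ)) * ∑ k ∈ Finset.range ((i:ℕ)+1), (x j ^ 2) ^ k) i j := by
    ext i j
    simp only [Matrix.of_apply]
    have h1 := mul_geom_sum (x j ^ 2) ((i:ℕ)+1)
    have h2 : n + 1 + (i:ℕ) = (n - 1 - (i:ℕ)) + 2*((i:ℕ)+1) := by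
      have := i.isLt; omega
    rw [h2, pow_add, pow_mul]
    linear_combination (-(x j ^ (n - 1 - (i:ℕ)))) * h1
  have step2 : (Matrix.of fun i j : Fin n =>
        x j ^ (n - 1 - (i : ℕ)) * ∑ k ∈ Finset.range ((i:ℕ)+1), (x j ^ 2) ^ k)
      = (Matrix.of fun i k : Fin n => (chebS K (i : ℕ)).coeff (k : ℕ)) *
        (Matrix.of fun k j : Fin n => x j ^ (n - 1) * (x j + (x j)⁻¹) ^ (k : ℕ)) := by
    ext i j
    rw [Matrix.mul_apply]
    simp only [Matrix.of_apply]
    have hdeg : (chebS K (i:ℕ)).natDegree < n := lt_of_le_of_lt (chebS_natDegree_le K _) i.isLt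
    have heval := Polynomial.eval_eq_sum_range' hdeg (x j + (x j)⁻¹)
    have hkey := chebS_eval (hx j) (i : ℕ)
    have hsplit : (n - 1 - (i:ℕ)) + (i:ℕ) = n - 1 := by have := i.isLt; omega
    symm
    calc ∑ k : Fin n, (chebS K (i:ℕ)).coeff (k:ℕ) * (x j ^ (n-1) * (x j + (x j)⁻¹) ^ (k:ℕ))
        = x j ^ (n-1) * ∑ k : Fin n, (chebS K (i:ℕ)).coeff (k:ℕ) * (x j + (x j)⁻¹) ^ (k:ℕ) := by
          rw [Finset.mul_sum]; exact Finset.sum_congr rfl fun k _ => by ring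
      _ = x j ^ (n-1) * (chebS K (i:ℕ)).eval (x j + (x j)⁻¹) := by
          rw [heval, Fin.sum_univ_eq_sum_range
            (fun k => (chebS K (i:ℕ)).coeff k * (x j + (x j)⁻¹) ^ k)]
      _ = x j ^ (n - 1 - (i:ℕ)) * ((chebS K (i:ℕ)).eval (x j + (x j)⁻¹) * x j ^ (i:ℕ)) := by
          have hp : x j ^ (n-1) = x j ^ (n - 1 - (i:ℕ)) * x j ^ (i:ℕ) := by
            rw [← pow_add, hsplit]
          rw [hp]; ring
      _ = x j ^ (n - 1 - (i:ℕ)) * ∑ k ∈ Finset.range ((i:ℕ)+1), (x j ^ 2) ^ k := by rw [hkey]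
  have detC : (Matrix.of fun i k : Fin n => (chebS K (i : ℕ)).coeff (k : ℕ)).det = 1 := by
    rw [Matrix.det_of_lowerTriangular _ ?_]
    · rw [Finset.prod_congr rfl fun i _ => ?_, Finset.prod_const_one]
      exact chebS_coeff_top K (i : ℕ)
    · intro i j hij
      simp only [Matrix.of_apply]
      exact Polynomial.coeff_eq_zero_of_natDegree_lt
        (lt_of_le_of_lt (chebS_natDegree_le K _) hij)
  have detB : (Matrix.of fun k j : Fin n => x j ^ (n - 1) * (x j + (x j)⁻¹) ^ (k : ℕ)).det
      = (∏ j, x j ^ (n-1)) *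
        ∏ i : Fin n, ∏ j ∈ Finset.Ioi i, ((x j + (x j)⁻¹) - (x i + (x i)⁻¹)) := by
    have hB : (Matrix.of fun k j : Fin n => x j ^ (n - 1) * (x j + (x j)⁻¹) ^ (k : ℕ))
        = Matrix.of fun k j : Fin n => (x j ^ (n-1)) *
            ((Matrix.vandermonde (fun j => x j + (x j)⁻¹)).transpose k j) := by
      ext k j; simp [Matrix.vandermonde]
    rw [hB, Matrix.det_mul_row, Matrix.det_transpose, Matrix.det_vandermonde]
  have hxx : ∏ i : Fin n, ∏ j ∈ Finset.Ioi i, (x i * x j) = ∏ j, x j ^ (n-1) := by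
    have h1 : ∀ i : Fin n, ∏ j ∈ Finset.Ioi i, (x i * x j)
        = x i ^ (n - 1 - (i:ℕ)) * ∏ j ∈ Finset.Ioi i, x j := by
      intro i
      rw [Finset.prod_mul_distrib, Finset.prod_const, Fin.card_Ioi]
    rw [Finset.prod_congr rfl fun i _ => h1 i, Finset.prod_mul_distrib]
    have h2 : ∏ i : Fin n, ∏ j ∈ Finset.Ioi i, x j = ∏ j : Fin n, x j ^ (j : ℕ) := by
      rw [Finset.prod_comm' (t' := Finset.univ) (s' := fun j => Finset.Iio j) ?_]
      · exact Finset.prod_congr rfl fun j _ => by rw [Finset.prod_const, Fin.card_Iio]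
      · intro i j; simp [Finset.mem_Ioi, Finset.mem_Iio]
    rw [h2, ← Finset.prod_mul_distrib]
    refine Finset.prod_congr rfl fun i _ => ?_
    rw [← pow_add]
    congr 1
    have := i.isLt; omega
  rw [step1, Matrix.det_mul_row, step2, Matrix.det_mul, detC, detB, one_mul]
  congr 1
  calc (∏ j, x j ^ (n-1)) *
        ∏ i : Fin n, ∏ j ∈ Finset.Ioi i, ((x j + (x j)⁻¹) - (x i + (x i)⁻¹))
      = ∏ i : Fin n, ∏ j ∈ Finset.Ioi i,
          ((x i * x j) * ((x j + (x j)⁻¹) - (x i + (x i)⁻¹))) := by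
        rw [← hxx, ← Finset.prod_mul_distrib]
        exact Finset.prod_congr rfl fun i _ => (Finset.prod_mul_distrib).symm
    _ = ∏ i : Fin n, ∏ j ∈ Finset.Ioi i, ((x j - x i) * (x i * x j - 1)) := by
        refine Finset.prod_congr rfl fun i _ => Finset.prod_congr rfl fun j _ => ?_
        linear_combination (x i) * (mul_inv_cancel₀ (hx j)) - (x j) * (mul_inv_cancel₀ (hx i))

/-- Let `β 1, ..., β n` be distinct elements of a field `F` with
`β i * β j ≠ 1` for all `i, j`. With `gᵢ(x) = x^(n+i) - x^(n-i)` for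
`i ∈ {1,...,n}` (written 0-indexed: row `i` has entry
`β j ^ (n+1+i) - β j ^ (n-1-i)`), the determinant of the matrix `(gᵢ(β j))` equals
`∏ᵢ (β i ^ 2 - 1) · ∏_{i < j} (β j - β i)(β i β j - 1)`. -/
theorem stmt_3 (F : Type*) [Field F] (n : ℕ) (hn : 1 ≤ n)
    (β : Fin n → F) (hinj : Function.Injective β)
    (hβ : ∀ i j, β i * β j ≠ 1) :
    (Matrix.of fun i j : Fin n =>
        β j ^ (n + 1 + (i : ℕ)) - β j ^ (n - 1 - (i : ℕ))).det
      = (∏ i, (β i ^ 2 - 1)) *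
        ∏ q ∈ Finset.univ.filter (fun q : Fin n × Fin n => q.1 < q.2),
          ((β q.2 - β q.1) * (β q.1 * β q.2 - 1)) := by
  classical
  have hR : (Matrix.of fun i j : Fin n =>
        (MvPolynomial.X j : MvPolynomial (Fin n) ℤ) ^ (n + 1 + (i : ℕ))
          - (MvPolynomial.X j) ^ (n - 1 - (i : ℕ))).det
      = (∏ i, ((MvPolynomial.X i : MvPolynomial (Fin n) ℤ) ^ 2 - 1)) *
        ∏ i : Fin n, ∏ j ∈ Finset.Ioi i,
          ((MvPolynomial.X j - MvPolynomial.X i) *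
            (MvPolynomial.X i * MvPolynomial.X j - 1)) := by
    set R := MvPolynomial (Fin n) ℤ
    set K := FractionRing R
    have hi : Function.Injective (algebraMap R K) := IsFractionRing.injective R K
    apply hi
    have hx : ∀ j : Fin n, algebraMap R K (MvPolynomial.X j) ≠ 0 := fun j => by
      rw [map_ne_zero_iff _ hi]
      exact MvPolynomial.X_ne_zero j
    have hkey := key n (fun j => algebraMap R K (MvPolynomial.X j)) hx
    rw [RingHom.map_det]
    have hmap : (algebraMap R K).mapMatrix (Matrix.of fun i j : Fin n =>
          (MvPolynomial.X j : R) ^ (n + 1 + (i : ℕ))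
            - (MvPolynomial.X j) ^ (n - 1 - (i : ℕ)))
        = Matrix.of fun i j : Fin n =>
            (algebraMap R K (MvPolynomial.X j)) ^ (n + 1 + (i : ℕ))
              - (algebraMap R K (MvPolynomial.X j)) ^ (n - 1 - (i : ℕ)) := by
      ext i j
      simp [RingHom.mapMatrix_apply]
    rw [hmap, hkey]
    simp only [map_mul, map_prod, map_sub, map_pow, map_one]
  have hφ := congrArg (MvPolynomial.eval₂Hom (Int.castRingHom F) β) hR
  rw [RingHom.map_det] at hφ
  have hmap : (MvPolynomial.eval₂Hom (Int.castRingHom F) β).mapMatrix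
        (Matrix.of fun i j : Fin n =>
          (MvPolynomial.X j : MvPolynomial (Fin n) ℤ) ^ (n + 1 + (i : ℕ))
            - (MvPolynomial.X j) ^ (n - 1 - (i : ℕ)))
      = Matrix.of fun i j : Fin n =>
          β j ^ (n + 1 + (i : ℕ)) - β j ^ (n - 1 - (i : ℕ)) := by
    ext i j
    simp [RingHom.mapMatrix_apply]
  rw [hmap] at hφ
  simp only [map_mul, map_prod, map_sub, map_pow, map_one,
    MvPolynomial.eval₂Hom_X'] at hφ
  rw [hφ, prod_pairs (fun i j => (β j - β i) * (β i * β j - 1))]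
end

section
/- Let F be a field with |F| > 2N, let p ≥ 1, N ≥ p, and let α_1, ..., α_N be N distinct elements of F with α_i α_j ≠ 1 for all 1 ≤ i, j ≤ N. Let μ ≥ 1 and ν = p·ν_0, and for A ∈ F^{μ×ν} write A = (A_0 | A_1 | ... | A_{p−1}) with column blocks A_j ∈ F^{μ×ν_0}; set f_A(x) = Σ_{j=0}^{p−1} A_j x^j and g_A(x) = Σ_{i=0}^{p−1} A_iᵀ x^{p−1−i}. Then for every subset S ⊆ {1,...,N} with |S| = p and all A, A' ∈ F^{μ×ν}: if f_A(α_i)·g_A(α_i) = f_{A'}(α_i)·g_{A'}(α_i) for all i ∈ S, then A·Aᵀ = A'·A'ᵀ. Hence the folded polynomial code with partition parameter m = 1 achieves recovery threshold p. -/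
open Finset Matrix

/-- The `j`-th column block (of size `μ × ν₀`) of `A ∈ F^{μ × (p·ν₀)}`:
`A_j` occupies columns `j·ν₀, ..., (j+1)·ν₀ - 1`. -/
def colBlock (F : Type*) [Field F] (p ν₀ μ : ℕ)
    (A : Matrix (Fin μ) (Fin (p * ν₀)) F) (j : Fin p) :
    Matrix (Fin μ) (Fin ν₀) F :=
  Matrix.of fun u v => A u (finProdFinEquiv (j, v))

/-- Evaluation of `f_A(x) = Σ_j A_j x^j`. -/
def fA1eval (F : Type*) [Field F] (p ν₀ μ : ℕ)
    (A : Matrix (Fin μ) (Fin (p * ν₀)) F) (x : F) :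
    Matrix (Fin μ) (Fin ν₀) F :=
  ∑ j : Fin p, x ^ (j : ℕ) • colBlock F p ν₀ μ A j

/-- Evaluation of `g_A(x) = Σ_i A_iᵀ x^(p-1-i)`. -/
def gA1eval (F : Type*) [Field F] (p ν₀ μ : ℕ)
    (A : Matrix (Fin μ) (Fin (p * ν₀)) F) (x : F) :
    Matrix (Fin ν₀) (Fin μ) F :=
  ∑ i : Fin p, x ^ (p - 1 - (i : ℕ)) • (colBlock F p ν₀ μ A i)ᵀ

open Polynomial
-- entrywise product identity
lemma fg_entry (F : Type*) [Field F] (p ν₀ μ : ℕ)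
    (A : Matrix (Fin μ) (Fin (p * ν₀)) F) (x : F) (u v : Fin μ) :
    (fA1eval F p ν₀ μ A x * gA1eval F p ν₀ μ A x) u v
      = ∑ j : Fin p, ∑ i : Fin p,
          x ^ ((j : ℕ) + (p - 1 - (i : ℕ))) *
            (colBlock F p ν₀ μ A j * (colBlock F p ν₀ μ A i)ᵀ) u v := by
  simp only [fA1eval, gA1eval, Matrix.sum_mul, Matrix.mul_sum,
    Matrix.smul_mul, Matrix.mul_smul, Matrix.sum_apply, Matrix.smul_apply,
    smul_smul, smul_eq_mul, pow_add]
  simp only [Finset.mul_sum]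
  rw [Finset.sum_comm]
  exact Finset.sum_congr rfl fun j _ => Finset.sum_congr rfl fun i _ => by ring

-- A * Aᵀ as a sum of block products
lemma AAT_entry (F : Type*) [Field F] (p ν₀ μ : ℕ)
    (A : Matrix (Fin μ) (Fin (p * ν₀)) F) (u v : Fin μ) :
    (A * Aᵀ) u v
      = ∑ j : Fin p, (colBlock F p ν₀ μ A j * (colBlock F p ν₀ μ A j)ᵀ) u v := by
  simp only [Matrix.mul_apply, Matrix.transpose_apply, colBlock, Matrix.of_apply]
  rw [← Equiv.sum_comp finProdFinEquiv (fun w => A u w * A v w), Fintype.sum_prod_type]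

-- symmetry of block products
lemma block_symm (F : Type*) [Field F] (p ν₀ μ : ℕ)
    (A : Matrix (Fin μ) (Fin (p * ν₀)) F) (j i : Fin p) (u v : Fin μ) :
    (colBlock F p ν₀ μ A j * (colBlock F p ν₀ μ A i)ᵀ) u v
      = (colBlock F p ν₀ μ A i * (colBlock F p ν₀ μ A j)ᵀ) v u := by
  simp only [Matrix.mul_apply, Matrix.transpose_apply]
  exact Finset.sum_congr rfl fun t _ => mul_comm _ _

/-- (Corollary: folded polynomial codes for `m = 1` achieve
recovery threshold `p`.)  Over a field `F` with `|F| > 2N` and `N` distinct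
points `α i` with `α i · α j ≠ 1`, for every `p`-subset `S` of the points the
outputs `f_A(α i)·g_A(α i)`, `i ∈ S`, determine `A·Aᵀ` uniquely. -/
theorem stmt_5 (F : Type*) [Field F] (N p μ ν₀ : ℕ)
    (hp : 1 ≤ p) (hN : p ≤ N) (hμ : 1 ≤ μ) (hν : 1 ≤ ν₀)
    (hF : ((2 * N : ℕ) : Cardinal) < Cardinal.mk F)
    (α : Fin N → F) (hinj : Function.Injective α)
    (hα : ∀ i j, α i * α j ≠ 1) :
    ∀ S : Finset (Fin N), S.card = p →
      ∀ A A' : Matrix (Fin μ) (Fin (p * ν₀)) F,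
        (∀ i ∈ S,
          fA1eval F p ν₀ μ A (α i) * gA1eval F p ν₀ μ A (α i)
            = fA1eval F p ν₀ μ A' (α i) * gA1eval F p ν₀ μ A' (α i)) →
        A * Aᵀ = A' * A'ᵀ := by
  intro S hS A A' hyp
  classical
  set D : Fin p → Fin p → Fin μ → Fin μ → F := fun j i a b =>
    (colBlock F p ν₀ μ A j * (colBlock F p ν₀ μ A i)ᵀ) a b
      - (colBlock F p ν₀ μ A' j * (colBlock F p ν₀ μ A' i)ᵀ) a b with hD
  set P : Fin μ → Fin μ → F[X] := fun a b =>
    ∑ j : Fin p, ∑ i : Fin p, C (D j i a b) * X ^ ((j : ℕ) + (p - 1 - (i : ℕ))) with hP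
  have hevalP : ∀ a b x, (P a b).eval x
      = (fA1eval F p ν₀ μ A x * gA1eval F p ν₀ μ A x) a b
        - (fA1eval F p ν₀ μ A' x * gA1eval F p ν₀ μ A' x) a b := by
    intro a b x
    rw [fg_entry, fg_entry, ← Finset.sum_sub_distrib]
    simp only [hP, eval_finset_sum, eval_mul, eval_C, eval_pow, eval_X, hD]
    refine Finset.sum_congr rfl fun j _ => ?_
    rw [← Finset.sum_sub_distrib]
    exact Finset.sum_congr rfl fun i _ => by ring
  have hroot : ∀ a b, ∀ i ∈ S, (P a b).eval (α i) = 0 := by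
    intro a b i hi
    rw [hevalP]
    rw [hyp i hi, sub_self]
  have hsymm : ∀ a b (x : F), x ≠ 0 →
      (P a b).eval x⁻¹ * x ^ (2 * (p - 1)) = (P b a).eval x := by
    intro a b x hx
    simp only [hP, eval_finset_sum, eval_mul, eval_C, eval_pow, eval_X]
    rw [Finset.sum_mul, Finset.sum_comm]
    refine Finset.sum_congr rfl fun j _ => ?_
    rw [Finset.sum_mul]
    refine Finset.sum_congr rfl fun i _ => ?_
    have hji : (D j i a b) = D i j b a := by
      simp only [hD]
      rw [block_symm, block_symm F p ν₀ μ A']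
    have he : ((j : ℕ) + (p - 1 - (i : ℕ))) + ((i : ℕ) + (p - 1 - (j : ℕ)))
        = 2 * (p - 1) := by
      have := j.isLt; have := i.isLt; omega
    have key : x⁻¹ ^ ((j : ℕ) + (p - 1 - (i : ℕ))) * x ^ (2 * (p - 1))
        = x ^ ((i : ℕ) + (p - 1 - (j : ℕ))) := by
      have h1 : x ^ (2 * (p - 1)) = x ^ ((j : ℕ) + (p - 1 - (i : ℕ))) * x ^ ((i : ℕ) + (p - 1 - (j : ℕ))) := by
        rw [← pow_add, he]
      rw [h1, inv_pow, ← mul_assoc, inv_mul_cancel₀ (pow_ne_zero _ hx), one_mul]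
    rw [hji, mul_assoc, key]
  have hdeg : ∀ a b, (P a b).natDegree ≤ 2 * (p - 1) := by
    intro a b
    refine natDegree_sum_le_of_forall_le _ _ fun j _ =>
      natDegree_sum_le_of_forall_le _ _ fun i _ =>
        (natDegree_C_mul_X_pow_le _ _).trans ?_
    have := j.isLt; have := i.isLt; omega
  set T : Finset F := S.image α ∪ ((S.image α).erase 0).image (·⁻¹) with hT
  have hdisj : Disjoint (S.image α) (((S.image α).erase 0).image (·⁻¹)) := by
    rw [Finset.disjoint_left]
    rintro x hx hx'
    obtain ⟨i, hi, rfl⟩ := Finset.mem_image.mp hx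
    obtain ⟨y, hy, hyx⟩ := Finset.mem_image.mp hx'
    obtain ⟨hy0, hy1⟩ := Finset.mem_erase.mp hy
    obtain ⟨j, hj, rfl⟩ := Finset.mem_image.mp hy1
    exact hα i j (by rw [← hyx]; field_simp)
  have hTcard : 2 * (p - 1) < T.card := by
    rw [hT, Finset.card_union_of_disjoint hdisj,
      Finset.card_image_of_injective _ inv_injective,
      Finset.card_image_of_injective _ hinj, hS]
    have h1 : (S.image α).card - 1 ≤ ((S.image α).erase 0).card :=
      Finset.pred_card_le_card_erase
    rw [Finset.card_image_of_injective _ hinj, hS] at h1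
    omega
  have hvanish : ∀ a b, ∀ x ∈ T, (P a b).eval x = 0 := by
    intro a b x hx
    rcases Finset.mem_union.mp hx with hx | hx
    · obtain ⟨i, hi, rfl⟩ := Finset.mem_image.mp hx
      exact hroot a b i hi
    · obtain ⟨y, hy, rfl⟩ := Finset.mem_image.mp hx
      obtain ⟨hy0, hy1⟩ := Finset.mem_erase.mp hy
      obtain ⟨i, hi, rfl⟩ := Finset.mem_image.mp hy1
      have h0 := hsymm a b (α i) hy0
      rw [hroot b a i hi] at h0
      rcases mul_eq_zero.mp h0 with h | h
      · exact h
      · exact absurd h (pow_ne_zero _ hy0)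
  have hPzero : ∀ a b, P a b = 0 := fun a b =>
    eq_zero_of_natDegree_lt_card_of_eval_eq_zero' _ T (hvanish a b)
      (lt_of_le_of_lt (hdeg a b) hTcard)
  ext u v
  have hc := congrArg (fun q : F[X] => q.coeff (p - 1)) (hPzero u v)
  simp only [hP, finset_sum_coeff, coeff_C_mul, coeff_X_pow, coeff_zero,
    mul_ite, mul_one, mul_zero] at hc
  have hc2 : ∑ j : Fin p, D j j u v = 0 := by
    rw [← hc]
    refine Finset.sum_congr rfl fun j _ => ?_
    rw [Finset.sum_eq_single_of_mem j (Finset.mem_univ j)]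
    · rw [if_pos (by have := j.isLt; omega)]
    · intro i _ hne
      rw [if_neg]
      have : (i : ℕ) ≠ (j : ℕ) := fun h => hne (Fin.ext h)
      have := j.isLt; have := i.isLt; omega
  have : (A * Aᵀ) u v - (A' * A'ᵀ) u v = 0 := by
    rw [AAT_entry F p ν₀ μ A u v, AAT_entry F p ν₀ μ A' u v, ← Finset.sum_sub_distrib]
    exact hc2
  exact sub_eq_zero.mp this
end

section
/- Let m, p, μ_0, ν_0 be positive integers, μ = m·μ_0, ν = p·ν_0. Let K be a finite index set and for each i ∈ K let a_i = (a_{i,s,k}) and b_i = (b_{i,s,k}) be real arrays indexed by (s,k) ∈ {0,...,m−1}×{0,...,p−1}. For A ∈ ℝ^{μ×ν} define f_i(A) = Σ_{s,k} a_{i,s,k} A_{s,k} ∈ ℝ^{μ_0×ν_0} and g_i(A) = Σ_{s,k} b_{i,s,k} A_{s,k}ᵀ ∈ ℝ^{ν_0×μ_0}, where A_{s,k} is the (s,k) block of A. Suppose there exists a function d : (ℝ^{μ_0×μ_0})^K → ℝ^{μ×μ} such that d((f_i(A)·g_i(A))_{i∈K}) = A·Aᵀ for every A ∈ ℝ^{μ×ν}.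 Then the vectors {a_i : i ∈ K}, viewed in ℝ^{mp}, span all of ℝ^{mp}; in particular |K| ≥ mp. Consequently, the optimal recovery threshold of any linear computation strategy for computing A·Aᵀ over ℝ with N workers and partition parameters m, p is at least min{N, mp}. -/
open Finset Matrix

/-- The `(s,k)` block (of size `μ₀ × ν₀`) of `A ∈ ℝ^{(m·μ₀) × (p·ν₀)}`. -/
def blockR (m p μ₀ ν₀ : ℕ) (A : Matrix (Fin (m * μ₀)) (Fin (p * ν₀)) ℝ)
    (s : Fin m) (k : Fin p) : Matrix (Fin μ₀) (Fin ν₀) ℝ :=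
  Matrix.of fun u v => A (finProdFinEquiv (s, u)) (finProdFinEquiv (k, v))

lemma aux_span (m p μ₀ ν₀ : ℕ) (hμ : 1 ≤ μ₀) (hν : 1 ≤ ν₀)
    (K : Type*) [Fintype K]
    (a b : K → Fin m → Fin p → ℝ)
    (hdec : ∃ d : (K → Matrix (Fin μ₀) (Fin μ₀) ℝ) → Matrix (Fin (m * μ₀)) (Fin (m * μ₀)) ℝ,
      ∀ A : Matrix (Fin (m * μ₀)) (Fin (p * ν₀)) ℝ,
        d (fun i =>
            (∑ s : Fin m, ∑ k : Fin p, a i s k • blockR m p μ₀ ν₀ A s k) *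
            (∑ s : Fin m, ∑ k : Fin p, b i s k • (blockR m p μ₀ ν₀ A s k)ᵀ))
          = A * Aᵀ) :
    Submodule.span ℝ
        (Set.range fun i : K => fun sk : Fin m × Fin p => a i sk.1 sk.2) = ⊤ := by
  obtain ⟨d, hd⟩ := hdec
  by_contra hspan
  obtain ⟨φ, hφ0, hφ⟩ := Submodule.exists_dual_map_eq_bot_of_lt_top
    (p := Submodule.span ℝ (Set.range fun i : K => fun sk : Fin m × Fin p => a i sk.1 sk.2))
    (lt_top_iff_ne_top.mpr hspan) inferInstance
  set c : Fin m × Fin p → ℝ := fun sk => φ (Pi.single sk 1) with hc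
  have hφx : ∀ x : (Fin m × Fin p → ℝ), φ x = ∑ sk : Fin m × Fin p, x sk * c sk := by
    intro x
    conv_lhs => rw [← Finset.univ_sum_single x]
    rw [map_sum]
    refine Finset.sum_congr rfl fun sk _ => ?_
    have h1 : (Pi.single sk (x sk) : Fin m × Fin p → ℝ) = x sk • (Pi.single sk (1 : ℝ) : Fin m × Fin p → ℝ) := by
      simp [← Pi.single_smul]
    rw [h1, _root_.map_smul, smul_eq_mul]
  have hker : ∀ i : K, φ (fun sk : Fin m × Fin p => a i sk.1 sk.2) = 0 := by
    intro i
    have hmem : (fun sk : Fin m × Fin p => a i sk.1 sk.2) ∈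
        Submodule.span ℝ (Set.range fun i : K => fun sk : Fin m × Fin p => a i sk.1 sk.2) :=
      Submodule.subset_span (Set.mem_range_self i)
    have := Submodule.mem_map_of_mem (f := φ) hmem
    rw [hφ] at this
    simpa using this
  obtain ⟨sk0, hsk0⟩ : ∃ sk, c sk ≠ 0 := by
    by_contra h
    push_neg at h
    refine hφ0 (LinearMap.ext fun x => ?_)
    rw [hφx]
    simp [h]
  set A : Matrix (Fin (m * μ₀)) (Fin (p * ν₀)) ℝ := Matrix.of fun i j =>
    c ((finProdFinEquiv.symm i).1, (finProdFinEquiv.symm j).1) *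
      (if ((finProdFinEquiv.symm i).2 : ℕ) = 0 ∧ ((finProdFinEquiv.symm j).2 : ℕ) = 0
        then 1 else 0) with hA
  have hblock : ∀ s k u v, blockR m p μ₀ ν₀ A s k u v
      = c (s, k) * (if (u : ℕ) = 0 ∧ (v : ℕ) = 0 then 1 else 0) := by
    intro s k u v
    show A (finProdFinEquiv (s, u)) (finProdFinEquiv (k, v)) = _
    rw [hA]
    simp only [Matrix.of_apply, Equiv.symm_apply_apply]
  have hf : ∀ i, (∑ s : Fin m, ∑ k : Fin p, a i s k • blockR m p μ₀ ν₀ A s k) = 0 := by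
    intro i
    ext u v
    simp only [Matrix.sum_apply, Matrix.smul_apply, hblock, smul_eq_mul, Matrix.zero_apply]
    have : ∑ s : Fin m, ∑ k : Fin p,
        a i s k * (c (s, k) * (if (u : ℕ) = 0 ∧ (v : ℕ) = 0 then 1 else 0))
        = (∑ s : Fin m, ∑ k : Fin p, a i s k * c (s, k)) *
            (if (u : ℕ) = 0 ∧ (v : ℕ) = 0 then 1 else 0) := by
      rw [Finset.sum_mul]
      refine Finset.sum_congr rfl fun s _ => ?_
      rw [Finset.sum_mul]
      exact Finset.sum_congr rfl fun k _ => by ring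
    rw [this]
    have h2 : ∑ s : Fin m, ∑ k : Fin p, a i s k * c (s, k) = 0 := by
      have := hker i
      rw [hφx] at this
      rwa [Fintype.sum_prod_type] at this
    rw [h2, zero_mul]
  have hblock0 : ∀ s k, blockR m p μ₀ ν₀ (0 : Matrix (Fin (m * μ₀)) (Fin (p * ν₀)) ℝ) s k = 0 := by
    intro s k
    ext u v
    simp [blockR]
  have harg : (fun i =>
      (∑ s : Fin m, ∑ k : Fin p, a i s k • blockR m p μ₀ ν₀ A s k) *
      (∑ s : Fin m, ∑ k : Fin p, b i s k • (blockR m p μ₀ ν₀ A s k)ᵀ))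
      = (fun i =>
      (∑ s : Fin m, ∑ k : Fin p, a i s k • blockR m p μ₀ ν₀ 0 s k) *
      (∑ s : Fin m, ∑ k : Fin p, b i s k • (blockR m p μ₀ ν₀ 0 s k)ᵀ)) := by
    funext i
    rw [hf i, Matrix.zero_mul]
    have : (∑ s : Fin m, ∑ k : Fin p, a i s k • blockR m p μ₀ ν₀
        (0 : Matrix (Fin (m * μ₀)) (Fin (p * ν₀)) ℝ) s k) = 0 := by
      simp [hblock0]
    rw [this, Matrix.zero_mul]
  have hAAT : A * Aᵀ = 0 := by
    have h1 := hd A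
    have h2 := hd 0
    rw [harg, h2] at h1
    rw [← h1, Matrix.zero_mul]
  -- contradiction: diagonal entry is positive
  set u0 : Fin μ₀ := ⟨0, hμ⟩
  set v0 : Fin ν₀ := ⟨0, hν⟩
  set i0 : Fin (m * μ₀) := finProdFinEquiv (sk0.1, u0)
  set j0 : Fin (p * ν₀) := finProdFinEquiv (sk0.2, v0)
  have h0 : (A * Aᵀ) i0 i0 = 0 := by rw [hAAT]; rfl
  rw [Matrix.mul_apply] at h0
  have hj0 : 0 < A i0 j0 * Aᵀ j0 i0 := by
    have hAij : A i0 j0 = c sk0 := by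
      show (Matrix.of _ : Matrix _ _ ℝ) (finProdFinEquiv (sk0.1, u0)) (finProdFinEquiv (sk0.2, v0)) = c sk0
      simp only [Matrix.of_apply, Equiv.symm_apply_apply]
      simp [u0, v0]
    rw [Matrix.transpose_apply, hAij]
    exact mul_self_pos.mpr hsk0
  have hpos : 0 < ∑ j, A i0 j * Aᵀ j i0 := by
    refine Finset.sum_pos' (fun j _ => ?_) ⟨j0, Finset.mem_univ _, hj0⟩
    rw [Matrix.transpose_apply]
    exact mul_self_nonneg _
  rw [h0] at hpos
  exact lt_irrefl 0 hpos

lemma aux_card (m p μ₀ ν₀ : ℕ) (hμ : 1 ≤ μ₀) (hν : 1 ≤ ν₀)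
    (K : Type*) [Fintype K]
    (a b : K → Fin m → Fin p → ℝ)
    (hdec : ∃ d : (K → Matrix (Fin μ₀) (Fin μ₀) ℝ) → Matrix (Fin (m * μ₀)) (Fin (m * μ₀)) ℝ,
      ∀ A : Matrix (Fin (m * μ₀)) (Fin (p * ν₀)) ℝ,
        d (fun i =>
            (∑ s : Fin m, ∑ k : Fin p, a i s k • blockR m p μ₀ ν₀ A s k) *
            (∑ s : Fin m, ∑ k : Fin p, b i s k • (blockR m p μ₀ ν₀ A s k)ᵀ))
          = A * Aᵀ) :
    m * p ≤ Fintype.card K := by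
  have hspan := aux_span m p μ₀ ν₀ hμ hν K a b hdec
  have h1 : Module.finrank ℝ (Fin m × Fin p → ℝ) = m * p := by
    simp [Module.finrank_pi]
  have h2 := finrank_span_le_card (R := ℝ)
    (Set.range fun i : K => fun sk : Fin m × Fin p => a i sk.1 sk.2)
  rw [hspan] at h2
  rw [finrank_top, h1] at h2
  refine h2.trans ?_
  rw [Set.toFinset_range]
  exact (Finset.card_image_le).trans (by simp)

/-- (Lower bound on the recovery threshold over `ℝ`.)
If a decoding function recovers `A·Aᵀ` from the worker outputs
`f_i(A)·g_i(A)`, `i ∈ K`, of a linear computation strategy, then the encoding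
vectors `a_i` span `ℝ^{mp}`, hence `|K| ≥ mp`.  Consequently, any linear
strategy with `N` workers in which every `R`-subset of workers is decodable
satisfies `R ≥ min{N, mp}`. -/
theorem stmt_6 (m p μ₀ ν₀ : ℕ)
    (hm : 1 ≤ m) (hp : 1 ≤ p) (hμ : 1 ≤ μ₀) (hν : 1 ≤ ν₀)
    (K : Type*) [Fintype K]
    (a b : K → Fin m → Fin p → ℝ)
    (hdec : ∃ d : (K → Matrix (Fin μ₀) (Fin μ₀) ℝ) → Matrix (Fin (m * μ₀)) (Fin (m * μ₀)) ℝ,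
      ∀ A : Matrix (Fin (m * μ₀)) (Fin (p * ν₀)) ℝ,
        d (fun i =>
            (∑ s : Fin m, ∑ k : Fin p, a i s k • blockR m p μ₀ ν₀ A s k) *
            (∑ s : Fin m, ∑ k : Fin p, b i s k • (blockR m p μ₀ ν₀ A s k)ᵀ))
          = A * Aᵀ) :
    (Submodule.span ℝ
        (Set.range fun i : K => fun sk : Fin m × Fin p => a i sk.1 sk.2) = ⊤) ∧
    m * p ≤ Fintype.card K ∧
    (∀ (N R : ℕ) (a' b' : Fin N → Fin m → Fin p → ℝ),
      (∀ S : Finset (Fin N), S.card = R →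
        ∃ d : ({ i // i ∈ S } → Matrix (Fin μ₀) (Fin μ₀) ℝ) →
                Matrix (Fin (m * μ₀)) (Fin (m * μ₀)) ℝ,
          ∀ A : Matrix (Fin (m * μ₀)) (Fin (p * ν₀)) ℝ,
            d (fun i =>
                (∑ s : Fin m, ∑ k : Fin p, a' i.1 s k • blockR m p μ₀ ν₀ A s k) *
                (∑ s : Fin m, ∑ k : Fin p, b' i.1 s k • (blockR m p μ₀ ν₀ A s k)ᵀ))
              = A * Aᵀ) →
      min N (m * p) ≤ R) := by
  refine ⟨aux_span m p μ₀ ν₀ hμ hν K a b hdec,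
    aux_card m p μ₀ ν₀ hμ hν K a b hdec, ?_⟩
  intro N R a' b' hdecS
  rcases le_or_gt N R with h | h
  · exact (min_le_left _ _).trans h
  · obtain ⟨S, -, hS⟩ := Finset.exists_subset_card_eq
      (s := (Finset.univ : Finset (Fin N))) (n := R) (by simpa using h.le)
    have hc := aux_card m p μ₀ ν₀ hμ hν { i // i ∈ S }
      (fun i => a' i.1) (fun i => b' i.1) (hdecS S hS)
    rw [Fintype.card_coe, hS] at hc
    exact (min_le_right _ _).trans hc
end

section
/- Let F be a field, m, p ≥ 1, μ = m·μ_0, ν = p·ν_0, and let A ∈ F^{μ×ν} with blocks A_{k,j} ∈ F^{μ_0×ν_0}. Define the matrix-coefficient polynomials f_A(x) = Σ_{k=0}^{m−1} Σ_{j=0}^{p−1} A_{k,j} x^{kp+j} and g_A(x) = Σ_{s=0}^{m−1} Σ_{i=0}^{p−1} A_{s,i}ᵀ x^{smp+p−1−i}. Then f_A(x)·g_A(x) = Σ_{k=0}^{m−1} Σ_{s=0}^{m−1} C_{k,s} x^{smp+kp+p−1} + Σ_{k=0}^{m−1} Σ_{s=0}^{m−1} Σ_{t=1}^{p−1} ( B_{k,s,t}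 x^{smp+kp+p−1+t} + B_{k,s,t}ᵀ x^{kmp+sp+p−1−t} ), where C_{k,s} = Σ_{i=0}^{p−1} A_{k,i}·A_{s,i}ᵀ and B_{k,s,t} = Σ_{i=0}^{p−1−t} A_{k,i+t}·A_{s,i}ᵀ. Moreover C_{k,s}ᵀ = C_{s,k}, and the blocks of A·Aᵀ are exactly the C_{k,s}. -/
open Finset Matrix Polynomial

/-- The `(k,j)` block (of size `μ₀ × ν₀`) of `A ∈ F^{(m·μ₀) × (p·ν₀)}`. -/
def matBlock (F : Type*) [Field F] (m p μ₀ ν₀ : ℕ)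
    (A : Matrix (Fin (m * μ₀)) (Fin (p * ν₀)) F) (k : Fin m) (j : Fin p) :
    Matrix (Fin μ₀) (Fin ν₀) F :=
  Matrix.of fun u v => A (finProdFinEquiv (k, u)) (finProdFinEquiv (j, v))

/-- The `(k,s)` block (of size `μ₀ × μ₀`) of a square matrix `M ∈ F^{(m·μ₀) × (m·μ₀)}`. -/
def sqBlock (F : Type*) [Field F] (m μ₀ : ℕ)
    (M : Matrix (Fin (m * μ₀)) (Fin (m * μ₀)) F) (k s : Fin m) :
    Matrix (Fin μ₀) (Fin μ₀) F :=
  Matrix.of fun u v => M (finProdFinEquiv (k, u)) (finProdFinEquiv (s, v))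

/-- The matrix-coefficient polynomial `f_A(x) = Σ_{k,j} A_{k,j} x^{kp+j}`,
realized as a matrix with entries in `F[x]`. -/
noncomputable def fApoly (F : Type*) [Field F] (m p μ₀ ν₀ : ℕ)
    (A : Matrix (Fin (m * μ₀)) (Fin (p * ν₀)) F) :
    Matrix (Fin μ₀) (Fin ν₀) (Polynomial F) :=
  ∑ k : Fin m, ∑ j : Fin p,
    (X : Polynomial F) ^ ((k : ℕ) * p + (j : ℕ)) • (matBlock F m p μ₀ ν₀ A k j).map C

/-- The matrix-coefficient polynomial `g_A(x) = Σ_{s,i} A_{s,i}ᵀ x^{smp+p-1-i}`. -/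
noncomputable def gApoly (F : Type*) [Field F] (m p μ₀ ν₀ : ℕ)
    (A : Matrix (Fin (m * μ₀)) (Fin (p * ν₀)) F) :
    Matrix (Fin ν₀) (Fin μ₀) (Polynomial F) :=
  ∑ s : Fin m, ∑ i : Fin p,
    (X : Polynomial F) ^ ((s : ℕ) * (m * p) + (p - 1 - (i : ℕ))) •
      ((matBlock F m p μ₀ ν₀ A s i).map C)ᵀ

/-- `B_{k,s,t} = Σ_{i=0}^{p-1-t} A_{k,i+t} · A_{s,i}ᵀ`
(encoded as a double sum with a coincidence condition on the indices). -/
def Bmat (F : Type*) [Field F] (m p μ₀ ν₀ : ℕ)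
    (A : Matrix (Fin (m * μ₀)) (Fin (p * ν₀)) F) (k s : Fin m) (t : ℕ) :
    Matrix (Fin μ₀) (Fin μ₀) F :=
  ∑ i : Fin p, ∑ j : Fin p,
    if (j : ℕ) = (i : ℕ) + t then
      matBlock F m p μ₀ ν₀ A k j * (matBlock F m p μ₀ ν₀ A s i)ᵀ
    else 0

/-- `C_{k,s} = Σ_{i=0}^{p-1} A_{k,i} · A_{s,i}ᵀ`. -/
def Cmat (F : Type*) [Field F] (m p μ₀ ν₀ : ℕ)
    (A : Matrix (Fin (m * μ₀)) (Fin (p * ν₀)) F) (k s : Fin m) :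
    Matrix (Fin μ₀) (Fin μ₀) F :=
  ∑ i : Fin p, matBlock F m p μ₀ ν₀ A k i * (matBlock F m p μ₀ ν₀ A s i)ᵀ

lemma mapC_sum {F : Type*} [Field F] {a b : ℕ} {ι : Type*} (s : Finset ι)
    (f : ι → Matrix (Fin a) (Fin b) F) :
    (∑ i ∈ s, f i).map (C : F →+* Polynomial F) = ∑ i ∈ s, (f i).map C := by
  ext u v
  simp [Matrix.sum_apply]

lemma mapC_ite {F : Type*} [Field F] {a b : ℕ} (c : Prop) [Decidable c]
    (M : Matrix (Fin a) (Fin b) F) :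
    (if c then M else 0).map (C : F →+* Polynomial F) = if c then M.map C else 0 := by
  split <;> simp

noncomputable def Tterm {F : Type*} [Field F] {m p μ₀ ν₀ : ℕ}
    (A : Matrix (Fin (m * μ₀)) (Fin (p * ν₀)) F)
    (k s : Fin m) (j i : Fin p) : Matrix (Fin μ₀) (Fin μ₀) (Polynomial F) :=
  (X : Polynomial F) ^ ((k : ℕ) * p + (j : ℕ) + ((s : ℕ) * (m * p) + (p - 1 - (i : ℕ)))) •
    ((matBlock F m p μ₀ ν₀ A k j * (matBlock F m p μ₀ ν₀ A s i)ᵀ).map C)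

lemma prod_expand (F : Type*) [Field F] (m p μ₀ ν₀ : ℕ)
    (A : Matrix (Fin (m * μ₀)) (Fin (p * ν₀)) F) :
    fApoly F m p μ₀ ν₀ A * gApoly F m p μ₀ ν₀ A =
      ∑ k : Fin m, ∑ s : Fin m, ∑ j : Fin p, ∑ i : Fin p, Tterm A k s j i := by
  unfold fApoly gApoly Tterm
  rw [Matrix.sum_mul]
  refine Finset.sum_congr rfl fun k _ => ?_
  rw [Matrix.sum_mul, show (∑ j : Fin p, ((X : Polynomial F) ^ ((k : ℕ) * p + (j : ℕ)) •
        (matBlock F m p μ₀ ν₀ A k j).map C) *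
        (∑ s : Fin m, ∑ i : Fin p, (X : Polynomial F) ^ ((s : ℕ) * (m * p) + (p - 1 - (i : ℕ))) •
          ((matBlock F m p μ₀ ν₀ A s i).map C)ᵀ))
      = ∑ j : Fin p, ∑ s : Fin m, ∑ i : Fin p,
        (X : Polynomial F) ^ ((k : ℕ) * p + (j : ℕ) + ((s : ℕ) * (m * p) + (p - 1 - (i : ℕ)))) •
          ((matBlock F m p μ₀ ν₀ A k j * (matBlock F m p μ₀ ν₀ A s i)ᵀ).map C) from
    Finset.sum_congr rfl fun j _ => by
      rw [Matrix.mul_sum]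
      refine Finset.sum_congr rfl fun s _ => ?_
      rw [Matrix.mul_sum]
      refine Finset.sum_congr rfl fun i _ => ?_
      rw [Matrix.smul_mul, Matrix.mul_smul, smul_smul, ← pow_add, ← Matrix.transpose_map,
        ← Matrix.map_mul]]
  exact Finset.sum_comm

lemma sum_ite_t {M : Type*} [AddCommMonoid M] {p : ℕ} (j i : Fin p) (g : ℕ → M) :
    ∑ t ∈ Finset.Icc 1 (p - 1), (if (j : ℕ) = (i : ℕ) + t then g t else 0)
      = if (i : ℕ) < (j : ℕ) then g ((j : ℕ) - (i : ℕ)) else 0 := by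
  have hj := j.isLt
  rcases lt_or_ge (i : ℕ) (j : ℕ) with h | h
  · rw [if_pos h, Finset.sum_eq_single_of_mem ((j : ℕ) - (i : ℕ))]
    · rw [if_pos (by omega)]
    · simp only [Finset.mem_Icc]; omega
    · intro t _ ht; rw [if_neg (by omega)]
  · rw [if_neg (by omega)]
    refine Finset.sum_eq_zero fun t ht => ?_
    simp only [Finset.mem_Icc] at ht
    rw [if_neg (by omega)]

lemma tri {M : Type*} [AddCommMonoid M] (p : ℕ) (f : Fin p → Fin p → M) :
    ∑ j : Fin p, ∑ i : Fin p, f j i =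
      (∑ i : Fin p, f i i)
      + (∑ t ∈ Finset.Icc 1 (p - 1), ∑ i : Fin p, ∑ j : Fin p,
          (if (j : ℕ) = (i : ℕ) + t then f j i else 0))
      + (∑ t ∈ Finset.Icc 1 (p - 1), ∑ j : Fin p, ∑ i : Fin p,
          (if (i : ℕ) = (j : ℕ) + t then f j i else 0)) := by
  have h2 : (∑ t ∈ Finset.Icc 1 (p - 1), ∑ i : Fin p, ∑ j : Fin p,
      (if (j : ℕ) = (i : ℕ) + t then f j i else 0))
      = ∑ j : Fin p, ∑ i : Fin p, (if (i : ℕ) < (j : ℕ) then f j i else 0) := by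
    rw [Finset.sum_comm]
    rw [show (∑ i : Fin p, ∑ t ∈ Finset.Icc 1 (p - 1), ∑ j : Fin p,
        (if (j : ℕ) = (i : ℕ) + t then f j i else 0))
      = ∑ i : Fin p, ∑ j : Fin p, (if (i : ℕ) < (j : ℕ) then f j i else 0) from
      Finset.sum_congr rfl fun i _ => by
        rw [Finset.sum_comm]
        exact Finset.sum_congr rfl fun j _ => sum_ite_t j i fun _ => f j i]
    exact Finset.sum_comm
  have h3 : (∑ t ∈ Finset.Icc 1 (p - 1), ∑ j : Fin p, ∑ i : Fin p,
      (if (i : ℕ) = (j : ℕ) + t then f j i else 0))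
      = ∑ j : Fin p, ∑ i : Fin p, (if (j : ℕ) < (i : ℕ) then f j i else 0) := by
    rw [Finset.sum_comm]
    refine Finset.sum_congr rfl fun j _ => ?_
    rw [Finset.sum_comm]
    exact Finset.sum_congr rfl fun i _ => sum_ite_t i j fun _ => f j i
  have h1 : (∑ i : Fin p, f i i)
      = ∑ j : Fin p, ∑ i : Fin p, (if (j : ℕ) = (i : ℕ) then f j i else 0) := by
    refine Finset.sum_congr rfl fun j _ => ?_
    rw [Finset.sum_eq_single_of_mem j (Finset.mem_univ j)]
    · rw [if_pos rfl]
    · intro i _ hi; rw [if_neg (by simpa [Fin.ext_iff] using (Ne.symm hi))]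
  rw [h1, h2, h3, ← Finset.sum_add_distrib, ← Finset.sum_add_distrib]
  refine Finset.sum_congr rfl fun j _ => ?_
  rw [← Finset.sum_add_distrib, ← Finset.sum_add_distrib]
  refine Finset.sum_congr rfl fun i _ => ?_
  rcases lt_trichotomy (j : ℕ) (i : ℕ) with h | h | h
  · rw [if_neg (by omega), if_neg (by omega), if_pos h, zero_add, zero_add]
  · rw [if_pos h, if_neg (by omega), if_neg (by omega), add_zero, add_zero]
  · rw [if_neg (by omega), if_pos h, if_neg (by omega), zero_add, add_zero]

section main
variable {F : Type*} [Field F] {m p μ₀ ν₀ : ℕ}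
  (A : Matrix (Fin (m * μ₀)) (Fin (p * ν₀)) F)

lemma hC (k s : Fin m) :
    (X : Polynomial F) ^ ((s : ℕ) * (m * p) + (k : ℕ) * p + (p - 1)) •
      (Cmat F m p μ₀ ν₀ A k s).map C = ∑ i : Fin p, Tterm A k s i i := by
  unfold Cmat Tterm
  rw [mapC_sum, Finset.smul_sum]
  refine Finset.sum_congr rfl fun i _ => ?_
  have hi := i.isLt
  congr 2
  generalize (s : ℕ) * (m * p) = a
  generalize (k : ℕ) * p = b
  omega

lemma hB (k s : Fin m) (t : ℕ) (ht : t ∈ Finset.Icc 1 (p - 1)) :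
    (X : Polynomial F) ^ ((s : ℕ) * (m * p) + (k : ℕ) * p + (p - 1) + t) •
      (Bmat F m p μ₀ ν₀ A k s t).map C =
    ∑ i : Fin p, ∑ j : Fin p,
      (if (j : ℕ) = (i : ℕ) + t then Tterm A k s j i else 0) := by
  unfold Bmat Tterm
  rw [mapC_sum, Finset.smul_sum]
  refine Finset.sum_congr rfl fun i _ => ?_
  rw [mapC_sum, Finset.smul_sum]
  refine Finset.sum_congr rfl fun j _ => ?_
  rw [mapC_ite, smul_ite, smul_zero]
  simp only [Finset.mem_Icc] at ht
  have hi := i.isLt; have hj := j.isLt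
  split_ifs with h
  · congr 2
    generalize (s : ℕ) * (m * p) = a
    generalize (k : ℕ) * p = b
    omega
  · rfl

lemma hBT (k s : Fin m) (t : ℕ) (ht : t ∈ Finset.Icc 1 (p - 1)) :
    (X : Polynomial F) ^ ((k : ℕ) * (m * p) + (s : ℕ) * p + (p - 1 - t)) •
      ((Bmat F m p μ₀ ν₀ A k s t)ᵀ).map C =
    ∑ j : Fin p, ∑ i : Fin p,
      (if (i : ℕ) = (j : ℕ) + t then Tterm A s k j i else 0) := by
  unfold Bmat Tterm
  rw [Matrix.transpose_sum, mapC_sum, Finset.smul_sum]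
  refine Finset.sum_congr rfl fun j _ => ?_
  rw [Matrix.transpose_sum, mapC_sum, Finset.smul_sum]
  refine Finset.sum_congr rfl fun i _ => ?_
  rw [show (if (i : ℕ) = (j : ℕ) + t then
        matBlock F m p μ₀ ν₀ A k i * (matBlock F m p μ₀ ν₀ A s j)ᵀ else 0)ᵀ
      = (if (i : ℕ) = (j : ℕ) + t then
        matBlock F m p μ₀ ν₀ A s j * (matBlock F m p μ₀ ν₀ A k i)ᵀ else 0) from by
    split_ifs <;> simp [Matrix.transpose_mul]]
  rw [mapC_ite, smul_ite, smul_zero]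
  simp only [Finset.mem_Icc] at ht
  have hi := i.isLt; have hj := j.isLt
  split_ifs with h
  · congr 2
    generalize (k : ℕ) * (m * p) = a
    generalize (s : ℕ) * p = b
    omega
  · rfl

end main

/-- (Expansion of the product `f_A(x)·g_A(x)`, eq. (7) of the
paper.)  The product of the encoding polynomials expands as
`Σ_{k,s} C_{k,s} x^{smp+kp+p-1} + Σ_{k,s} Σ_{t=1}^{p-1} (B_{k,s,t} x^{smp+kp+p-1+t}
+ B_{k,s,t}ᵀ x^{kmp+sp+p-1-t})`; moreover `C_{k,s}ᵀ = C_{s,k}` and the blocks of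
`A·Aᵀ` are exactly the `C_{k,s}`. -/
theorem stmt_7 (F : Type*) [Field F] (m p μ₀ ν₀ : ℕ)
    (hm : 1 ≤ m) (hp : 1 ≤ p) (hμ : 1 ≤ μ₀) (hν : 1 ≤ ν₀)
    (A : Matrix (Fin (m * μ₀)) (Fin (p * ν₀)) F) :
    (fApoly F m p μ₀ ν₀ A * gApoly F m p μ₀ ν₀ A =
      (∑ k : Fin m, ∑ s : Fin m,
        (X : Polynomial F) ^ ((s : ℕ) * (m * p) + (k : ℕ) * p + (p - 1)) •
          (Cmat F m p μ₀ ν₀ A k s).map C)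
      + ∑ k : Fin m, ∑ s : Fin m, ∑ t ∈ Finset.Icc 1 (p - 1),
          ((X : Polynomial F) ^ ((s : ℕ) * (m * p) + (k : ℕ) * p + (p - 1) + t) •
              (Bmat F m p μ₀ ν₀ A k s t).map C
            + (X : Polynomial F) ^ ((k : ℕ) * (m * p) + (s : ℕ) * p + (p - 1 - t)) •
              ((Bmat F m p μ₀ ν₀ A k s t)ᵀ).map C)) ∧
    (∀ k s : Fin m, (Cmat F m p μ₀ ν₀ A k s)ᵀ = Cmat F m p μ₀ ν₀ A s k) ∧
    (∀ k s : Fin m, sqBlock F m μ₀ (A * Aᵀ) k s = Cmat F m p μ₀ ν₀ A k s) := by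
  refine ⟨?_, fun k s => ?_, fun k s => ?_⟩
  · rw [prod_expand]
    have step1 : (∑ k : Fin m, ∑ s : Fin m, ∑ j : Fin p, ∑ i : Fin p, Tterm A k s j i)
        = ∑ k : Fin m, ∑ s : Fin m,
            ((∑ i : Fin p, Tterm A k s i i)
            + (∑ t ∈ Finset.Icc 1 (p - 1), ∑ i : Fin p, ∑ j : Fin p,
                (if (j : ℕ) = (i : ℕ) + t then Tterm A k s j i else 0))
            + (∑ t ∈ Finset.Icc 1 (p - 1), ∑ j : Fin p, ∑ i : Fin p,
                (if (i : ℕ) = (j : ℕ) + t then Tterm A k s j i else 0))) :=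
      Finset.sum_congr rfl fun k _ => Finset.sum_congr rfl fun s _ =>
        tri p (fun j i => Tterm A k s j i)
    rw [step1]
    have e1 : (∑ k : Fin m, ∑ s : Fin m,
        (X : Polynomial F) ^ ((s : ℕ) * (m * p) + (k : ℕ) * p + (p - 1)) •
          (Cmat F m p μ₀ ν₀ A k s).map C)
        = ∑ k : Fin m, ∑ s : Fin m, ∑ i : Fin p, Tterm A k s i i :=
      Finset.sum_congr rfl fun k _ => Finset.sum_congr rfl fun s _ => hC A k s
    have e2 : (∑ k : Fin m, ∑ s : Fin m, ∑ t ∈ Finset.Icc 1 (p - 1),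
          ((X : Polynomial F) ^ ((s : ℕ) * (m * p) + (k : ℕ) * p + (p - 1) + t) •
              (Bmat F m p μ₀ ν₀ A k s t).map C
            + (X : Polynomial F) ^ ((k : ℕ) * (m * p) + (s : ℕ) * p + (p - 1 - t)) •
              ((Bmat F m p μ₀ ν₀ A k s t)ᵀ).map C))
        = (∑ k : Fin m, ∑ s : Fin m, ∑ t ∈ Finset.Icc 1 (p - 1), ∑ i : Fin p, ∑ j : Fin p,
            (if (j : ℕ) = (i : ℕ) + t then Tterm A k s j i else 0))
          + (∑ k : Fin m, ∑ s : Fin m, ∑ t ∈ Finset.Icc 1 (p - 1), ∑ j : Fin p, ∑ i : Fin p,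
            (if (i : ℕ) = (j : ℕ) + t then Tterm A k s j i else 0)) := by
      simp only [Finset.sum_add_distrib]
      congr 1
      · exact Finset.sum_congr rfl fun k _ => Finset.sum_congr rfl fun s _ =>
          Finset.sum_congr rfl fun t ht => hB A k s t ht
      · rw [show (∑ k : Fin m, ∑ s : Fin m, ∑ t ∈ Finset.Icc 1 (p - 1),
            (X : Polynomial F) ^ ((k : ℕ) * (m * p) + (s : ℕ) * p + (p - 1 - t)) •
              ((Bmat F m p μ₀ ν₀ A k s t)ᵀ).map C)
            = ∑ k : Fin m, ∑ s : Fin m, ∑ t ∈ Finset.Icc 1 (p - 1), ∑ j : Fin p, ∑ i : Fin p,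
              (if (i : ℕ) = (j : ℕ) + t then Tterm A s k j i else 0) from
          Finset.sum_congr rfl fun k _ => Finset.sum_congr rfl fun s _ =>
            Finset.sum_congr rfl fun t ht => hBT A k s t ht]
        exact Finset.sum_comm
    rw [e1, e2]
    simp only [Finset.sum_add_distrib]
    rw [add_assoc]
  · unfold Cmat
    simp [Matrix.transpose_sum, Matrix.transpose_mul, Matrix.transpose_transpose]
  · ext u v
    simp only [sqBlock, Cmat, matBlock, Matrix.of_apply, Matrix.sum_apply, Matrix.mul_apply,
      Matrix.transpose_apply]
    rw [← Equiv.sum_comp finProdFinEquiv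
      (fun w => A (finProdFinEquiv (k, u)) w * A (finProdFinEquiv (s, v)) w),
      Fintype.sum_prod_type]
end

section
/- Let F be a field and m, p ≥ 1 integers. Consider the set of polynomials Ω_1 = { x^{smp+kp+p−1+t} + x^{kmp+sp+p−1−t} : k, s ∈ {0,...,m−1}, t ∈ {1,...,p−1} } ⊆ F[x]. Then the dimension over F of the linear span of Ω_1 equals ((p−1)(2m^2−m+1) + χ(m)·χ(p)·(1 − 2·δ))/2, where χ(x) = 1 if x is even and 0 if x is odd, and δ = 1 if char F = 2 and δ = 0 otherwise. -/
open Polynomial Finset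

namespace Stmt9

def gg (m q : ℕ) : ℕ := q % m * m + q / m + 1

def ffn (m p : ℕ) (v : ℕ × ℕ) : ℕ × ℕ := (gg m v.1, p - 2 - v.2)

def iv (p : ℕ) (v : ℕ × ℕ) : ℕ := v.1 * p + v.2

def Dfin (m p : ℕ) : Finset (ℕ × ℕ) := Finset.range (m*m) ×ˢ Finset.range (p-1)

def evenReps (m : ℕ) : Finset ℕ := (Finset.Ico 2 (m+1)).filter (fun u => 2*u < m+2)
def oddReps (m : ℕ) : Finset ℕ := (Finset.Ico 2 (m+1)).filter (fun u => 2*u = m+2)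
def oddRs (p : ℕ) (d2 : Bool) : Finset ℕ :=
  (Finset.range (p-1)).filter (fun r => 2*r+2 ≤ p ∧ (d2 = true ∨ 2*r+2 ≠ p))
def Rfin (m p : ℕ) (d2 : Bool) : Finset (ℕ × ℕ) :=
  evenReps m ×ˢ Finset.range (p-1) ∪ oddReps m ×ˢ oddRs p d2
def Kfin (m p : ℕ) (d2 : Bool) : Finset (ℕ × ℕ) := Dfin m p \ Rfin m p d2

def IsC (m q : ℕ) : Prop := q < m*m - 1 ∧ 2 ≤ q % (m+1)

/- ### arithmetic identities -/

lemma sq_ident1 {m : ℕ} (hm : 1 ≤ m) : (m-1)*m + m = m*m := by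
  obtain ⟨m', rfl⟩ := Nat.exists_eq_add_of_le hm
  simp only [Nat.add_sub_cancel_left]; ring

lemma sq_ident2 {m : ℕ} (hm : 2 ≤ m) : (m-2)*m + 2*m = m*m := by
  obtain ⟨m', rfl⟩ := Nat.exists_eq_add_of_le hm
  simp only [Nat.add_sub_cancel_left]; ring

lemma sq_ident3 {m : ℕ} (hm : 1 ≤ m) : (m-1)*(m+1) + 1 = m*m := by
  obtain ⟨m', rfl⟩ := Nat.exists_eq_add_of_le hm
  simp only [Nat.add_sub_cancel_left]; ring

lemma sq_ident4 {m : ℕ} (hm : 1 ≤ m) : (m-1)*(m+1) = m*m - 1 := by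
  have := sq_ident3 hm; omega

lemma mod_decomp {m : ℕ} (k s : ℕ) (hs : s < m) : (k*m + s) % m = s := by
  rw [add_comm, Nat.add_mul_mod_self_right, Nat.mod_eq_of_lt hs]

lemma div_decomp {m : ℕ} (k s : ℕ) (hs : s < m) : (k*m + s) / m = k := by
  rw [add_comm, Nat.add_mul_div_right _ _ (by omega : 0 < m), Nat.div_eq_of_lt hs]
  omega

lemma gg_eq {m : ℕ} (k s : ℕ) (hs : s < m) : gg m (k*m + s) = s*m + k + 1 := by
  unfold gg; rw [mod_decomp k s hs, div_decomp k s hs]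

lemma decomp_lt {m q : ℕ} (h : q < m*m) : q / m < m ∧ q % m < m := by
  have hm : 0 < m := by by_contra h'; simp [Nat.le_zero.mp (not_lt.mp h')] at h
  exact ⟨(Nat.div_lt_iff_lt_mul hm).mpr h, Nat.mod_lt _ hm⟩

lemma self_decomp (m q : ℕ) : q = (q / m) * m + q % m := by
  rw [mul_comm]; exact (Nat.div_add_mod q m).symm

lemma gg_inj {m : ℕ} {q q' : ℕ} (h : q < m*m) (h' : q' < m*m) (he : gg m q = gg m q') :
    q = q' := by
  unfold gg at he
  have h1 := decomp_lt h
  have h2 := decomp_lt h'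
  have e1 : (q % m * m + q / m) / m = q % m := div_decomp _ _ h1.1
  have e2 : (q' % m * m + q' / m) / m = q' % m := div_decomp _ _ h2.1
  have e3 : (q % m * m + q / m) % m = q / m := mod_decomp _ _ h1.1
  have e4 : (q' % m * m + q' / m) % m = q' / m := mod_decomp _ _ h2.1
  have hx : q % m * m + q / m = q' % m * m + q' / m := by omega
  have hmod : q % m = q' % m := by rw [← e1, ← e2, hx]
  have hdiv : q / m = q' / m := by rw [← e3, ← e4, hx]
  have d1 := self_decomp m q
  have d2 := self_decomp m q'
  rw [hmod, hdiv] at d1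
  omega

lemma gg_le {m q : ℕ} (h : q < m*m) : gg m q ≤ m*m := by
  obtain ⟨h1, h2⟩ := decomp_lt h
  have hm : 1 ≤ m := by omega
  have A : q % m * m ≤ (m-1) * m := Nat.mul_le_mul_right m (by omega)
  have B := sq_ident1 hm
  unfold gg; omega

lemma gg_eq_sq {m q : ℕ} (h : q < m*m) (he : gg m q = m*m) : q = m*m - 1 := by
  obtain ⟨h1, h2⟩ := decomp_lt h
  have hm : 1 ≤ m := by omega
  rcases Nat.lt_or_ge m 2 with hm1 | hm2
  · interval_cases m
    · have : q = 0 := by omega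
      subst this; simp
  · unfold gg at he
    have hs : q % m = m - 1 := by
      by_contra hne
      have hle : q % m ≤ m - 2 := by omega
      have A : q % m * m ≤ (m-2) * m := Nat.mul_le_mul_right m hle
      have B := sq_ident2 hm2
      omega
    have hk : q / m = m - 1 := by
      have B := sq_ident1 hm
      have : (m-1) * m + (q/m) + 1 = m*m := by rw [← hs]; omega
      omega
    have d := self_decomp m q
    rw [hk, hs] at d
    have B := sq_ident1 hm
    omega

/-- key congruence : gg q + q ≡ 1 mod (m+1) -/
lemma gg_add_self (m q : ℕ) : gg m q + q = (q % m + q / m) * (m+1) + 1 := by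
  unfold gg
  nth_rewrite 3 [self_decomp m q]
  ring

lemma gg_mod_add (m q : ℕ) (hm : 1 ≤ m) : (gg m q + q) % (m+1) = 1 := by
  rw [gg_add_self, mul_comm, Nat.mul_add_mod, Nat.mod_eq_of_lt (by omega)]

lemma mod_sum_cases {n B u : ℕ} (hn : 2 ≤ n) (hB : B < n) (hu : u < n)
    (h : (B + u) % n = 1) : B + u = 1 ∨ B + u = n + 1 := by
  have hd := Nat.div_add_mod (B+u) n
  rw [h] at hd
  set d := (B+u)/n with hdd
  have hd2 : d ≤ 1 := by
    by_contra hc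
    push_neg at hc
    have h2n : n*2 ≤ n*d := Nat.mul_le_mul_left n hc
    linarith
  interval_cases d
  · omega
  · right; omega

/-- class transition cases -/
lemma gg_class (m q : ℕ) (hm : 1 ≤ m) :
    gg m q % (m+1) + q % (m+1) = 1 ∨ gg m q % (m+1) + q % (m+1) = m + 2 := by
  have h1 := gg_mod_add m q hm
  have h2 : (gg m q % (m+1) + q % (m+1)) % (m+1) = 1 := by
    rw [← Nat.add_mod]; exact h1
  have hB : gg m q % (m+1) < m+1 := Nat.mod_lt _ (by omega)
  have hu : q % (m+1) < m+1 := Nat.mod_lt _ (by omega)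
  rcases mod_sum_cases (by omega) hB hu h2 with h | h
  · exact Or.inl h
  · right; omega

lemma gg_mod_class {m q u : ℕ} (hm : 1 ≤ m) (hu : q % (m+1) = u) (h2 : 2 ≤ u) :
    gg m q % (m+1) = m + 2 - u := by
  have := gg_class m q hm
  have hB : gg m q % (m+1) < m+1 := Nat.mod_lt _ (by omega)
  omega

lemma gg_mod_class0 {m q : ℕ} (hm : 1 ≤ m) (hu : q % (m+1) = 0) :
    gg m q % (m+1) = 1 := by
  have := gg_class m q hm
  have hB : gg m q % (m+1) < m+1 := Nat.mod_lt _ (by omega)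
  omega

lemma gg_mod_class1 {m q : ℕ} (hm : 1 ≤ m) (hu : q % (m+1) = 1) :
    gg m q % (m+1) = 0 := by
  have := gg_class m q hm
  have hB : gg m q % (m+1) < m+1 := Nat.mod_lt _ (by omega)
  omega

/- ### IsC and the square formula -/

lemma isC_m2 {m q : ℕ} (h : IsC m q) : 2 ≤ m := by
  obtain ⟨h1, h2⟩ := h
  by_contra hc
  push_neg at hc
  have : m*m ≤ 1 := by interval_cases m <;> simp
  omega

lemma isC_lt {m q : ℕ} (h : IsC m q) : q < m*m := by
  obtain ⟨h1, _⟩ := h; omega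

lemma sq_identA {m : ℕ} (hm : 2 ≤ m) : (m-2)*(m+1) + (m+2) = m*m := by
  obtain ⟨m', rfl⟩ := Nat.exists_eq_add_of_le hm
  simp only [Nat.add_sub_cancel_left]; ring

lemma isC_gg {m q : ℕ} (h : IsC m q) : IsC m (gg m q) := by
  have hm := isC_m2 h
  obtain ⟨h1, h2⟩ := h
  have hlt : q < m*m := by omega
  have hle := gg_le hlt
  have hcl : gg m q % (m+1) = m + 2 - q % (m+1) := gg_mod_class (by omega) rfl h2
  have hu : q % (m+1) < m + 1 := Nat.mod_lt _ (by omega)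
  constructor
  · -- gg q < m*m - 1
    rcases Nat.lt_or_ge (gg m q) (m*m - 1) with h' | h'
    · exact h'
    · exfalso
      have hne : gg m q ≠ m*m := fun he => by have := gg_eq_sq hlt he; omega
      have he1 : gg m q = m*m - 1 := by omega
      have : gg m q % (m+1) = 0 := by
        rw [he1, ← sq_ident4 (by omega)]
        exact Nat.mul_mod_left _ _
      omega
  · omega

/-- the square of gg is + (m+1) mod (m²-1) on C -/
lemma gg_sq {m q : ℕ} (h : IsC m q) : gg m (gg m q) = (q + m + 1) % (m*m - 1) := by
  have hm := isC_m2 h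
  obtain ⟨h1, h2⟩ := h
  have hlt : q < m*m := by omega
  obtain ⟨hk, hs⟩ := decomp_lt hlt
  have hq : q = (q/m)*m + q%m := self_decomp m q
  set k := q/m with hkdef
  set s := q%m with hsdef
  have hggq : gg m q = s*m + k + 1 := by rw [hq]; exact gg_eq k s hs
  rcases Nat.lt_or_ge (k+1) m with hk1 | hk1
  · -- generic case
    have hgg2 : gg m (gg m q) = (k+1)*m + s + 1 := by
      rw [hggq, show s*m + k + 1 = s*m + (k+1) by ring]
      exact gg_eq s (k+1) hk1
    have hexp : (k+1)*m = k*m + m := by ring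
    -- bound : q + m + 1 < m*m - 1
    have hbd : q + m + 1 < m*m - 1 := by
      by_contra hc
      push_neg at hc
      have hkm : k*m ≤ (m-2)*m := Nat.mul_le_mul_right m (by omega)
      have hid2 := sq_ident2 hm
      have hidA := sq_identA hm
      -- q ≤ m*m - m - 1, q ≥ m*m - m - 2
      have hcase : q = (m-2)*(m+1) ∨ q = (m-2)*(m+1) + 1 := by omega
      rcases hcase with hc1 | hc1
      · have : q % (m+1) = 0 := by rw [hc1]; exact Nat.mul_mod_left _ _
        omega
      · have : q % (m+1) = 1 := by
          rw [hc1, Nat.mul_add_mod' _ _ _, Nat.mod_eq_of_lt (by omega)]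
        omega
    rw [Nat.mod_eq_of_lt hbd, hgg2]
    omega
  · -- k = m - 1 case
    have hk2 : k + 1 = m := by omega
    have hsm : s + 1 < m := by
      by_contra hc
      push_neg at hc
      have hs1 : s = m - 1 := by omega
      have hid1 := sq_ident1 (by omega : 1 ≤ m)
      -- q = m*m - 1, contradiction
      have : q = m*m - 1 := by
        rw [hq, hs1, show k = m-1 by omega]
        omega
      omega
    have hggq' : gg m q = (s+1)*m + 0 := by
      have : (s+1)*m = s*m + m := by ring
      rw [hggq]; omega
    have hgg2 : gg m (gg m q) = 0*m + (s+1) + 1 := by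
      rw [hggq']
      exact gg_eq (s+1) 0 (by omega)
    have hid1 := sq_ident1 (by omega : 1 ≤ m)
    -- q + m + 1 = (m*m - 1) + (s + 2)
    have hqval : q + m + 1 = (m*m - 1) + (s + 2) := by
      rw [hq, show k = m - 1 by omega]
      omega
    rw [hqval, Nat.add_mod_left]
    have hm2 : 2*m ≤ m*m := Nat.mul_le_mul_right m hm
    rw [Nat.mod_eq_of_lt (by omega)]
    omega

/- ### iteration lemmas -/

lemma isC_mod_add {m q : ℕ} (h : IsC m q) (x : ℕ) :
    IsC m ((q + x*(m+1)) % (m*m-1)) ∧ ((q + x*(m+1)) % (m*m-1)) % (m+1) = q % (m+1) := by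
  have hm := isC_m2 h
  have hM : (m+1) ∣ (m*m-1) := ⟨m-1, by rw [← sq_ident4 (by omega : 1 ≤ m)]; ring⟩
  have hMpos : 0 < m*m - 1 := by
    have h4 : 4 ≤ m*m := Nat.mul_le_mul hm hm
    omega
  have hcl : ((q + x*(m+1)) % (m*m-1)) % (m+1) = q % (m+1) := by
    rw [Nat.mod_mod_of_dvd _ hM, Nat.add_mul_mod_self_right]
  refine ⟨⟨Nat.mod_lt _ hMpos, ?_⟩, hcl⟩
  rw [hcl]; exact h.2

lemma iter2 {m q : ℕ} (h : IsC m q) : ∀ j, (gg m)^[2*j] q = (q + j*(m+1)) % (m*m-1) := by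
  intro j
  induction j with
  | zero => simp [Nat.mod_eq_of_lt h.1]
  | succ j ih =>
    have hstep : (2:ℕ)*(j+1) = (2*j + 1) + 1 := by ring
    rw [hstep, Function.iterate_succ_apply', Function.iterate_succ_apply', ih]
    have hC := (isC_mod_add h j).1
    rw [gg_sq hC]
    rw [show (q + j*(m+1)) % (m*m-1) + m + 1 = (q + j*(m+1)) % (m*m-1) + (m+1) by ring]
    rw [Nat.mod_add_mod]
    congr 1
    ring

lemma gg_period {m q : ℕ} (h : IsC m q) : (gg m)^[2*(m-1)] q = q := by
  have hm := isC_m2 h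
  rw [iter2 h (m-1), sq_ident4 (by omega : 1 ≤ m), Nat.add_mod_right,
    Nat.mod_eq_of_lt h.1]

lemma mod_cancel_dvd {M q y : ℕ} (hq : q < M) (he : (q + y) % M = q) : M ∣ y := by
  have h1 : (q + y) % M = (q + 0) % M := by
    rw [he, Nat.add_zero, Nat.mod_eq_of_lt hq]
  have h2 : y ≡ 0 [MOD M] := Nat.ModEq.add_left_cancel' q h1
  exact (Nat.modEq_zero_iff_dvd).mp h2

lemma even_iter_self {m q : ℕ} (h : IsC m q) (j : ℕ) (hj : j < m - 1)
    (he : (gg m)^[2*j] q = q) : j = 0 := by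
  have hm := isC_m2 h
  rw [iter2 h j] at he
  have hdvd : (m*m-1) ∣ j*(m+1) := mod_cancel_dvd h.1 he
  rw [← sq_ident4 (by omega : 1 ≤ m)] at hdvd
  have : (m-1) ∣ j := (Nat.mul_dvd_mul_iff_right (by omega : 0 < m+1)).mp hdvd
  rcases Nat.eq_zero_or_pos j with h0 | h0
  · exact h0
  · exact absurd (Nat.le_of_dvd h0 this) (by omega)

lemma reach_same_class {m q q' : ℕ} (h : IsC m q) (h' : IsC m q')
    (hcl : q % (m+1) = q' % (m+1)) : ∃ j, (gg m)^[2*j] q = q' := by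
  have hm := isC_m2 h
  set M := m*m - 1 with hM
  have hqM : q < M := h.1
  have hq'M : q' < M := h'.1
  have hMdvd : (m+1) ∣ M := ⟨m-1, by rw [hM, ← sq_ident4 (by omega : 1 ≤ m)]; ring⟩
  have hle : q ≤ q' + M := by omega
  have hmodeq : q ≡ q' + M [MOD m+1] := by
    unfold Nat.ModEq
    obtain ⟨c, hc⟩ := hMdvd
    rw [hc, show q' + (m+1)*c = q' + c*(m+1) by ring, Nat.add_mul_mod_self_right]
    exact hcl
  have hdvd : (m+1) ∣ (q' + M - q) := (Nat.modEq_iff_dvd' hle).mp hmodeq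
  refine ⟨(q' + M - q) / (m+1), ?_⟩
  rw [iter2 h]
  rw [Nat.div_mul_cancel hdvd]
  rw [show q + (q' + M - q) = q' + M by omega, Nat.add_mod_right, Nat.mod_eq_of_lt hq'M]

lemma isC_chain {m q : ℕ} (h : IsC m q) : ∀ n, IsC m ((gg m)^[n] q) := by
  intro n
  induction n with
  | zero => exact h
  | succ n ih => rw [Function.iterate_succ_apply']; exact isC_gg ih

lemma class_iter {m q : ℕ} (h : IsC m q) (j : ℕ) :
    ((gg m)^[j] q) % (m+1) = if Even j then q % (m+1) else m + 2 - q % (m+1) := by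
  have hm := isC_m2 h
  have hu : q % (m+1) < m + 1 := Nat.mod_lt _ (by omega)
  induction j with
  | zero => simp
  | succ j ih =>
    rw [Function.iterate_succ_apply']
    have hC := isC_chain h j
    rcases Nat.even_or_odd j with hj | hj
    · rw [if_pos hj] at ih
      rw [gg_mod_class (by omega : 1 ≤ m) ih h.2]
      have : ¬ Even (j+1) := by simp [Nat.even_add_one, hj]
      rw [if_neg this]
    · have hj' : ¬ Even j := by simp [Nat.not_even_iff_odd.mpr hj]
      rw [if_neg hj'] at ih
      have h2' : 2 ≤ m + 2 - q % (m+1) := by omega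
      rw [gg_mod_class (by omega : 1 ≤ m) ih h2']
      have : Even (j+1) := by simp [Nat.even_add_one, hj']
      rw [if_pos this]
      omega

lemma iter_cancel {m : ℕ} (i : ℕ) {X Y : ℕ} (hX : IsC m X) (hY : IsC m Y)
    (he : (gg m)^[i] X = (gg m)^[i] Y) : X = Y := by
  induction i with
  | zero => exact he
  | succ i ih =>
    rw [Function.iterate_succ_apply', Function.iterate_succ_apply'] at he
    exact ih (gg_inj (isC_lt (isC_chain hX i)) (isC_lt (isC_chain hY i)) he)

lemma class_card {m u : ℕ} (hm : 2 ≤ m) (hu : u < m + 1) :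
    ((Finset.range (m*m-1)).filter (fun x => x % (m+1) = u)).card = m - 1 := by
  have hid := sq_ident4 (by omega : 1 ≤ m)
  have hset : (Finset.range (m*m-1)).filter (fun x => x % (m+1) = u)
      = (Finset.range (m-1)).image (fun y => y*(m+1) + u) := by
    ext x
    simp only [Finset.mem_filter, Finset.mem_range, Finset.mem_image]
    constructor
    · rintro ⟨hx, hmod⟩
      refine ⟨x / (m+1), ?_, ?_⟩
      · rw [Nat.div_lt_iff_lt_mul (by omega : 0 < m+1)]
        omega
      · rw [mul_comm, ← hmod]
        exact Nat.div_add_mod x (m+1)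
    · rintro ⟨y, hy, rfl⟩
      constructor
      · have hstep : (m-2)*(m+1) + (m+1) = (m-1)*(m+1) := by
          have h21 : m - 2 + 1 = m - 1 := by omega
          calc (m-2)*(m+1) + (m+1) = (m-2+1)*(m+1) := by ring
            _ = (m-1)*(m+1) := by rw [h21]
        have : y*(m+1) ≤ (m-2)*(m+1) := Nat.mul_le_mul_right _ (by omega)
        omega
      · exact mod_decomp y u hu
  rw [hset, Finset.card_image_of_injective _ (fun a b hab => by
    have := Nat.eq_of_mul_eq_mul_right (by omega : 0 < m+1) (by omega : a*(m+1) = b*(m+1))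
    exact this), Finset.card_range]

lemma odd_period {m q : ℕ} (h : IsC m q) (hfix : 2 * (q % (m+1)) = m + 2) :
    ∃ t, Odd t ∧ 0 < t ∧ (gg m)^[t] q = q ∧
      (∀ i, 0 < i → i < t → (gg m)^[i] q ≠ q) := by
  classical
  have hm := isC_m2 h
  have hex : ∃ L, 0 < L ∧ (gg m)^[L] q = q := ⟨2*(m-1), by omega, gg_period h⟩
  set t := Nat.find hex with ht
  obtain ⟨htpos, htq⟩ := Nat.find_spec hex
  rw [← ht] at htpos htq
  have hmin : ∀ i, 0 < i → i < t → (gg m)^[i] q ≠ q := by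
    intro i hi hit hne
    exact Nat.find_min hex hit ⟨hi, hne⟩
  have htle : t ≤ 2*(m-1) := Nat.find_le ⟨by omega, gg_period h⟩
  refine ⟨t, ?_, htpos, htq, hmin⟩
  rcases Nat.even_or_odd t with hev | hodd
  · exfalso
    obtain ⟨t', ht'⟩ := hev
    have ht2 : t = 2*t' := by omega
    rw [ht2, iter2 h t'] at htq
    have hdvd : (m*m-1) ∣ t'*(m+1) := mod_cancel_dvd h.1 htq
    rw [← sq_ident4 (by omega : 1 ≤ m)] at hdvd
    have hd : (m-1) ∣ t' := (Nat.mul_dvd_mul_iff_right (by omega : 0 < m+1)).mp hdvd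
    have ht'pos : 0 < t' := by omega
    have ht'ge : m - 1 ≤ t' := Nat.le_of_dvd ht'pos hd
    have hteq : t = 2*(m-1) := by omega
    -- orbit has t distinct elements in a class of size m-1
    set u := q % (m+1) with hu
    have hallu : ∀ j, ((gg m)^[j] q) % (m+1) = u := by
      intro j
      have := class_iter h j
      rcases Nat.even_or_odd j with hj | hj
      · rw [if_pos hj] at this; exact this
      · rw [if_neg (by simp [Nat.not_even_iff_odd.mpr hj])] at this; omega
    have hOsub : (Finset.range t).image (fun i => (gg m)^[i] q)
        ⊆ (Finset.range (m*m-1)).filter (fun x => x % (m+1) = u) := by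
      intro x hx
      simp only [Finset.mem_image, Finset.mem_range] at hx
      obtain ⟨i, hi, rfl⟩ := hx
      simp only [Finset.mem_filter, Finset.mem_range]
      exact ⟨(isC_chain h i).1, hallu i⟩
    have hOcard : ((Finset.range t).image (fun i => (gg m)^[i] q)).card = t := by
      rw [Finset.card_image_of_injOn, Finset.card_range]
      intro i hi j hj hij
      simp only [Finset.coe_range, Set.mem_Iio] at hi hj
      by_contra hne
      rcases Nat.lt_or_ge i j with hlt | hge
      · have : (gg m)^[i] ((gg m)^[j-i] q) = (gg m)^[i] q := by
          rw [← Function.iterate_add_apply, show i + (j-i) = j by omega]; exact hij.symm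
        have := iter_cancel i (isC_chain h (j-i)) h this
        exact hmin (j-i) (by omega) (by omega) this
      · have hlt : j < i := by omega
        have : (gg m)^[j] ((gg m)^[i-j] q) = (gg m)^[j] q := by
          rw [← Function.iterate_add_apply, show j + (i-j) = i by omega]; exact hij
        have := iter_cancel j (isC_chain h (i-j)) h this
        exact hmin (i-j) (by omega) (by omega) this
    have hcard := Finset.card_le_card hOsub
    rw [hOcard, class_card hm (by omega : u < m+1)] at hcard
    omega
  · exact hodd

/- ### pair dynamics -/

lemma ffn_iter {m p : ℕ} (v : ℕ × ℕ) (hv : v.2 ≤ p - 2) (j : ℕ) :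
    (ffn m p)^[j] v = ((gg m)^[j] v.1, if Even j then v.2 else p - 2 - v.2) := by
  induction j with
  | zero => simp
  | succ j ih =>
    rw [Function.iterate_succ_apply', Function.iterate_succ_apply', ih]
    unfold ffn
    rcases Nat.even_or_odd j with hj | hj
    · rw [if_pos hj, if_neg (by simp [Nat.even_add_one, hj])]
    · have hj' : ¬ Even j := Nat.not_even_iff_odd.mpr hj
      rw [if_neg hj', if_pos (by simp [Nat.even_add_one, hj'])]
      simp only
      congr 1
      omega

/- ### terminating classes escape -/

lemma term_aux {m k s : ℕ} (hk : k < m) (hs : s < m) (hcl : (k*m+s) % (m+1) < 2) :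
    k ≤ s := by
  by_contra hc
  push_neg at hc
  obtain ⟨k', rfl⟩ : ∃ k', k = k' + 1 := ⟨k-1, by omega⟩
  have e2 : k'*(m+1) = k'*m + k' := by ring
  have e : (k'+1)*m + s = k'*(m+1) + (m + s - k') := by
    have e3 : (k'+1)*m = k'*m + m := by ring
    omega
  rw [e, mod_decomp k' (m+s-k') (by omega)] at hcl
  omega

lemma term_step {m q : ℕ} (hm : 1 ≤ m) (hq : q < m*m) (hcl : q % (m+1) < 2) :
    q < gg m q := by
  obtain ⟨hkm, hsm⟩ := decomp_lt hq
  have hd := self_decomp m q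
  have hks : q / m ≤ q % m := by
    apply term_aux hkm hsm
    rw [← hd]; exact hcl
  unfold gg
  set k := q / m
  set s := q % m
  have h1 : s - k ≤ (s-k)*m := Nat.le_mul_of_pos_right _ (by omega)
  have h2 : s*m = k*m + (s-k)*m := by
    have : (k + (s-k))*m = k*m + (s-k)*m := by ring
    rw [← this]
    congr 1
    omega
  omega

lemma no_escape {m q : ℕ} (hm : 1 ≤ m) (hall : ∀ j, (gg m)^[j] q < m*m) :
    2 ≤ q % (m+1) := by
  by_contra hc
  push_neg at hc
  have key : ∀ j, q + j ≤ (gg m)^[j] q ∧ ((gg m)^[j] q) % (m+1) < 2 := by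
    intro j
    induction j with
    | zero => exact ⟨by simp, hc⟩
    | succ j ih =>
      rw [Function.iterate_succ_apply']
      obtain ⟨ih1, ih2⟩ := ih
      have hlt := hall j
      constructor
      · have := term_step hm hlt ih2
        omega
      · rcases Nat.lt_or_ge (((gg m)^[j] q) % (m+1)) 1 with h0 | h0
        · rw [gg_mod_class0 hm (by omega)]; omega
        · rw [gg_mod_class1 hm (by omega)]; omega
  have := (key (m*m)).1
  have := hall (m*m)
  omega

lemma periodic_isC {m q : ℕ} (hm : 1 ≤ m) (hall : ∀ j, (gg m)^[j] q < m*m) :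
    IsC m q := by
  have h2 := no_escape hm hall
  have h0 := hall 0
  simp only [Function.iterate_zero, id_eq] at h0
  constructor
  · rcases Nat.lt_or_ge q (m*m-1) with h | h
    · exact h
    · exfalso
      have hq : q = m*m - 1 := by omega
      have : q % (m+1) = 0 := by
        rw [hq, ← sq_ident4 hm]
        exact Nat.mul_mod_left _ _
      omega
  · exact h2

/- ### general independence lemma -/

lemma two_ne_zero_of_ringChar {F : Type*} [Field F] (h : ringChar F ≠ 2) : (2:F) ≠ 0 :=
  Ring.two_ne_zero h

lemma indep_general {F : Type*} [Field F] (K : Finset (ℕ × ℕ)) (f : ℕ × ℕ → ℕ × ℕ)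
    (ι : ℕ × ℕ → ℕ)
    (hι : Set.InjOn ι (↑K ∪ ↑(K.image f)))
    (hf : Set.InjOn f ↑K)
    (hcrit : ∀ v ∈ K, (∀ j, f^[j] v ∈ K) → ∃ L, Odd L ∧ f^[L] v = v ∧ (2:F) ≠ 0) :
    LinearIndependent F (fun v : {x // x ∈ K} =>
      (X : Polynomial F) ^ (ι (f v.1)) + X ^ (ι v.1)) := by
  classical
  rw [Fintype.linearIndependent_iff]
  intro c hc
  set cc : ℕ × ℕ → F := fun w => if h : w ∈ K then c ⟨w, h⟩ else 0 with hcc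
  have memim : ∀ w ∈ K, f w ∈ (↑K ∪ ↑(K.image f) : Set (ℕ × ℕ)) := fun w hw =>
    Or.inr (Finset.mem_coe.mpr (Finset.mem_image_of_mem f hw))
  -- coefficient equations
  have key : ∀ w ∈ K, cc w + cc (f w) = 0 := by
    intro w hw
    have hco := congrArg (fun P => Polynomial.coeff P (ι (f w))) hc
    simp only [Polynomial.coeff_zero] at hco
    rw [Polynomial.finset_sum_coeff] at hco
    simp only [Polynomial.coeff_smul, Polynomial.coeff_add, Polynomial.coeff_X_pow,
      smul_eq_mul] at hco
    rw [Finset.sum_congr rfl (fun i _ => mul_add (c i) _ _), Finset.sum_add_distrib] at hco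
    have e1 : ∑ i : {x // x ∈ K}, c i * (if ι (f w) = ι (f i.1) then (1:F) else 0)
        = c ⟨w, hw⟩ := by
      rw [Finset.sum_eq_single (⟨w, hw⟩ : {x // x ∈ K})]
      · simp
      · intro b _ hb
        rw [if_neg, mul_zero]
        intro he
        apply hb
        exact Subtype.ext (hf b.2 hw (hι (memim b.1 b.2) (memim w hw) he.symm))
      · intro h; exact absurd (Finset.mem_univ _) h
    have e2 : ∑ i : {x // x ∈ K}, c i * (if ι (f w) = ι i.1 then (1:F) else 0)
        = cc (f w) := by
      by_cases hfw : f w ∈ K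
      · rw [Finset.sum_eq_single (⟨f w, hfw⟩ : {x // x ∈ K})]
        · simp [hcc, hfw]
        · intro b _ hb
          rw [if_neg, mul_zero]
          intro he
          apply hb
          exact Subtype.ext (hι (Or.inl b.2) (memim w hw) he.symm)
        · intro h; exact absurd (Finset.mem_univ _) h
      · have hc0 : cc (f w) = 0 := by simp [hcc, hfw]
        rw [hc0]
        apply Finset.sum_eq_zero
        intro b _
        rw [if_neg, mul_zero]
        intro he
        apply hfw
        have hb : b.1 ∈ K := b.2
        rwa [hι (Or.inl b.2) (memim w hw) he.symm] at hb
    rw [e1, e2] at hco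
    have hcw : cc w = c ⟨w, hw⟩ := by simp [hcc, hw]
    rw [hcw]
    exact hco
  -- propagation
  have prop : ∀ w, w ∈ K → cc w ≠ 0 → f w ∈ K ∧ cc (f w) = - cc w := by
    intro w hw hne
    have hk := key w hw
    by_cases hfw : f w ∈ K
    · exact ⟨hfw, eq_neg_of_add_eq_zero_right hk⟩
    · exfalso
      have h0 : cc (f w) = 0 := by simp [hcc, hfw]
      rw [h0, add_zero] at hk
      exact hne hk
  -- iterates
  have iter : ∀ v, v ∈ K → cc v ≠ 0 →
      ∀ j, f^[j] v ∈ K ∧ cc (f^[j] v) = (-1:F)^j * cc v := by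
    intro v hv hne j
    induction j with
    | zero => exact ⟨by simpa using hv, by simp⟩
    | succ j ih =>
      obtain ⟨ih1, ih2⟩ := ih
      have hne2 : cc (f^[j] v) ≠ 0 := by
        rw [ih2]
        exact mul_ne_zero (pow_ne_zero j (by norm_num)) hne
      obtain ⟨h1, h2⟩ := prop _ ih1 hne2
      rw [Function.iterate_succ_apply']
      refine ⟨h1, ?_⟩
      rw [h2, ih2, pow_succ]
      ring
  -- conclude
  intro i
  by_contra hne
  have hcv : cc i.1 ≠ 0 := by simpa [hcc, i.2] using hne
  have hall : ∀ j, f^[j] i.1 ∈ K := fun j => (iter i.1 i.2 hcv j).1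
  obtain ⟨L, hL, hfL, h2F⟩ := hcrit i.1 i.2 hall
  have hrel := (iter i.1 i.2 hcv L).2
  rw [hfL, Odd.neg_one_pow hL] at hrel
  have h20 : (2:F) * cc i.1 = 0 := by
    rw [two_mul]
    nth_rewrite 2 [hrel]
    ring
  rcases mul_eq_zero.mp h20 with h | h
  · exact h2F h
  · exact hcv h

/- ### membership lemmas -/

lemma mem_Dfin {m p : ℕ} {v : ℕ × ℕ} : v ∈ Dfin m p ↔ v.1 < m*m ∧ v.2 < p-1 := by
  simp [Dfin, Finset.mem_product]

lemma mem_evenReps {m u : ℕ} : u ∈ evenReps m ↔ 2 ≤ u ∧ u < m+1 ∧ 2*u < m+2 := by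
  simp only [evenReps, Finset.mem_filter, Finset.mem_Ico]
  try tauto

lemma mem_oddReps {m u : ℕ} : u ∈ oddReps m ↔ 2 ≤ u ∧ u < m+1 ∧ 2*u = m+2 := by
  simp only [oddReps, Finset.mem_filter, Finset.mem_Ico]
  try tauto

lemma mem_oddRs {p : ℕ} {d2 : Bool} {r : ℕ} :
    r ∈ oddRs p d2 ↔ r < p-1 ∧ 2*r+2 ≤ p ∧ (d2 = true ∨ 2*r+2 ≠ p) := by
  simp only [oddRs, Finset.mem_filter, Finset.mem_range]
  try tauto

lemma mem_Rfin {m p : ℕ} {d2 : Bool} {v : ℕ × ℕ} : v ∈ Rfin m p d2 ↔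
    (v.1 ∈ evenReps m ∧ v.2 < p-1) ∨ (v.1 ∈ oddReps m ∧ v.2 ∈ oddRs p d2) := by
  simp [Rfin, Finset.mem_union, Finset.mem_product]

lemma isC_small {m u : ℕ} (hm : 2 ≤ m) (h2 : 2 ≤ u) (hu : u ≤ m) : IsC m u := by
  have h2m : 2*m ≤ m*m := Nat.mul_le_mul_right m hm
  constructor
  · omega
  · rw [Nat.mod_eq_of_lt (by omega)]; exact h2

/- ### injectivity instantiations -/

lemma iv_injOn {p : ℕ} : Set.InjOn (iv p) {v : ℕ × ℕ | v.2 < p} := by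
  intro a ha b hb he
  simp only [Set.mem_setOf_eq] at ha hb
  unfold iv at he
  have e1 : a.1 = b.1 := by
    have d1 : (a.1 * p + a.2) / p = a.1 := div_decomp a.1 a.2 ha
    have d2 : (b.1 * p + b.2) / p = b.1 := div_decomp b.1 b.2 hb
    rw [← d1, ← d2, he]
  have e2 : a.2 = b.2 := by
    have d1 : (a.1 * p + a.2) % p = a.2 := mod_decomp a.1 a.2 ha
    have d2 : (b.1 * p + b.2) % p = b.2 := mod_decomp b.1 b.2 hb
    rw [← d1, ← d2, he]
  exact Prod.ext e1 e2

lemma ffn_injOn {m p : ℕ} : Set.InjOn (ffn m p) (Dfin m p) := by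
  intro a ha b hb he
  rw [Finset.mem_coe, mem_Dfin] at ha hb
  unfold ffn at he
  have h1 : gg m a.1 = gg m b.1 := congrArg Prod.fst he
  have h2 : p - 2 - a.2 = p - 2 - b.2 := congrArg Prod.snd he
  exact Prod.ext (gg_inj ha.1 hb.1 h1) (by omega)

/- ### criticality -/

lemma hcrit_main {F : Type*} [Field F] {m p : ℕ} (hm : 1 ≤ m) (d2 : Bool)
    (hd2 : d2 = false → (2:F) ≠ 0) :
    ∀ v ∈ Kfin m p d2, (∀ j, (ffn m p)^[j] v ∈ Kfin m p d2) →
      ∃ L, Odd L ∧ (ffn m p)^[L] v = v ∧ (2:F) ≠ 0 := by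
  intro v hv hall
  have hvD : v ∈ Dfin m p := (Finset.mem_sdiff.mp hv).1
  rw [mem_Dfin] at hvD
  obtain ⟨hv1, hv2⟩ := hvD
  have hp2 : 2 ≤ p := by omega
  have hv2' : v.2 ≤ p - 2 := by omega
  have hDall : ∀ j, (ffn m p)^[j] v ∈ Dfin m p := fun j => (Finset.mem_sdiff.mp (hall j)).1
  have hnotR : ∀ j, (ffn m p)^[j] v ∉ Rfin m p d2 := fun j => (Finset.mem_sdiff.mp (hall j)).2
  have hq_all : ∀ j, (gg m)^[j] v.1 < m*m := by
    intro j
    have := (mem_Dfin.mp (hDall j)).1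
    rwa [ffn_iter v hv2' j] at this
  have hC : IsC m v.1 := periodic_isC hm hq_all
  have hm2 : 2 ≤ m := isC_m2 hC
  set u := v.1 % (m+1) with hu
  have hu2 : 2 ≤ u := hC.2
  have hum : u < m + 1 := Nat.mod_lt _ (by omega)
  rcases Nat.lt_trichotomy (2*u) (m+2) with hcase | hcase | hcase
  · -- u itself is an even-type representative : reach it, contradiction
    exfalso
    have hCu : IsC m u := isC_small hm2 hu2 (by omega)
    obtain ⟨j, hj⟩ := reach_same_class hC hCu (by rw [Nat.mod_eq_of_lt hum])
    apply hnotR (2*j)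
    rw [ffn_iter v hv2' (2*j), if_pos (even_two_mul j), hj]
    rw [mem_Rfin]
    exact Or.inl ⟨mem_evenReps.mpr ⟨hu2, hum, hcase⟩, hv2⟩
  · -- odd-type class
    have hCu : IsC m u := isC_small hm2 hu2 (by omega)
    obtain ⟨j, hj⟩ := reach_same_class hC hCu (by rw [Nat.mod_eq_of_lt hum])
    have hw : (ffn m p)^[2*j] v = (u, v.2) := by
      rw [ffn_iter v hv2' (2*j), if_pos (even_two_mul j), hj]
    have huodd : u ∈ oddReps m := mem_oddReps.mpr ⟨hu2, hum, hcase⟩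
    by_cases hA : v.2 ∈ oddRs p d2
    · exact absurd (by rw [hw, mem_Rfin]; exact Or.inr ⟨huodd, hA⟩) (hnotR (2*j))
    · by_cases hB : (p - 2 - v.2) ∈ oddRs p d2
      · exfalso
        obtain ⟨t, htodd, htpos, htq, _⟩ := odd_period hCu (by rw [Nat.mod_eq_of_lt hum]; omega)
        apply hnotR (t + 2*j)
        rw [Function.iterate_add_apply, hw]
        rw [ffn_iter (u, v.2) (by simpa using hv2') t,
          if_neg (Nat.not_even_iff_odd.mpr htodd)]
        simp only [htq]
        rw [mem_Rfin]
        exact Or.inr ⟨huodd, hB⟩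
      · -- neither : forced 2*v.2+2 = p and d2 = false
        rw [mem_oddRs] at hA hB
        have hflip : p - 2 - v.2 < p - 1 := by omega
        have hd2f : d2 = false := by
          cases d2
          · rfl
          · exfalso
            simp only [eq_self_iff_true, true_or, and_true] at hA hB
            push_neg at hA hB
            omega
        subst hd2f
        simp only [Bool.false_eq_true, false_or] at hA hB
        push_neg at hA hB
        have hveq : 2*v.2 + 2 = p := by
          rcases Nat.lt_or_ge (2*v.2+2) p with h | h
          · exact absurd (hA hv2 (by omega)) (by omega)
          · rcases Nat.eq_or_lt_of_le h with h' | h'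
            · omega
            · have := hB hflip (by omega)
              omega
        obtain ⟨t, htodd, htpos, htq, _⟩ := odd_period hC (by omega)
        refine ⟨t, htodd, ?_, hd2 rfl⟩
        rw [ffn_iter v hv2' t, if_neg (Nat.not_even_iff_odd.mpr htodd), htq]
        have : p - 2 - v.2 = v.2 := by omega
        rw [this]
  · -- partner class is an even-type representative
    exfalso
    have hgC : IsC m (gg m v.1) := isC_gg hC
    have hgcl : gg m v.1 % (m+1) = m + 2 - u := gg_mod_class (by omega) rfl hu2
    set u' := m + 2 - u with hu'
    have hu'2 : 2 ≤ u' := by omega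
    have hu'm : u' < m + 1 := by omega
    have hCu' : IsC m u' := isC_small hm2 hu'2 (by omega)
    obtain ⟨j, hj⟩ := reach_same_class hgC hCu' (by rw [hgcl, Nat.mod_eq_of_lt hu'm])
    apply hnotR (2*j + 1)
    have hit : (gg m)^[2*j+1] v.1 = u' := by
      rw [Function.iterate_succ_apply]
      exact hj
    rw [ffn_iter v hv2' (2*j+1), if_neg (by simp [Nat.even_add_one]), hit]
    rw [mem_Rfin]
    refine Or.inl ⟨mem_evenReps.mpr ⟨hu'2, hu'm, by omega⟩, by omega⟩

/- ### spanning -/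

noncomputable def Ed (F : Type*) [Field F] (m p : ℕ) (v : ℕ × ℕ) : Polynomial F :=
  X ^ (iv p (ffn m p v)) + X ^ (iv p v)

lemma telescope (F : Type*) [Field F] (m p : ℕ) (v : ℕ × ℕ) (L : ℕ) :
    ∑ j ∈ Finset.range (L+1), (-1:F)^j • Ed F m p ((ffn m p)^[j] v)
      = X ^ (iv p v) + (-1:F)^L • X ^ (iv p (ffn m p ((ffn m p)^[L] v))) := by
  induction L with
  | zero =>
    rw [Finset.sum_range_one]
    simp only [Function.iterate_zero, id_eq, pow_zero, one_smul]
    unfold Ed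
    ring
  | succ L ih =>
    rw [Finset.sum_range_succ, ih]
    have hit : (ffn m p)^[L+1] v = ffn m p ((ffn m p)^[L] v) := Function.iterate_succ_apply' _ _ _
    unfold Ed
    rw [hit]
    simp only [Polynomial.smul_eq_C_mul, pow_succ, map_mul, map_neg, map_one]
    ring

lemma span_cycle {F : Type*} [Field F] {m p : ℕ} {d2 : Bool} {v : ℕ × ℕ} (L : ℕ) (hL : 1 ≤ L)
    (hfix : (ffn m p)^[L] v = v) (hsign : (1:F) + (-1:F)^(L-1) = 0)
    (hmem : ∀ j, 1 ≤ j → j < L → (ffn m p)^[j] v ∈ Kfin m p d2) :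
    Ed F m p v ∈ Submodule.span F (Ed F m p '' ↑(Kfin m p d2)) := by
  obtain ⟨L', rfl⟩ : ∃ L', L = L' + 1 := ⟨L-1, by omega⟩
  have htel := telescope F m p v L'
  rw [show (ffn m p ((ffn m p)^[L'] v)) = v by
    rw [← Function.iterate_succ_apply' (ffn m p) L' v]; exact hfix] at htel
  have hzero : ∑ j ∈ Finset.range (L'+1), (-1:F)^j • Ed F m p ((ffn m p)^[j] v) = 0 := by
    rw [htel, ← one_smul F ((X : Polynomial F) ^ (iv p v)), smul_smul, ← add_smul]
    simp only [mul_one]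
    rw [show (1:F) + (-1:F)^L' = 0 from by simpa using hsign, zero_smul]
  rw [Finset.sum_range_succ'] at hzero
  simp only [Function.iterate_zero, id_eq, pow_zero, one_smul] at hzero
  have hEd : Ed F m p v = - ∑ i ∈ Finset.range L', (-1:F)^(i+1) • Ed F m p ((ffn m p)^[i+1] v) := by
    rw [eq_neg_iff_add_eq_zero, add_comm]
    exact hzero
  rw [hEd]
  apply neg_mem
  apply Submodule.sum_mem
  intro i hi
  rw [Finset.mem_range] at hi
  apply Submodule.smul_mem
  apply Submodule.subset_span
  exact Set.mem_image_of_mem _ (Finset.mem_coe.mpr (hmem (i+1) (by omega) (by omega)))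

lemma span_rep {F : Type*} [Field F] {m p : ℕ} {d2 : Bool}
    (hd2' : d2 = true → (2:F) = 0) {v : ℕ × ℕ}
    (hvD : v ∈ Dfin m p) (hvR : v ∈ Rfin m p d2) :
    Ed F m p v ∈ Submodule.span F (Ed F m p '' ↑(Kfin m p d2)) := by
  obtain ⟨q, r⟩ := v
  rw [mem_Dfin] at hvD
  obtain ⟨hv1, hv2⟩ := hvD
  simp only at hv1 hv2
  have hp2 : 2 ≤ p := by omega
  have hv2' : r ≤ p - 2 := by omega
  rw [mem_Rfin] at hvR
  simp only at hvR
  have hiter : ∀ j, (ffn m p)^[j] (q, r)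
      = ((gg m)^[j] q, if Even j then r else p - 2 - r) :=
    fun j => ffn_iter (m := m) (q, r) (by simpa using hv2') j
  rcases hvR with ⟨hu, hr⟩ | ⟨hu, hr⟩
  · -- even-type representative
    rw [mem_evenReps] at hu
    obtain ⟨hu2, hum, hueven⟩ := hu
    have hm3 : 3 ≤ m := by omega
    have hCu : IsC m q := isC_small (by omega) hu2 (by omega)
    apply span_cycle (2*(m-1)) (by omega)
    · rw [hiter, if_pos (even_two_mul _), gg_period hCu]
    · rw [show 2*(m-1)-1 = 2*(m-2)+1 by omega, Odd.neg_one_pow ⟨m-2, by omega⟩]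
      ring
    · intro j hj1 hjL
      apply Finset.mem_sdiff.mpr
      have hCx := isC_chain hCu j
      have hclx := class_iter hCu j
      rw [Nat.mod_eq_of_lt hum] at hclx
      constructor
      · rw [mem_Dfin, hiter]
        refine ⟨by have := hCx.1; omega, ?_⟩
        rcases Nat.even_or_odd j with hj | hj
        · rw [if_pos hj]; simpa using hv2
        · rw [if_neg (Nat.not_even_iff_odd.mpr hj)]; simp; omega
      · intro hR
        rw [hiter, mem_Rfin] at hR
        simp only at hR
        rcases hR with ⟨hx, _⟩ | ⟨hx, _⟩
        · rw [mem_evenReps] at hx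
          obtain ⟨hx2, hxm, hxe⟩ := hx
          have hxval : ((gg m)^[j] q) % (m+1) = (gg m)^[j] q := Nat.mod_eq_of_lt hxm
          rcases Nat.even_or_odd j with hj | hj
          · rw [if_pos hj] at hclx
            obtain ⟨j', rfl⟩ := hj
            rw [← two_mul] at hclx hxval hjL hj1
            have : j' = 0 := even_iter_self hCu j' (by omega) (by omega)
            omega
          · rw [if_neg (Nat.not_even_iff_odd.mpr hj)] at hclx
            omega
        · rw [mem_oddReps] at hx
          obtain ⟨hx2, hxm, hxe⟩ := hx
          have hxval : ((gg m)^[j] q) % (m+1) = (gg m)^[j] q := Nat.mod_eq_of_lt hxm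
          rcases Nat.even_or_odd j with hj | hj
          · rw [if_pos hj] at hclx; omega
          · rw [if_neg (Nat.not_even_iff_odd.mpr hj)] at hclx; omega
  · -- odd-type representative
    rw [mem_oddReps] at hu
    obtain ⟨hu2, hum, huodd⟩ := hu
    have hm2 : 2 ≤ m := by omega
    have hCu : IsC m q := isC_small hm2 hu2 (by omega)
    rw [mem_oddRs] at hr
    obtain ⟨hrp, hrle, hror⟩ := hr
    have hclass_all : ∀ j, ((gg m)^[j] q) % (m+1) = q := by
      intro j
      have hclx := class_iter hCu j
      rw [Nat.mod_eq_of_lt hum] at hclx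
      rcases Nat.even_or_odd j with hj | hj
      · rwa [if_pos hj] at hclx
      · rw [if_neg (Nat.not_even_iff_odd.mpr hj)] at hclx; omega
    by_cases h2r : 2*r + 2 = p
    · -- odd cycle, char 2
      have hd2t : d2 = true := by
        rcases hror with h | h
        · exact h
        · omega
      have h2F : (2:F) = 0 := hd2' hd2t
      obtain ⟨t, htodd, htpos, htq, hmin⟩ := odd_period hCu (by rw [Nat.mod_eq_of_lt hum]; omega)
      apply span_cycle t htpos
      · rw [hiter, if_neg (Nat.not_even_iff_odd.mpr htodd), htq]
        have : p - 2 - r = r := by omega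
        rw [this]
      · obtain ⟨t', rfl⟩ := htodd
        rw [show 2*t'+1-1 = 2*t' from by omega, Even.neg_one_pow (even_two_mul t')]
        rw [show (1:F) + 1 = 2 from by norm_num, h2F]
      · intro j hj1 hjt
        apply Finset.mem_sdiff.mpr
        have hCx := isC_chain hCu j
        have hclx := hclass_all j
        constructor
        · rw [mem_Dfin, hiter]
          refine ⟨by have := hCx.1; omega, ?_⟩
          rcases Nat.even_or_odd j with hj | hj
          · rw [if_pos hj]; simpa using hv2
          · rw [if_neg (Nat.not_even_iff_odd.mpr hj)]; simp; omega
        · intro hR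
          rw [hiter, mem_Rfin] at hR
          simp only at hR
          rcases hR with ⟨hx, _⟩ | ⟨hx, _⟩
          · rw [mem_evenReps] at hx
            have hxval : ((gg m)^[j] q) % (m+1) = (gg m)^[j] q := Nat.mod_eq_of_lt hx.2.1
            omega
          · rw [mem_oddReps] at hx
            have hxval : ((gg m)^[j] q) % (m+1) = (gg m)^[j] q := Nat.mod_eq_of_lt hx.2.1
            exact hmin j (by omega) (by omega) (by omega)
    · -- even cycle through odd-type rep
      have h2rlt : 2*r + 2 < p := by omega
      apply span_cycle (2*(m-1)) (by omega)
      · rw [hiter, if_pos (even_two_mul _), gg_period hCu]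
      · rw [show 2*(m-1)-1 = 2*(m-2)+1 by omega, Odd.neg_one_pow ⟨m-2, by omega⟩]
        ring
      · intro j hj1 hjL
        apply Finset.mem_sdiff.mpr
        have hCx := isC_chain hCu j
        have hclx := hclass_all j
        constructor
        · rw [mem_Dfin, hiter]
          refine ⟨by have := hCx.1; omega, ?_⟩
          rcases Nat.even_or_odd j with hj | hj
          · rw [if_pos hj]; simpa using hv2
          · rw [if_neg (Nat.not_even_iff_odd.mpr hj)]; simp; omega
        · intro hR
          rw [hiter, mem_Rfin] at hR
          simp only at hR
          rcases hR with ⟨hx, _⟩ | ⟨hx, hx2⟩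
          · rw [mem_evenReps] at hx
            have hxval : ((gg m)^[j] q) % (m+1) = (gg m)^[j] q := Nat.mod_eq_of_lt hx.2.1
            omega
          · rw [mem_oddReps] at hx
            have hxval : ((gg m)^[j] q) % (m+1) = (gg m)^[j] q := Nat.mod_eq_of_lt hx.2.1
            rcases Nat.even_or_odd j with hj | hj
            · rw [if_pos hj] at hx2
              obtain ⟨j', rfl⟩ := hj
              rw [← two_mul] at hclx hxval hjL hj1
              have : j' = 0 := even_iter_self hCu j' (by omega) (by omega)
              omega
            · rw [if_neg (Nat.not_even_iff_odd.mpr hj)] at hx2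
              rw [mem_oddRs] at hx2
              omega

lemma span_DK (F : Type*) [Field F] {m p : ℕ} {d2 : Bool} (hd2' : d2 = true → (2:F) = 0) :
    Submodule.span F (Ed F m p '' ↑(Dfin m p)) = Submodule.span F (Ed F m p '' ↑(Kfin m p d2)) := by
  apply le_antisymm
  · rw [Submodule.span_le]
    rintro x ⟨w, hw, rfl⟩
    by_cases hK : w ∈ Kfin m p d2
    · exact Submodule.subset_span (Set.mem_image_of_mem _ (Finset.mem_coe.mpr hK))
    · have hwR : w ∈ Rfin m p d2 := by
        rw [Finset.mem_coe] at hw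
        by_contra hR
        exact hK (Finset.mem_sdiff.mpr ⟨hw, hR⟩)
      exact span_rep hd2' (Finset.mem_coe.mp hw) hwR
  · apply Submodule.span_mono
    apply Set.image_mono
    intro w hw
    rw [Finset.mem_coe] at hw ⊢
    exact (Finset.mem_sdiff.mp hw).1

/- ### counting -/

lemma card_Dfin (m p : ℕ) : (Dfin m p).card = m*m * (p-1) := by
  simp [Dfin]

lemma card_evenReps (m : ℕ) : (evenReps m).card = (m+3)/2 - 2 := by
  have hset : evenReps m = Finset.Ico 2 ((m+3)/2) := by
    ext u
    rw [mem_evenReps, Finset.mem_Ico]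
    omega
  rw [hset, Nat.card_Ico]

lemma card_oddReps (m : ℕ) (hm : 1 ≤ m) : (oddReps m).card = if 2 ∣ m then 1 else 0 := by
  by_cases h : 2 ∣ m
  · rw [if_pos h]
    have hset : oddReps m = {m/2 + 1} := by
      ext u
      rw [mem_oddReps, Finset.mem_singleton]
      constructor
      · intro hu; omega
      · intro hu
        refine ⟨by omega, by omega, by omega⟩
    rw [hset, Finset.card_singleton]
  · rw [if_neg h]
    have hset : oddReps m = ∅ := Finset.eq_empty_of_forall_notMem (fun u hu => by
      rw [mem_oddReps] at hu; omega)
    rw [hset, Finset.card_empty]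

lemma card_oddRs (p : ℕ) (d2 : Bool) :
    (oddRs p d2).card = if d2 = true then p/2 else (p-1)/2 := by
  cases d2
  · have hset : oddRs p false = Finset.range ((p-1)/2) := by
      ext r
      rw [mem_oddRs, Finset.mem_range]
      simp only [Bool.false_eq_true, false_or]
      omega
    simp [hset]
  · have hset : oddRs p true = Finset.range (p/2) := by
      ext r
      rw [mem_oddRs, Finset.mem_range]
      simp only [eq_self_iff_true, true_or, and_true]
      omega
    simp [hset]

lemma Rfin_subset (m p : ℕ) (d2 : Bool) : Rfin m p d2 ⊆ Dfin m p := by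
  intro v hv
  rw [mem_Rfin] at hv
  rw [mem_Dfin]
  rcases hv with ⟨hu, hr⟩ | ⟨hu, hr⟩
  · rw [mem_evenReps] at hu
    have hm3 : 3 ≤ m := by omega
    have : m*2 ≤ m*m := Nat.mul_le_mul_left m (by omega)
    exact ⟨by omega, hr⟩
  · rw [mem_oddReps] at hu
    rw [mem_oddRs] at hr
    have hm2 : 2 ≤ m := by omega
    have : m*2 ≤ m*m := Nat.mul_le_mul_left m (by omega)
    exact ⟨by omega, hr.1⟩

lemma card_Rfin (m p : ℕ) (hm : 1 ≤ m) (d2 : Bool) :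
    (Rfin m p d2).card = ((m+3)/2 - 2) * (p-1)
      + (if 2 ∣ m then 1 else 0) * (if d2 = true then p/2 else (p-1)/2) := by
  unfold Rfin
  rw [Finset.card_union_of_disjoint, Finset.card_product, Finset.card_product,
    Finset.card_range, card_evenReps, card_oddReps m hm, card_oddRs]
  rw [Finset.disjoint_left]
  intro v hv hv2
  rw [Finset.mem_product] at hv hv2
  have h1 := mem_evenReps.mp hv.1
  have h2 := mem_oddReps.mp hv2.1
  omega

lemma card_Kfin (m p : ℕ) (hm : 1 ≤ m) (d2 : Bool) :
    (Kfin m p d2).card = m*m * (p-1) - (((m+3)/2 - 2) * (p-1)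
      + (if 2 ∣ m then 1 else 0) * (if d2 = true then p/2 else (p-1)/2)) := by
  unfold Kfin
  rw [Finset.card_sdiff_of_subset (Rfin_subset m p d2), card_Dfin, card_Rfin m p hm d2]

/- ### identification with the statement set -/

lemma omega_set_eq (F : Type*) [Field F] (m p : ℕ) (hm : 1 ≤ m) :
    { q : Polynomial F | ∃ k s : Fin m, ∃ t : ℕ, 1 ≤ t ∧ t ≤ p - 1 ∧
        q = (X : Polynomial F) ^ ((s : ℕ) * (m * p) + (k : ℕ) * p + (p - 1) + t)
            + (X : Polynomial F) ^ ((k : ℕ) * (m * p) + (s : ℕ) * p + (p - 1 - t)) }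
    = Ed F m p '' ↑(Dfin m p) := by
  ext P
  simp only [Set.mem_setOf_eq, Set.mem_image, Finset.mem_coe]
  constructor
  · rintro ⟨k, s, t, ht1, ht2, rfl⟩
    have hp2 : 2 ≤ p := by omega
    have hk : (k:ℕ) < m := k.isLt
    have hs : (s:ℕ) < m := s.isLt
    refine ⟨((k:ℕ)*m + (s:ℕ), p-1-t), ?_, ?_⟩
    · rw [mem_Dfin]
      have h1 : (k:ℕ)*m ≤ (m-1)*m := Nat.mul_le_mul_right m (by omega)
      have h2 := sq_ident1 hm
      exact ⟨by omega, by omega⟩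
    · unfold Ed ffn iv
      simp only
      rw [gg_eq (k:ℕ) (s:ℕ) hs]
      have hA : ((s:ℕ)*m + (k:ℕ) + 1)*p = (s:ℕ)*(m*p) + (k:ℕ)*p + p := by ring
      have hB : ((k:ℕ)*m + (s:ℕ))*p = (k:ℕ)*(m*p) + (s:ℕ)*p := by ring
      congr 2
      · omega
      · omega
  · rintro ⟨⟨n, r⟩, hmem, rfl⟩
    rw [mem_Dfin] at hmem
    simp only at hmem
    obtain ⟨hn, hr⟩ := hmem
    have hp2 : 2 ≤ p := by omega
    obtain ⟨hk, hs⟩ := decomp_lt hn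
    refine ⟨⟨n/m, hk⟩, ⟨n%m, hs⟩, p-1-r, by omega, by omega, ?_⟩
    unfold Ed ffn iv gg
    simp only
    have hd := self_decomp m n
    have hA : ((n%m)*m + n/m + 1)*p = (n%m)*(m*p) + (n/m)*p + p := by ring
    have hB : ((n/m)*m + (n%m))*p = (n/m)*(m*p) + (n%m)*p := by ring
    have hB' : n*p = (n/m)*(m*p) + (n%m)*p := by rw [← hB, ← hd]
    congr 2
    · omega
    · omega

/- ### final arithmetic -/

lemma final_arith (m p : ℕ) (hm : 1 ≤ m) (hp : 1 ≤ p) (d2 : Bool) :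
    m*m * (p-1) - (((m+3)/2 - 2) * (p-1)
      + (if 2 ∣ m then 1 else 0) * (if d2 = true then p/2 else (p-1)/2))
    = (if d2 = true
        then ((p - 1) * (2 * (m*m) - m + 1) - (if 2 ∣ m then 1 else 0) * (if 2 ∣ p then 1 else 0)) / 2
        else ((p - 1) * (2 * (m*m) - m + 1) + (if 2 ∣ m then 1 else 0) * (if 2 ∣ p then 1 else 0)) / 2) := by
  rcases Nat.even_or_odd m with ⟨a, rfl⟩ | ⟨a, rfl⟩
  · -- m even
    have ha : 1 ≤ a := by omega
    obtain ⟨A, rfl⟩ := Nat.exists_eq_add_of_le ha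
    have hdm : 2 ∣ (1+A) + (1+A) := ⟨1+A, by ring⟩
    rw [if_pos hdm]
    rw [show ((1+A) + (1+A) + 3)/2 - 2 = A by omega]
    have E0 : ((1+A) + (1+A)) * ((1+A) + (1+A)) = 4*(A*A) + 8*A + 4 := by ring
    rw [E0]
    rw [show 2*(4*(A*A) + 8*A + 4) - ((1+A) + (1+A)) + 1 = 8*(A*A) + 14*A + 7 by omega]
    rcases Nat.even_or_odd p with ⟨b, rfl⟩ | ⟨b, rfl⟩
    · have hb : 1 ≤ b := by omega
      obtain ⟨B, rfl⟩ := Nat.exists_eq_add_of_le hb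
      have hdp : 2 ∣ (1+B) + (1+B) := ⟨1+B, by ring⟩
      rw [if_pos hdp]
      rw [show (1+B) + (1+B) - 1 = 2*B + 1 by omega]
      rw [show ((1+B) + (1+B))/2 = B + 1 by omega]
      rw [show (2*B+1)/2 = B by omega]
      have E1 : (4*(A*A) + 8*A + 4) * (2*B+1)
          = 8*(A*A*B) + 4*(A*A) + 16*(A*B) + 8*A + 8*B + 4 := by ring
      have E2 : A*(2*B+1) = 2*(A*B) + A := by ring
      have E3 : (2*B+1) * (8*(A*A) + 14*A + 7)
          = 16*(A*A*B) + 8*(A*A) + 28*(A*B) + 14*A + 14*B + 7 := by ring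
      have h1 : A*B ≤ A*A*B + A*B := by omega
      cases d2 <;> simp only [Bool.false_eq_true, if_false, if_true, eq_self_iff_true,
        if_pos rfl] <;> omega
    · have hdp : ¬ 2 ∣ 2*b+1 := by omega
      rw [if_neg hdp]
      rw [show 2*b + 1 - 1 = 2*b by omega]
      rw [show (2*b+1)/2 = b by omega]
      rw [show (2*b)/2 = b by omega]
      have E1 : (4*(A*A) + 8*A + 4) * (2*b) = 8*(A*A*b) + 16*(A*b) + 8*b := by ring
      have E2 : A*(2*b) = 2*(A*b) := by ring
      have E3 : (2*b) * (8*(A*A) + 14*A + 7) = 16*(A*A*b) + 28*(A*b) + 14*b := by ring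
      cases d2 <;> simp only [Bool.false_eq_true, if_false, if_true, eq_self_iff_true,
        if_pos rfl] <;> omega
  · -- m odd
    have hdm : ¬ 2 ∣ 2*a+1 := by omega
    rw [if_neg hdm]
    rw [show (2*a+1+3)/2 - 2 = a by omega]
    have E0 : (2*a+1) * (2*a+1) = 4*(a*a) + 4*a + 1 := by ring
    rw [E0]
    rw [show 2*(4*(a*a) + 4*a + 1) - (2*a+1) + 1 = 8*(a*a) + 6*a + 2 by omega]
    obtain ⟨c, rfl⟩ := Nat.exists_eq_add_of_le hp
    rw [show 1 + c - 1 = c by omega]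
    have E1 : (4*(a*a) + 4*a + 1) * c = 4*(a*a*c) + 4*(a*c) + c := by ring
    have E3 : c * (8*(a*a) + 6*a + 2) = 8*(a*a*c) + 6*(a*c) + 2*c := by ring
    cases d2 <;> simp only [Bool.false_eq_true, if_false, if_true, eq_self_iff_true,
        if_pos rfl, zero_mul, mul_zero, Nat.add_zero, Nat.sub_zero, mul_one] <;> omega

end Stmt9

open Stmt9

/-- `χ(x) = 1` if `x` is even, `0` if `x` is odd. -/
def chi (x : ℕ) : ℕ := if Even x then 1 else 0

lemma chi_eq (x : ℕ) : chi x = if 2 ∣ x then 1 else 0 := by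
  unfold chi
  by_cases h : Even x
  · rw [if_pos h, if_pos (even_iff_two_dvd.mp h)]
  · rw [if_neg h, if_neg (fun hd => h (even_iff_two_dvd.mpr hd))]

/-- The dimension over `F` of the span of
`Ω₁ = { x^{smp+kp+p-1+t} + x^{kmp+sp+p-1-t} : 0 ≤ k,s ≤ m-1, 1 ≤ t ≤ p-1 }`
equals `((p-1)(2m²-m+1) + χ(m)χ(p)(1-2δ))/2`, where `δ = 1` iff `char F = 2`
(so the formula reads `((p-1)(2m²-m+1) - χ(m)χ(p))/2` in characteristic 2 and
`((p-1)(2m²-m+1) + χ(m)χ(p))/2` otherwise). -/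
theorem stmt_9 (F : Type*) [Field F] (m p : ℕ) (hm : 1 ≤ m) (hp : 1 ≤ p) :
    Module.finrank F (Submodule.span F
      { q : Polynomial F | ∃ k s : Fin m, ∃ t : ℕ, 1 ≤ t ∧ t ≤ p - 1 ∧
          q = (X : Polynomial F) ^ ((s : ℕ) * (m * p) + (k : ℕ) * p + (p - 1) + t)
              + (X : Polynomial F) ^ ((k : ℕ) * (m * p) + (s : ℕ) * p + (p - 1 - t)) })
    = (if ringChar F = 2
        then ((p - 1) * (2 * m ^ 2 - m + 1) - chi m * chi p) / 2
        else ((p - 1) * (2 * m ^ 2 - m + 1) + chi m * chi p) / 2) := by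
  classical
  set d2 : Bool := decide (ringChar F = 2) with hd2def
  have hd2t : d2 = true → (2:F) = 0 := by
    intro h
    have hc : ringChar F = 2 := of_decide_eq_true (hd2def ▸ h)
    have h2 : ((2:ℕ):F) = 0 := by
      rw [← hc]
      exact CharP.cast_eq_zero F (ringChar F)
    exact_mod_cast h2
  have hd2f : d2 = false → (2:F) ≠ 0 := by
    intro h
    apply two_ne_zero_of_ringChar
    intro hc
    rw [hd2def, hc] at h
    simp at h
  rw [omega_set_eq F m p hm]
  rw [span_DK F hd2t (d2 := d2)]
  have hrange : Ed F m p '' ↑(Kfin m p d2) = Set.range (fun v : {x // x ∈ Kfin m p d2} =>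
      (X : Polynomial F) ^ (iv p (ffn m p v.1)) + X ^ (iv p v.1)) := by
    ext P
    constructor
    · rintro ⟨w, hw, rfl⟩
      exact ⟨⟨w, Finset.mem_coe.mp hw⟩, rfl⟩
    · rintro ⟨⟨w, hw⟩, rfl⟩
      exact ⟨w, hw, rfl⟩
  rw [hrange]
  -- independence
  have hsub : (↑(Kfin m p d2) ∪ ↑((Kfin m p d2).image (ffn m p)) : Set (ℕ × ℕ))
      ⊆ {v : ℕ × ℕ | v.2 < p} := by
    intro v hv
    rcases hv with hv | hv
    · have := (mem_Dfin.mp (Finset.mem_sdiff.mp (Finset.mem_coe.mp hv)).1).2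
      simp only [Set.mem_setOf_eq]
      omega
    · rw [Finset.mem_coe, Finset.mem_image] at hv
      obtain ⟨w, _, rfl⟩ := hv
      simp only [Set.mem_setOf_eq, ffn]
      omega
  have hKD : (↑(Kfin m p d2) : Set (ℕ × ℕ)) ⊆ ↑(Dfin m p) := by
    intro v hv
    rw [Finset.mem_coe] at hv ⊢
    exact (Finset.mem_sdiff.mp hv).1
  have hind := indep_general (F := F) (Kfin m p d2) (ffn m p) (iv p)
    (iv_injOn.mono hsub) (ffn_injOn.mono hKD) (hcrit_main hm d2 hd2f)
  rw [finrank_span_eq_card hind, Fintype.card_coe]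
  rw [card_Kfin m p hm d2]
  have harith := final_arith m p hm hp d2
  rw [chi_eq, chi_eq, pow_two]
  have hiff : (ringChar F = 2) ↔ (d2 = true) := by
    rw [hd2def]
    simp
  by_cases hcF : ringChar F = 2
  · have hd : d2 = true := hiff.mp hcF
    rw [if_pos hcF]
    rw [hd] at harith ⊢
    simp only [if_pos rfl] at harith ⊢
    exact harith
  · have hd : d2 = false := by
      cases hdd : d2
      · rfl
      · exact absurd (hiff.mpr hdd) hcF
    rw [if_neg hcF]
    rw [hd] at harith ⊢
    simp only [Bool.false_eq_true, if_false] at harith ⊢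
    exact harith
end

section
/- Let F be a field and m, p ≥ 1 integers. Consider the set of polynomials Ω_2 = { x^{smp+kp+p−1+t} − x^{kmp+sp+p−1−t} : k, s ∈ {0,...,m−1}, t ∈ {1,...,p−1} } ⊆ F[x]. Then the dimension over F of the linear span of Ω_2 equals ((p−1)(2m^2−m+1) − χ(m)·χ(p))/2, where χ(x) = 1 if x is even and 0 if x is odd. -/
/-
Write exponents as `q * p + r` with `q ≤ m²` and `r ≤ p - 2`: the generator indexed by
`(k, s, t)` is `X^a - X^b` with `a = (sm + k + 1) p + (t - 1)` and `b = (km + s) p + (p - 1 - t)`.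
Since `(sm + k + 1) + (km + s) ≡ 1 [MOD m + 1]`, both ends of a generator have the same image
under `rep`, which reduces `q` mod `m + 1` and then takes the smaller point of the orbit of the
involution `(c, r) ↦ (1 - c, p - 2 - r)`. Conversely two generators link `q p + r` with
`(q + m + 1) p + r`, and one more links `c p + r` with `(1 - c) p + (p - 2 - r)`, so every
`X^n - X^(rep n)` lies in the span. The `X^n - X^(rep n)` with `rep n ≠ n` are then a basis (each
is the only one involving `X^n`), and the dimension is `(m² + 1)(p - 1)` minus the number
`((m + 1)(p - 1) + χ(m)χ(p)) / 2` of orbits, `χ(m)χ(p)` counting the fixed points of the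
involution.
-/

open Polynomial

open Finset

theorem Nat.mul_add_div_of_lt {a b c : ℕ} (h : c < b) : (a * b + c) / b = a := by
  rw [Nat.add_comm, Nat.add_mul_div_right _ _ (by omega), Nat.div_eq_of_lt h, zero_add]

namespace Polynomial

variable {F : Type*} [Field F]

theorem linearIndependent_X_pow_sub_X_pow {D : Finset ℕ} {ρ : ℕ → ℕ}
    (hρ : ∀ n ∈ D, ρ n ∉ D) :
    LinearIndependent F fun n : D => (X ^ (n : ℕ) - X ^ ρ n : F[X]) := by
  classical
  let coeffs : F[X] →ₗ[F] D → F := LinearMap.pi fun i : D => lcoeff F i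
  refine LinearIndependent.of_comp coeffs ?_
  convert Pi.linearIndependent_single_one D F using 1
  ext j i
  have hi : (i : ℕ) ≠ ρ j := fun h => hρ j j.2 (h ▸ i.2)
  simp only [coeffs, Function.comp_apply, LinearMap.pi_apply, lcoeff_apply, coeff_sub, coeff_X_pow,
    if_neg hi, sub_zero, Pi.single_apply, Subtype.ext_iff]

theorem finrank_span_eq_card_filter_ne {Ω : Set F[X]} {V : Finset ℕ} {ρ : ℕ → ℕ}
    (hρ : ∀ n ∈ V, ρ (ρ n) = ρ n)
    (hΩ : ∀ g ∈ Ω, ∃ a ∈ V, ∃ b ∈ V, ρ a = ρ b ∧ g = X ^ a - X ^ b)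
    (hV : ∀ n ∈ V, X ^ n - X ^ ρ n ∈ Submodule.span F Ω) :
    Module.finrank F (Submodule.span F Ω) = #{n ∈ V | ρ n ≠ n} := by
  classical
  set D := {n ∈ V | ρ n ≠ n}
  let v : D → F[X] := fun n => X ^ (n : ℕ) - X ^ ρ n
  have hv : ∀ n ∈ V, X ^ n - X ^ ρ n ∈ Submodule.span F (Set.range v) := by
    intro n hn
    by_cases hfix : ρ n = n
    · simp [hfix]
    · exact Submodule.subset_span ⟨⟨n, mem_filter.2 ⟨hn, hfix⟩⟩, rfl⟩
  have hspan : Submodule.span F Ω = Submodule.span F (Set.range v) := by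
    refine le_antisymm (Submodule.span_le.2 ?_) (Submodule.span_le.2 ?_)
    · rintro _ hg
      obtain ⟨a, ha, b, hb, hab, rfl⟩ := hΩ _ hg
      have : (X ^ a - X ^ b : F[X]) = (X ^ a - X ^ ρ a) - (X ^ b - X ^ ρ b) := by
        rw [hab]; ring
      rw [SetLike.mem_coe, this]
      exact sub_mem (hv a ha) (hv b hb)
    · rintro _ ⟨n, rfl⟩
      exact hV n (mem_filter.1 n.2).1
  have hli : LinearIndependent F v := linearIndependent_X_pow_sub_X_pow fun n hn hρn =>
    (mem_filter.1 hρn).2 (hρ n (mem_filter.1 hn).1)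
  rw [hspan, finrank_span_eq_card hli, Fintype.card_coe]

end Polynomial

theorem two_mul_card_filter_le_apply {α : Type*} [LinearOrder α] {T : Finset α} {σ : α → α}
    (hσT : ∀ x ∈ T, σ x ∈ T) (hσσ : ∀ x ∈ T, σ (σ x) = x) :
    2 * #{x ∈ T | x ≤ σ x} = #T + #{x ∈ T | σ x = x} := by
  have hlt : #{x ∈ T | σ x < x} = #{x ∈ T | x < σ x} := by
    refine card_nbij' σ σ ?_ ?_ ?_ ?_ <;> intro x hx <;>
      simp only [coe_filter, Set.mem_ofPred_eq] at hx
    · simpa [hσσ x hx.1] using ⟨hσT x hx.1, hx.2⟩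
    · simpa [hσσ x hx.1] using ⟨hσT x hx.1, hx.2⟩
    · exact hσσ x hx.1
    · exact hσσ x hx.1
  have hle : #{x ∈ T | x ≤ σ x} = #{x ∈ T | x < σ x} + #{x ∈ T | σ x = x} := by
    rw [← card_union_of_disjoint (disjoint_filter.2 fun x _ h h' => h.ne' h'), ← filter_or]
    congr 1
    refine filter_congr fun x _ => ?_
    rw [le_iff_lt_or_eq, eq_comm]
  have hT := card_filter_add_card_filter_not (s := T) fun x => x ≤ σ x
  simp only [not_le] at hT
  omega

theorem card_filter_range_two_mul_eq (n N : ℕ) :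
    #{x ∈ range N | 2 * x = n} = if Even n ∧ n < 2 * N then 1 else 0 := by
  split_ifs with h
  · obtain ⟨⟨j, rfl⟩, hlt⟩ := h
    rw [card_eq_one]
    exact ⟨j, by ext x; simp only [mem_filter, mem_range, mem_singleton]; omega⟩
  · rw [card_eq_zero, filter_eq_empty_iff]
    intro x hx hx'
    rw [mem_range] at hx
    exact h ⟨⟨x, by omega⟩, by omega⟩

namespace Omega2

section

variable {m p : ℕ}

def oneSub (m c : ℕ) : ℕ := (1 - (c : ZMod (m + 1))).val

theorem oneSub_lt (c : ℕ) : oneSub m c < m + 1 := ZMod.val_lt _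

theorem oneSub_oneSub {c : ℕ} (hc : c < m + 1) : oneSub m (oneSub m c) = c := by
  rw [oneSub, oneSub, ZMod.natCast_zmod_val, sub_sub_cancel, ZMod.val_natCast_of_lt hc]

theorem oneSub_mod_eq {a b : ℕ} (h : ((a + b : ℕ) : ZMod (m + 1)) = 1) :
    oneSub m (b % (m + 1)) = a % (m + 1) := by
  rw [oneSub, ZMod.natCast_mod, ← ZMod.val_natCast, ← h]
  push_cast
  ring_nf

theorem oneSub_eq_self_iff (hm : 1 ≤ m) {c : ℕ} (hc : c < m + 1) :
    oneSub m c = c ↔ 2 * c = m + 2 := by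
  have hself : oneSub m c = c ↔ (1 - c : ZMod (m + 1)) = c :=
    ⟨fun h => by rw [← ZMod.natCast_zmod_val (1 - (c : ZMod (m + 1))), ← oneSub, h],
      fun h => by rw [oneSub, h, ZMod.val_natCast_of_lt hc]⟩
  have hm1 : (m : ZMod (m + 1)) + 1 = 0 := by exact_mod_cast ZMod.natCast_self (m + 1)
  have hcast : (1 - c : ZMod (m + 1)) = c ↔
      ((2 * c : ℕ) : ZMod (m + 1)) = ((m + 2 : ℕ) : ZMod (m + 1)) := by
    push_cast
    constructor <;> intro h <;> linear_combination -h - hm1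
  rw [hself, hcast, ZMod.natCast_eq_natCast_iff', show m + 2 = 1 + (m + 1) by omega,
    Nat.add_mod_right, Nat.mod_eq_of_lt (by omega : 1 < m + 1)]
  rcases Nat.lt_or_ge (2 * c) (m + 1) with h | h
  · rw [Nat.mod_eq_of_lt h]; omega
  · rw [Nat.mod_eq_sub_mod h, Nat.mod_eq_of_lt (by omega)]; omega

theorem mul_add_lt_sq {s k : ℕ} (hs : s < m) (hk : k < m) : s * m + k < m ^ 2 := by
  nlinarith

theorem mul_add_inj {c c' r r' : ℕ} (hr : r < p) (hr' : r' < p) (h : c * p + r = c' * p + r') :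
    c = c' ∧ r = r' :=
  ⟨by rw [← Nat.mul_add_div_of_lt (a := c) hr, h, Nat.mul_add_div_of_lt hr'],
    by rw [← Nat.mul_add_mod_of_lt (a := c) hr, h, Nat.mul_add_mod_of_lt hr']⟩

def twist (m p n : ℕ) : ℕ := oneSub m (n / p) * p + (p - 2 - n % p)

def reduce (m p n : ℕ) : ℕ := n / p % (m + 1) * p + n % p

def rep (m p n : ℕ) : ℕ := min (reduce m p n) (twist m p (reduce m p n))

def grid (p Q : ℕ) : Finset ℕ := (range Q ×ˢ range (p - 1)).image fun x => x.1 * p + x.2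

theorem mem_grid {Q n : ℕ} :
    n ∈ grid p Q ↔ ∃ q < Q, ∃ r, r + 1 < p ∧ n = q * p + r := by
  simp only [grid, mem_image, mem_product, mem_range, Prod.exists]
  constructor
  · rintro ⟨q, r, ⟨hq, hr⟩, rfl⟩
    exact ⟨q, hq, r, by omega, rfl⟩
  · rintro ⟨q, hq, r, hr, rfl⟩
    exact ⟨q, r, ⟨hq, by omega⟩, rfl⟩

theorem card_image_mul_add {A B : Finset ℕ} (hB : ∀ r ∈ B, r < p) :
    #((A ×ˢ B).image fun x => x.1 * p + x.2) = #A * #B := by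
  rw [card_image_of_injOn, card_product]
  rintro ⟨c, r⟩ hx ⟨c', r'⟩ hy h
  simp only [coe_product, Set.mem_prod, mem_coe] at hx hy
  obtain ⟨rfl, rfl⟩ := mul_add_inj (hB r hx.2) (hB r' hy.2) h
  rfl

theorem card_grid (Q : ℕ) : #(grid p Q) = Q * (p - 1) := by
  rw [grid, card_image_mul_add fun r hr => by simp only [mem_range] at hr; omega, card_range,
    card_range]

theorem reduce_mul_add {q r : ℕ} (hr : r < p) : reduce m p (q * p + r) = q % (m + 1) * p + r := by
  rw [reduce, Nat.mul_add_div_of_lt hr, Nat.mul_add_mod_of_lt hr]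

theorem twist_mul_add {c r : ℕ} (hr : r < p) :
    twist m p (c * p + r) = oneSub m c * p + (p - 2 - r) := by
  rw [twist, Nat.mul_add_div_of_lt hr, Nat.mul_add_mod_of_lt hr]

theorem twist_twist {c r : ℕ} (hc : c < m + 1) (hr : r + 1 < p) :
    twist m p (twist m p (c * p + r)) = c * p + r := by
  rw [twist_mul_add (by omega), twist_mul_add (by omega), oneSub_oneSub hc]
  congr 1
  omega

theorem rep_mul_add {q r : ℕ} (hr : r < p) :
    rep m p (q * p + r) =
      min (q % (m + 1) * p + r) (oneSub m (q % (m + 1)) * p + (p - 2 - r)) := by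
  rw [rep, reduce_mul_add hr, twist_mul_add hr]

theorem rep_rep {q r : ℕ} (hr : r + 1 < p) :
    rep m p (rep m p (q * p + r)) = rep m p (q * p + r) := by
  have hc : q % (m + 1) < m + 1 := Nat.mod_lt _ (by omega)
  set c := q % (m + 1)
  have hself : rep m p (c * p + r) = rep m p (q * p + r) := by
    rw [rep_mul_add (by omega), rep_mul_add (by omega), Nat.mod_eq_of_lt hc]
  have htwist : rep m p (oneSub m c * p + (p - 2 - r)) = rep m p (q * p + r) := by
    rw [rep_mul_add (by omega), rep_mul_add (by omega), Nat.mod_eq_of_lt (oneSub_lt c),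
      oneSub_oneSub hc, show p - 2 - (p - 2 - r) = r by omega, min_comm]
  have hrep := rep_mul_add (m := m) (q := q) (by omega : r < p)
  rcases min_choice (c * p + r) (oneSub m c * p + (p - 2 - r)) with h | h <;>
    rw [h] at hrep <;> conv_lhs => rw [hrep]
  exacts [hself, htwist]

theorem rep_edge (s k : ℕ) {r : ℕ} (hr : r + 1 < p) :
    rep m p ((s * m + k + 1) * p + r) = rep m p ((k * m + s) * p + (p - 2 - r)) := by
  have hsum : (((s * m + k + 1) + (k * m + s) : ℕ) : ZMod (m + 1)) = 1 := by
    rw [show s * m + k + 1 + (k * m + s) = (s + k) * (m + 1) + 1 by ring]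
    push_cast
    rw [← Nat.cast_succ, ZMod.natCast_self, mul_zero, zero_add]
  rw [rep_mul_add (by omega), rep_mul_add (by omega), oneSub_mod_eq hsum,
    oneSub_mod_eq (a := k * m + s) (by rwa [Nat.add_comm (k * m + s)]),
    show p - 2 - (p - 2 - r) = r by omega, min_comm]

theorem rep_eq_self_iff {q r : ℕ} (hr : r < p) :
    rep m p (q * p + r) = q * p + r ↔ q < m + 1 ∧ q * p + r ≤ twist m p (q * p + r) := by
  rw [rep_mul_add hr, twist_mul_add hr]
  by_cases hq : q < m + 1
  · rw [Nat.mod_eq_of_lt hq, min_eq_left_iff]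
    exact (and_iff_right hq).symm
  · have hlt : q % (m + 1) * p + r < q * p + r := by
      have := Nat.mod_lt q (by omega : 0 < m + 1)
      have : q % (m + 1) * p < q * p := Nat.mul_lt_mul_of_pos_right (by omega) (by omega)
      omega
    simp only [hq, false_and, iff_false]
    exact (min_le_left _ _).trans_lt hlt |>.ne

theorem card_filter_twist_eq_self (hm : 1 ≤ m) (hp : 1 ≤ p) :
    #{n ∈ grid p (m + 1) | twist m p n = n} = chi m * chi p := by
  have hfix : {n ∈ grid p (m + 1) | twist m p n = n} =
      ({c ∈ range (m + 1) | 2 * c = m + 2} ×ˢ {r ∈ range (p - 1) | 2 * r = p - 2}).image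
        fun x => x.1 * p + x.2 := by
    ext n
    simp only [mem_filter, mem_grid, mem_image, mem_product, mem_range, Prod.exists]
    constructor
    · rintro ⟨⟨c, hc, r, hr, rfl⟩, h⟩
      rw [twist_mul_add (by omega)] at h
      obtain ⟨h1, h2⟩ := mul_add_inj (by omega : p - 2 - r < p) (by omega : r < p) h
      exact ⟨c, r, ⟨⟨hc, (oneSub_eq_self_iff hm hc).1 h1⟩, by omega, by omega⟩, rfl⟩
    · rintro ⟨c, r, ⟨⟨hc, hc2⟩, hr, hr2⟩, rfl⟩
      refine ⟨⟨c, hc, r, by omega, rfl⟩, ?_⟩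
      rw [twist_mul_add (by omega), (oneSub_eq_self_iff hm hc).2 hc2]
      congr 1
      omega
  rw [hfix, card_image_mul_add fun r hr => by simp only [mem_filter, mem_range] at hr; omega,
    card_filter_range_two_mul_eq, card_filter_range_two_mul_eq, chi, chi]
  congr 1
  · simp [Nat.even_add, show m + 2 < 2 * (m + 1) by omega]
  · rcases Nat.lt_or_ge p 2 with h | h
    · obtain rfl : p = 1 := by omega
      simp
    · simp [Nat.even_sub h, show p - 2 < 2 * (p - 1) by omega]

theorem two_mul_card_rep_eq_self (hm : 1 ≤ m) (hp : 1 ≤ p) :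
    2 * #{n ∈ grid p (m ^ 2 + 1) | rep m p n = n} = (m + 1) * (p - 1) + chi m * chi p := by
  have hfix :
      {n ∈ grid p (m ^ 2 + 1) | rep m p n = n} = {n ∈ grid p (m + 1) | n ≤ twist m p n} := by
    ext n
    simp only [mem_filter, mem_grid]
    constructor
    · rintro ⟨⟨q, -, r, hr, rfl⟩, h⟩
      obtain ⟨hq, hle⟩ := (rep_eq_self_iff (by omega)).1 h
      exact ⟨⟨q, hq, r, hr, rfl⟩, hle⟩
    · rintro ⟨⟨q, hq, r, hr, rfl⟩, hle⟩
      exact ⟨⟨q, by nlinarith, r, hr, rfl⟩, (rep_eq_self_iff (by omega)).2 ⟨hq, hle⟩⟩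
  have hmaps : ∀ n ∈ grid p (m + 1), twist m p n ∈ grid p (m + 1) := by
    simp only [mem_grid]
    rintro _ ⟨c, -, r, hr, rfl⟩
    exact ⟨oneSub m c, oneSub_lt c, p - 2 - r, by omega, twist_mul_add (by omega)⟩
  have hinv : ∀ n ∈ grid p (m + 1), twist m p (twist m p n) = n := by
    simp only [mem_grid]
    rintro _ ⟨c, hc, r, hr, rfl⟩
    exact twist_twist hc hr
  rw [hfix, two_mul_card_filter_le_apply hmaps hinv, card_grid, card_filter_twist_eq_self hm hp]

end

section

variable (F : Type*) [Field F] (m p : ℕ)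

def gens : Set F[X] :=
  { q : Polynomial F | ∃ k s : Fin m, ∃ t : ℕ, 1 ≤ t ∧ t ≤ p - 1 ∧
      q = (X : Polynomial F) ^ ((s : ℕ) * (m * p) + (k : ℕ) * p + (p - 1) + t)
          - (X : Polynomial F) ^ ((k : ℕ) * (m * p) + (s : ℕ) * p + (p - 1 - t)) }

noncomputable def mon (n : ℕ) : F[X] ⧸ Submodule.span F (gens F m p) :=
  Submodule.Quotient.mk (X ^ n)

variable {F m p}

theorem mem_gens_iff {g : F[X]} : g ∈ gens F m p ↔ ∃ s < m, ∃ k < m, ∃ r, r + 1 < p ∧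
    g = X ^ ((s * m + k + 1) * p + r) - X ^ ((k * m + s) * p + (p - 2 - r)) := by
  have hA (s k : ℕ) : (s * m + k + 1) * p = s * (m * p) + k * p + p := by ring
  have hB (s k : ℕ) : (k * m + s) * p = k * (m * p) + s * p := by ring
  constructor
  · rintro ⟨⟨k, hk⟩, ⟨s, hs⟩, t, ht1, ht2, rfl⟩
    refine ⟨s, hs, k, hk, t - 1, by omega, ?_⟩
    dsimp only
    rw [hA, hB]
    congr 2 <;> omega
  · rintro ⟨s, hs, k, hk, r, hr, rfl⟩
    refine ⟨⟨k, hk⟩, ⟨s, hs⟩, r + 1, by omega, by omega, ?_⟩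
    dsimp only
    rw [hA, hB]
    congr 2 <;> omega

theorem mon_edge {s k r : ℕ} (hs : s < m) (hk : k < m) (hr : r + 1 < p) :
    mon F m p ((s * m + k + 1) * p + r) = mon F m p ((k * m + s) * p + (p - 2 - r)) :=
  (Submodule.Quotient.eq _).2 <| Submodule.subset_span <|
    mem_gens_iff.2 ⟨s, hs, k, hk, r, hr, rfl⟩

theorem mon_add_succ {q r : ℕ} (hq : q + (m + 1) ≤ m ^ 2) (hr : r + 1 < p) :
    mon F m p ((q + (m + 1)) * p + r) = mon F m p (q * p + r) := by
  have hm : 0 < m := Nat.pos_of_ne_zero fun h => by subst h; simp at hq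
  have hq' : q / m * m + q % m = q := Nat.div_add_mod' q m
  have hs : q / m + 1 < m := by
    refine Nat.lt_of_mul_lt_mul_right (a := m) ?_
    rw [add_mul, one_mul, ← sq]
    omega
  calc mon F m p ((q + (m + 1)) * p + r)
      = mon F m p (((q / m + 1) * m + q % m + 1) * p + r) := by
        congr 3; nth_rewrite 1 [← hq']; ring
    _ = mon F m p ((q % m * m + q / m + 1) * p + (p - 2 - r)) :=
        mon_edge hs (Nat.mod_lt q hm) hr
    _ = mon F m p ((q / m * m + q % m) * p + (p - 2 - (p - 2 - r))) :=
        mon_edge (Nat.mod_lt q hm) (by omega) (by omega)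
    _ = mon F m p (q * p + r) := by rw [hq', show p - 2 - (p - 2 - r) = r by omega]

theorem mon_mod {q r : ℕ} (hq : q ≤ m ^ 2) (hr : r + 1 < p) :
    mon F m p (q * p + r) = mon F m p (q % (m + 1) * p + r) := by
  induction q using Nat.strong_induction_on with
  | _ q ih =>
    rcases Nat.lt_or_ge q (m + 1) with h | h
    · rw [Nat.mod_eq_of_lt h]
    · obtain ⟨q, rfl⟩ : ∃ q', q = q' + (m + 1) := ⟨q - (m + 1), by omega⟩
      rw [mon_add_succ hq hr, ih q (by omega) (by omega), Nat.add_mod_right]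

theorem mon_twist (hm : 1 ≤ m) {c r : ℕ} (hc : c < m + 1) (hr : r + 1 < p) :
    mon F m p (c * p + r) = mon F m p (oneSub m c * p + (p - 2 - r)) := by
  obtain ⟨a, ha, hsum, hedge⟩ : ∃ a ≤ m ^ 2, ((a + c : ℕ) : ZMod (m + 1)) = 1 ∧
      mon F m p (c * p + r) = mon F m p (a * p + (p - 2 - r)) := by
    rcases c with _ | k
    · refine ⟨1, by nlinarith, by simp, ?_⟩
      have := mon_edge (F := F) hm hm (by omega : p - 2 - r + 1 < p)
      simpa only [zero_mul, zero_add, show p - 2 - (p - 2 - r) = r by omega] using this.symm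
    · refine ⟨k * m, by nlinarith, ?_, by simpa using mon_edge (F := F) hm (by omega) hr⟩
      rw [show k * m + (k + 1) = k * (m + 1) + 1 by ring]
      push_cast
      rw [← Nat.cast_succ, ZMod.natCast_self, mul_zero, zero_add]
  calc mon F m p (c * p + r) = mon F m p (a * p + (p - 2 - r)) := hedge
    _ = mon F m p (a % (m + 1) * p + (p - 2 - r)) := mon_mod ha (by omega)
    _ = mon F m p (oneSub m c * p + (p - 2 - r)) := by
        rw [← oneSub_mod_eq hsum, Nat.mod_eq_of_lt hc]

theorem mon_rep (hm : 1 ≤ m) {q r : ℕ} (hq : q ≤ m ^ 2) (hr : r + 1 < p) :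
    mon F m p (q * p + r) = mon F m p (rep m p (q * p + r)) := by
  rw [rep_mul_add (by omega)]
  obtain h | h := min_choice (q % (m + 1) * p + r) (oneSub m (q % (m + 1)) * p + (p - 2 - r)) <;>
    rw [h]
  · exact mon_mod hq hr
  · exact (mon_mod hq hr).trans (mon_twist hm (Nat.mod_lt _ (by omega)) hr)

theorem finrank_span_gens (hm : 1 ≤ m) :
    Module.finrank F (Submodule.span F (gens F m p)) =
      #{n ∈ grid p (m ^ 2 + 1) | rep m p n ≠ n} := by
  refine finrank_span_eq_card_filter_ne ?_ ?_ ?_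
  · intro n hn
    obtain ⟨q, -, r, hr, rfl⟩ := mem_grid.1 hn
    exact rep_rep hr
  · intro g hg
    obtain ⟨s, hs, k, hk, r, hr, rfl⟩ := mem_gens_iff.1 hg
    exact ⟨_, mem_grid.2 ⟨s * m + k + 1, by linarith [mul_add_lt_sq hs hk], r, hr, rfl⟩,
      _, mem_grid.2 ⟨k * m + s, by linarith [mul_add_lt_sq hk hs], p - 2 - r, by omega, rfl⟩,
      rep_edge s k hr, rfl⟩
  · intro n hn
    obtain ⟨q, hq, r, hr, rfl⟩ := mem_grid.1 hn
    exact (Submodule.Quotient.eq _).1 (mon_rep hm (by omega) hr)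

end

end Omega2

/-- The dimension over `F` of the span of
`Ω₂ = { x^{smp+kp+p-1+t} - x^{kmp+sp+p-1-t} : 0 ≤ k,s ≤ m-1, 1 ≤ t ≤ p-1 }`
equals `((p-1)(2m²-m+1) - χ(m)χ(p))/2`. -/
theorem stmt_10 (F : Type*) [Field F] (m p : ℕ) (hm : 1 ≤ m) (hp : 1 ≤ p) :
    Module.finrank F (Submodule.span F
      { q : Polynomial F | ∃ k s : Fin m, ∃ t : ℕ, 1 ≤ t ∧ t ≤ p - 1 ∧
          q = (X : Polynomial F) ^ ((s : ℕ) * (m * p) + (k : ℕ) * p + (p - 1) + t)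
              - (X : Polynomial F) ^ ((k : ℕ) * (m * p) + (s : ℕ) * p + (p - 1 - t)) })
    = ((p - 1) * (2 * m ^ 2 - m + 1) - chi m * chi p) / 2 := by
  change Module.finrank F (Submodule.span F (Omega2.gens F m p)) = _
  have hfix := Omega2.two_mul_card_rep_eq_self hm hp
  have hsplit := card_filter_add_card_filter_not (s := Omega2.grid p (m ^ 2 + 1))
    fun n => Omega2.rep m p n = n
  rw [Omega2.card_grid] at hsplit
  simp only [← ne_eq] at hsplit
  have hchi : chi m * chi p ≤ 1 := by unfold chi; split_ifs <;> norm_num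
  have hcount :
      (p - 1) * (2 * m ^ 2 - m + 1) + (m + 1) * (p - 1) = 2 * ((m ^ 2 + 1) * (p - 1)) := by
    rw [mul_comm (m + 1), ← mul_add, show 2 * m ^ 2 - m + 1 + (m + 1) = 2 * (m ^ 2 + 1) by
      have : m ≤ m ^ 2 := Nat.le_self_pow two_ne_zero m
      omega]
    ring
  rw [Omega2.finrank_span_gens hm]
  omega
end

section
/- Let F be a field, m ≥ 2, p ≥ 2, and define for each triple (k,s,t) with k, s ∈ {0,...,m−1}, t ∈ {1,...,p−1} the polynomials g^{(1)}_{k,s,t}(x) = x^{smp+kp+p−1+t} + x^{kmp+sp+p−1−t} and g^{(2)}_{k,s,t}(x) = x^{smp+kp+p−1+t} − x^{kmp+sp+p−1−t} in F[x]. Let φ(k,s,t) = (s+1, 0, p−t) if k = m−1 and φ(k,s,t) = (s, k+1, p−t) if 0 ≤ k ≤ m−2. Then for every (a,b) ∈ D with (a,b) ≠ (m/2−1, p/2): (1) for j = 1, 2, the 2m−3 polynomials { g^{(j)}_{φ^i(m−1,a,b)}(x) : 1 ≤ i ≤ 2m−3 } are linearly independent over F, so the span of { g^{(j)}_v(x)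 : v ∈ Y_{a,b} } has dimension |Y_{a,b}| − 1 = 2m−3; (2) g^{(1)}_{(m−1,a,b)}(x) = Σ_{i=1}^{2m−3} (−1)^{i−1} g^{(1)}_{φ^i(m−1,a,b)}(x); and (3) g^{(2)}_{(m−1,a,b)}(x) = − Σ_{i=1}^{2m−3} g^{(2)}_{φ^i(m−1,a,b)}(x). -/
open Polynomial

/-- `g⁽¹⁾_{k,s,t}(x) = x^{smp+kp+p-1+t} + x^{kmp+sp+p-1-t}` for a triple `(k,s,t)`. -/
noncomputable def gOne (F : Type*) [Field F] (m p : ℕ) (v : ℕ × ℕ × ℕ) : Polynomial F :=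
  (X : Polynomial F) ^ (v.2.1 * (m * p) + v.1 * p + (p - 1) + v.2.2)
    + (X : Polynomial F) ^ (v.1 * (m * p) + v.2.1 * p + (p - 1 - v.2.2))

/-- `g⁽²⁾_{k,s,t}(x) = x^{smp+kp+p-1+t} - x^{kmp+sp+p-1-t}` for a triple `(k,s,t)`. -/
noncomputable def gTwo (F : Type*) [Field F] (m p : ℕ) (v : ℕ × ℕ × ℕ) : Polynomial F :=
  (X : Polynomial F) ^ (v.2.1 * (m * p) + v.1 * p + (p - 1) + v.2.2)
    - (X : Polynomial F) ^ (v.1 * (m * p) + v.2.1 * p + (p - 1 - v.2.2))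

/-- The chain map `φ(k,s,t) = (s+1, 0, p-t)` if `k = m-1`, and
`φ(k,s,t) = (s, k+1, p-t)` if `k ≤ m-2`. -/
def phiMap (m p : ℕ) : ℕ × ℕ × ℕ → ℕ × ℕ × ℕ :=
  fun v => if v.1 = m - 1 then (v.2.1 + 1, 0, p - v.2.2) else (v.2.1, v.1 + 1, p - v.2.2)

/-- The index set `D` of pairs `(a,b)` giving pairwise distinct loops:
if `m` is odd, `D = {(s,t) : 0 ≤ s ≤ (m-3)/2, 1 ≤ t ≤ p-1}`; if `m` is even,
`D = {(s,t) : 0 ≤ s ≤ (m-4)/2, 1 ≤ t ≤ p-1} ∪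
{((m-2)/2, t) : 1 ≤ t ≤ (p-1+χ(p))/2}` (the bounds are written multiplied
through by 2 to avoid natural division). -/
def Dset (m p : ℕ) : Set (ℕ × ℕ) :=
  { ab | (1 ≤ ab.2 ∧ ab.2 ≤ p - 1) ∧
      (if Even m
        then (2 * ab.1 + 4 ≤ m ∨
              (2 * ab.1 + 2 = m ∧ 2 * ab.2 ≤ p - 1 + (if Even p then 1 else 0)))
        else 2 * ab.1 + 3 ≤ m) }

/-- The loop `Y_{a,b} = { φʲ(m-1,a,b) : 0 ≤ j ≤ 2(m-1)-1 }` as a set of triples. -/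
def loopY (m p : ℕ) (a b : ℕ) : Set (ℕ × ℕ × ℕ) :=
  { v | ∃ i ≤ 2 * (m - 1) - 1, v = (phiMap m p)^[i] (m - 1, a, b) }

/-! ### Auxiliary machinery -/

/-- Explicit formula for the orbit of `(m-1,a,b)` under `phiMap`. -/
def orbAux (m p a b i : ℕ) : ℕ × ℕ × ℕ :=
  if i = 0 then (m - 1, a, b)
  else if i ≤ 2*m - 3 - 2*a then
    if i % 2 = 1 then (a + 1 + (i-1)/2, (i-1)/2, p - b)
    else (i/2 - 1, a + 1 + i/2, b)
  else
    if i % 2 = 1 then ((i+1)/2 - (m - a), (i+1)/2, p - b)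
    else (i/2, i/2 - (m - 1 - a), b)

/-- "Plus" exponent of a triple. -/
def ePAux (m p : ℕ) (v : ℕ × ℕ × ℕ) : ℕ := v.2.1 * (m * p) + v.1 * p + (p - 1) + v.2.2

/-- "Minus" exponent of a triple. -/
def eMAux (m p : ℕ) (v : ℕ × ℕ × ℕ) : ℕ := v.1 * (m * p) + v.2.1 * p + (p - 1 - v.2.2)

/-- Exponent along the orbit. -/
def eFAux (m p a b i : ℕ) : ℕ := ePAux m p (orbAux m p a b i)

section OrbitLemmas

variable {m p a b : ℕ}

set_option maxHeartbeats 4000000 in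
lemma orbAux_step (hm : 2 ≤ m) (ha : a + 2 ≤ m) (hb1 : 1 ≤ b) (hb2 : b + 1 ≤ p)
    {i : ℕ} (hi : i ≤ 2*m - 3) :
    orbAux m p a b (i+1) = phiMap m p (orbAux m p a b i) := by
  rw [show orbAux m p a b i = if i = 0 then (m - 1, a, b)
      else if i ≤ 2*m - 3 - 2*a then
        if i % 2 = 1 then (a + 1 + (i-1)/2, (i-1)/2, p - b)
        else (i/2 - 1, a + 1 + i/2, b)
      else
        if i % 2 = 1 then ((i+1)/2 - (m - a), (i+1)/2, p - b)
        else (i/2, i/2 - (m - 1 - a), b) from rfl,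
      apply_ite (phiMap m p), apply_ite (phiMap m p), apply_ite (phiMap m p),
      apply_ite (phiMap m p)]
  simp only [phiMap, orbAux]
  split_ifs <;> simp only [Prod.mk.injEq, and_true, true_and] at * <;> omega

lemma orbAux_periodic (hm : 2 ≤ m) (ha : a + 2 ≤ m) :
    orbAux m p a b (2*m - 2) = orbAux m p a b 0 := by
  simp only [orbAux]
  split_ifs <;> simp only [Prod.mk.injEq, and_true, true_and] <;> omega

lemma orbAux_valid (hm : 2 ≤ m) (ha : a + 2 ≤ m) (hb1 : 1 ≤ b) (hb2 : b + 1 ≤ p)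
    {i : ℕ} (hi : i ≤ 2*m - 2) :
    (orbAux m p a b i).1 + 1 ≤ m ∧ (orbAux m p a b i).2.1 + 1 ≤ m ∧
      1 ≤ (orbAux m p a b i).2.2 ∧ (orbAux m p a b i).2.2 + 1 ≤ p := by
  simp only [orbAux]
  split_ifs <;> simp only <;> omega

lemma orbAux_inj (hm : 2 ≤ m) (ha : a + 2 ≤ m) (hb1 : 1 ≤ b) (hb2 : b + 1 ≤ p)
    (hexc : ¬(2 * a + 2 = m ∧ 2 * b = p))
    {i j : ℕ} (hi : i ≤ 2*m - 3) (hj : j ≤ 2*m - 3)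
    (h : orbAux m p a b i = orbAux m p a b j) : i = j := by
  simp only [orbAux] at h
  split_ifs at h <;> simp only [Prod.mk.injEq, and_true, true_and] at h <;> omega

lemma eMAux_phi (hm : 1 ≤ m) {v : ℕ × ℕ × ℕ} (h1 : 1 ≤ v.2.2) (h2 : v.2.2 + 1 ≤ p) :
    eMAux m p (phiMap m p v) = ePAux m p v := by
  obtain ⟨k, s, t⟩ := v
  simp only [phiMap, ePAux, eMAux] at *
  split_ifs with h
  · subst h
    have e1 : (s+1)*(m*p) = s*(m*p) + m*p := by ring
    have e2 : (m-1)*p + p = m*p := by cases m with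
      | zero => omega
      | succ n => simp only [Nat.succ_sub_one]; ring
    simp only []
    omega
  · simp only []
    have e1 : (k+1)*p = k*p + p := by ring
    omega

lemma ePAux_inj (hp : 2 ≤ p) {v w : ℕ × ℕ × ℕ}
    (hv : v.1 + 1 ≤ m ∧ 1 ≤ v.2.2 ∧ v.2.2 + 1 ≤ p)
    (hw : w.1 + 1 ≤ m ∧ 1 ≤ w.2.2 ∧ w.2.2 + 1 ≤ p)
    (h : ePAux m p v = ePAux m p w) : v = w := by
  obtain ⟨k, s, t⟩ := v
  obtain ⟨k', s', t'⟩ := w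
  dsimp only at hv hw
  simp only [ePAux] at h hv hw
  have key : ∀ s k t : ℕ, 1 ≤ t → s * (m*p) + k * p + (p-1) + t = p * (s*m + k + 1) + (t-1) := by
    intro s k t ht
    have : p * (s*m+k+1) = s*(m*p) + k*p + p := by ring
    omega
  rw [key s k t hv.2.1, key s' k' t' hw.2.1] at h
  have ht : t - 1 = t' - 1 := by
    have := congrArg (· % p) h
    simpa [Nat.mul_add_mod, Nat.mod_eq_of_lt (show t - 1 < p by omega),
      Nat.mod_eq_of_lt (show t' - 1 < p by omega)] using this
  have hA : s*m + k + 1 = s'*m + k' + 1 := by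
    have := congrArg (· / p) h
    simpa [Nat.mul_add_div (show 0 < p by omega),
      Nat.div_eq_of_lt (show t - 1 < p by omega),
      Nat.div_eq_of_lt (show t' - 1 < p by omega)] using this
  have hA' : m * s + k = m * s' + k' := by
    have h1 : s * m = m * s := Nat.mul_comm _ _
    have h2 : s' * m = m * s' := Nat.mul_comm _ _
    omega
  have hk : k = k' := by
    have := congrArg (· % m) hA'
    simpa [Nat.mul_add_mod, Nat.mod_eq_of_lt (show k < m by omega),
      Nat.mod_eq_of_lt (show k' < m by omega)] using this
  have hs : s = s' := by
    have := congrArg (· / m) hA'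
    have hm0 : 0 < m := by omega
    simpa [Nat.mul_add_div hm0, Nat.div_eq_of_lt (show k < m by omega),
      Nat.div_eq_of_lt (show k' < m by omega)] using this
  simp only [Prod.mk.injEq]
  exact ⟨hk, hs, by omega⟩

end OrbitLemmas

lemma fin_sum_ite_stmt11 {M : Type*} [AddCommMonoid M] {N : ℕ} (c : ℕ) (hc : c < N) (f : Fin N → M) :
    (∑ i : Fin N, if (i : ℕ) = c then f i else 0) = f ⟨c, hc⟩ := by
  rw [Finset.sum_eq_single ⟨c, hc⟩]
  · simp
  · intro i _ hne
    exact if_neg (fun hh => hne (Fin.ext hh))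
  · intro h; exact absurd (Finset.mem_univ _) h

lemma li_chain_stmt11 (F : Type*) [Field F] (N : ℕ) (e : ℕ → ℕ)
    (he : ∀ i ≤ N, ∀ j ≤ N, e i = e j → i = j) (ε : F) (hε : ε ≠ 0) :
    LinearIndependent F
      (fun i : Fin N => (X : Polynomial F) ^ (e ((i : ℕ) + 1)) + ε • (X : Polynomial F) ^ (e (i : ℕ))) := by
  rw [Fintype.linearIndependent_iff]
  intro g hg
  have hcoeff : ∀ j : ℕ, j ≤ N →
      (∑ i : Fin N, ((if (i : ℕ) + 1 = j then g i else 0) + if (i : ℕ) = j then ε * g i else 0)) = 0 := by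
    intro j hj
    have h0 := congrArg (fun q => Polynomial.coeff q (e j)) hg
    simp only [Polynomial.finset_sum_coeff, Polynomial.coeff_smul, Polynomial.coeff_add,
      Polynomial.coeff_X_pow, Polynomial.coeff_zero, smul_eq_mul] at h0
    refine Eq.trans (Finset.sum_congr rfl (fun i _ => ?_)) h0
    have c1 : (e j = e ((i : ℕ) + 1)) ↔ ((i : ℕ) + 1 = j) :=
      ⟨fun h => he _ (by omega) _ hj h.symm, fun h => by rw [h]⟩
    have c2 : (e j = e (i : ℕ)) ↔ ((i : ℕ) = j) :=
      ⟨fun h => he _ (by omega) _ hj h.symm, fun h => by rw [h]⟩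
    simp only [c1, c2]
    by_cases h1 : (i : ℕ) + 1 = j
    · by_cases h2 : (i : ℕ) = j
      · exfalso; omega
      · rw [if_pos h1, if_pos h1, if_neg h2, if_neg h2]; ring
    · by_cases h2 : (i : ℕ) = j
      · rw [if_neg h1, if_neg h1, if_pos h2, if_pos h2]; ring
      · rw [if_neg h1, if_neg h1, if_neg h2, if_neg h2]; ring
  have main : ∀ j : ℕ, ∀ h : j < N, g ⟨j, h⟩ = 0 := by
    intro j
    induction j with
    | zero =>
      intro h0
      have hc := hcoeff 0 (by omega)
      rw [Finset.sum_add_distrib, Finset.sum_eq_zero (fun i _ => if_neg (by omega)),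
        fin_sum_ite_stmt11 0 h0, zero_add] at hc
      exact (mul_eq_zero.mp hc).resolve_left hε
    | succ n ih =>
      intro h
      have hc := hcoeff (n + 1) (by omega)
      have e1 : (∑ i : Fin N, if (i : ℕ) + 1 = n + 1 then g i else 0)
          = (∑ i : Fin N, if (i : ℕ) = n then g i else 0) := by
        refine Finset.sum_congr rfl (fun i _ => ?_)
        congr 1
        simp [Nat.succ_inj]
      rw [Finset.sum_add_distrib, e1, fin_sum_ite_stmt11 n (by omega), fin_sum_ite_stmt11 (n + 1) h,
        ih (by omega), zero_add] at hc
      exact (mul_eq_zero.mp hc).resolve_left hε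
  intro i
  have := main i.1 i.2
  simpa using this

lemma alt_sum_stmt11 (F : Type*) [Field F] (u : ℕ → Polynomial F) (n : ℕ) (hn : 1 ≤ n) :
    ∑ i ∈ Finset.Icc 1 n, ((-1 : F) ^ (i - 1)) • (u i + u (i - 1))
      = ((-1 : F) ^ (n - 1)) • u n + u 0 := by
  induction n with
  | zero => omega
  | succ n ih =>
    rcases Nat.eq_zero_or_pos n with rfl | hn'
    · simp
    · rw [Finset.sum_Icc_succ_top (by omega), ih (by omega)]
      have h1 : n - 1 + 1 = n := by omega
      have h2 : n + 1 - 1 = n := by omega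
      have hs : ((-1 : F)) ^ n = -((-1 : F) ^ (n - 1)) := by
        conv_lhs => rw [← h1]
        rw [pow_succ]; ring
      rw [h2, hs]
      generalize ((-1 : F) ^ (n - 1)) = c
      simp only [neg_smul, smul_add, smul_neg]
      abel

lemma tel_sum_stmt11 (F : Type*) [Field F] (u : ℕ → Polynomial F) (n : ℕ) :
    ∑ i ∈ Finset.Icc 1 n, (u i - u (i - 1)) = u n - u 0 := by
  induction n with
  | zero => simp
  | succ n ih =>
    rw [Finset.sum_Icc_succ_top (by omega), ih]
    simp only [Nat.add_sub_cancel]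
    abel

/-- (Lemma 7(i) of the paper.)  For every `(a,b) ∈ D` with
`(a,b) ≠ (m/2-1, p/2)`:  for `j = 1,2` the `2m-3` polynomials
`g⁽ʲ⁾_{φⁱ(m-1,a,b)}`, `1 ≤ i ≤ 2m-3`, are linearly independent, so the span of
`{g⁽ʲ⁾_v : v ∈ Y_{a,b}}` has dimension `|Y_{a,b}| - 1 = 2m-3`; moreover
`g⁽¹⁾_{(m-1,a,b)} = Σ_{i=1}^{2m-3} (-1)^{i-1} g⁽¹⁾_{φⁱ(m-1,a,b)}` and
`g⁽²⁾_{(m-1,a,b)} = - Σ_{i=1}^{2m-3} g⁽²⁾_{φⁱ(m-1,a,b)}`. -/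
theorem stmt_11 (F : Type*) [Field F] (m p : ℕ) (hm : 2 ≤ m) (hp : 2 ≤ p)
    (a b : ℕ) (hD : (a, b) ∈ Dset m p)
    (hexc : ¬(2 * a + 2 = m ∧ 2 * b = p)) :
    (LinearIndependent F
        (fun i : Fin (2 * m - 3) => gOne F m p ((phiMap m p)^[(i : ℕ) + 1] (m - 1, a, b)))) ∧
    (LinearIndependent F
        (fun i : Fin (2 * m - 3) => gTwo F m p ((phiMap m p)^[(i : ℕ) + 1] (m - 1, a, b)))) ∧
    (Module.finrank F (Submodule.span F (gOne F m p '' loopY m p a b)) = 2 * m - 3) ∧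
    (Module.finrank F (Submodule.span F (gTwo F m p '' loopY m p a b)) = 2 * m - 3) ∧
    (gOne F m p (m - 1, a, b)
      = ∑ i ∈ Finset.Icc 1 (2 * m - 3),
          ((-1 : F) ^ (i - 1)) • gOne F m p ((phiMap m p)^[i] (m - 1, a, b))) ∧
    (gTwo F m p (m - 1, a, b)
      = - ∑ i ∈ Finset.Icc 1 (2 * m - 3),
            gTwo F m p ((phiMap m p)^[i] (m - 1, a, b))) := by
  classical
  -- basic bounds from `Dset`
  have hDm := hD
  simp only [Dset, Set.mem_setOf_eq] at hDm
  have hb1 : 1 ≤ b := hDm.1.1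
  have hb2 : b + 1 ≤ p := by have := hDm.1.2; omega
  have ha : a + 2 ≤ m := by
    have hD2 := hDm.2
    split_ifs at hD2 <;> omega
  -- the orbit
  have hiter : ∀ i ≤ 2*m - 2, (phiMap m p)^[i] (m - 1, a, b) = orbAux m p a b i := by
    intro i hi
    induction i with
    | zero => rfl
    | succ n ih =>
      rw [Function.iterate_succ_apply', ih (by omega)]
      exact (orbAux_step hm ha hb1 hb2 (by omega)).symm
  -- injectivity of exponents
  have he : ∀ i ≤ 2*m - 3, ∀ j ≤ 2*m - 3, eFAux m p a b i = eFAux m p a b j → i = j := by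
    intro i hi j hj h
    have h1 := orbAux_valid hm ha hb1 hb2 (show i ≤ 2*m - 2 by omega)
    have h2 := orbAux_valid hm ha hb1 hb2 (show j ≤ 2*m - 2 by omega)
    exact orbAux_inj hm ha hb1 hb2 hexc hi hj
      (ePAux_inj hp ⟨h1.1, h1.2.2.1, h1.2.2.2⟩ ⟨h2.1, h2.2.2.1, h2.2.2.2⟩ h)
  -- decomposition of gOne/gTwo along the orbit
  have hgOne : ∀ i, 1 ≤ i → i ≤ 2*m - 2 → gOne F m p (orbAux m p a b i)
      = X ^ (eFAux m p a b i) + X ^ (eFAux m p a b (i-1)) := by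
    intro i h1 h2
    have hstep : orbAux m p a b i = phiMap m p (orbAux m p a b (i-1)) := by
      have h3 := orbAux_step hm ha hb1 hb2 (show i - 1 ≤ 2*m - 3 by omega)
      rwa [show i - 1 + 1 = i by omega] at h3
    have hval := orbAux_valid hm ha hb1 hb2 (show i - 1 ≤ 2*m - 2 by omega)
    have hm' : eMAux m p (orbAux m p a b i) = eFAux m p a b (i-1) := by
      rw [hstep]; exact eMAux_phi (by omega) hval.2.2.1 hval.2.2.2
    rw [show gOne F m p (orbAux m p a b i)
        = X ^ (ePAux m p (orbAux m p a b i)) + X ^ (eMAux m p (orbAux m p a b i)) from rfl, hm']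
    rfl
  have hgTwo : ∀ i, 1 ≤ i → i ≤ 2*m - 2 → gTwo F m p (orbAux m p a b i)
      = X ^ (eFAux m p a b i) - X ^ (eFAux m p a b (i-1)) := by
    intro i h1 h2
    have hstep : orbAux m p a b i = phiMap m p (orbAux m p a b (i-1)) := by
      have h3 := orbAux_step hm ha hb1 hb2 (show i - 1 ≤ 2*m - 3 by omega)
      rwa [show i - 1 + 1 = i by omega] at h3
    have hval := orbAux_valid hm ha hb1 hb2 (show i - 1 ≤ 2*m - 2 by omega)
    have hm' : eMAux m p (orbAux m p a b i) = eFAux m p a b (i-1) := by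
      rw [hstep]; exact eMAux_phi (by omega) hval.2.2.1 hval.2.2.2
    rw [show gTwo F m p (orbAux m p a b i)
        = X ^ (ePAux m p (orbAux m p a b i)) - X ^ (eMAux m p (orbAux m p a b i)) from rfl, hm']
    rfl
  -- the initial polynomial
  have hper : orbAux m p a b (2*m - 2) = orbAux m p a b 0 := orbAux_periodic hm ha
  have heq0 : eFAux m p a b (2*m - 2) = eFAux m p a b 0 := congrArg (ePAux m p) hper
  have hgOne0 : gOne F m p (m - 1, a, b)
      = X ^ (eFAux m p a b 0) + X ^ (eFAux m p a b (2*m - 3)) := by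
    have h4 := hgOne (2*m - 2) (by omega) (le_refl _)
    rw [hper, heq0, show 2*m - 2 - 1 = 2*m - 3 by omega] at h4
    exact h4
  have hgTwo0 : gTwo F m p (m - 1, a, b)
      = X ^ (eFAux m p a b 0) - X ^ (eFAux m p a b (2*m - 3)) := by
    have h4 := hgTwo (2*m - 2) (by omega) (le_refl _)
    rw [hper, heq0, show 2*m - 2 - 1 = 2*m - 3 by omega] at h4
    exact h4
  -- linear independence in orbit form
  have hli1 : LinearIndependent F
      (fun i : Fin (2*m - 3) => gOne F m p (orbAux m p a b ((i : ℕ) + 1))) := by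
    have hfam : (fun i : Fin (2*m - 3) => gOne F m p (orbAux m p a b ((i : ℕ) + 1)))
        = (fun i : Fin (2*m - 3) => (X : Polynomial F) ^ (eFAux m p a b ((i : ℕ) + 1))
            + (1 : F) • (X : Polynomial F) ^ (eFAux m p a b (i : ℕ))) := by
      funext i
      have hlt := i.isLt
      rw [hgOne ((i : ℕ) + 1) (by omega) (by omega), Nat.add_sub_cancel, one_smul]
    rw [hfam]
    exact li_chain_stmt11 F (2*m - 3) (eFAux m p a b) he 1 one_ne_zero
  have hli2 : LinearIndependent F
      (fun i : Fin (2*m - 3) => gTwo F m p (orbAux m p a b ((i : ℕ) + 1))) := by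
    have hfam : (fun i : Fin (2*m - 3) => gTwo F m p (orbAux m p a b ((i : ℕ) + 1)))
        = (fun i : Fin (2*m - 3) => (X : Polynomial F) ^ (eFAux m p a b ((i : ℕ) + 1))
            + (-1 : F) • (X : Polynomial F) ^ (eFAux m p a b (i : ℕ))) := by
      funext i
      have hlt := i.isLt
      rw [hgTwo ((i : ℕ) + 1) (by omega) (by omega), Nat.add_sub_cancel, neg_one_smul,
        sub_eq_add_neg]
    rw [hfam]
    exact li_chain_stmt11 F (2*m - 3) (eFAux m p a b) he (-1) (by norm_num)
  -- families in φ-iterate form equal orbit form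
  have hfam1 : (fun i : Fin (2*m - 3) => gOne F m p ((phiMap m p)^[(i : ℕ) + 1] (m - 1, a, b)))
      = (fun i : Fin (2*m - 3) => gOne F m p (orbAux m p a b ((i : ℕ) + 1))) := by
    funext i
    have hlt := i.isLt
    rw [hiter _ (by omega)]
  have hfam2 : (fun i : Fin (2*m - 3) => gTwo F m p ((phiMap m p)^[(i : ℕ) + 1] (m - 1, a, b)))
      = (fun i : Fin (2*m - 3) => gTwo F m p (orbAux m p a b ((i : ℕ) + 1))) := by
    funext i
    have hlt := i.isLt
    rw [hiter _ (by omega)]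
  -- the two sum identities
  have hId1 : gOne F m p (m - 1, a, b)
      = ∑ i ∈ Finset.Icc 1 (2 * m - 3),
          ((-1 : F) ^ (i - 1)) • gOne F m p ((phiMap m p)^[i] (m - 1, a, b)) := by
    have hsum : ∑ i ∈ Finset.Icc 1 (2 * m - 3),
        ((-1 : F) ^ (i - 1)) • gOne F m p ((phiMap m p)^[i] (m - 1, a, b))
        = ∑ i ∈ Finset.Icc 1 (2 * m - 3),
          ((-1 : F) ^ (i - 1)) • ((X : Polynomial F) ^ (eFAux m p a b i)
            + X ^ (eFAux m p a b (i - 1))) := by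
      refine Finset.sum_congr rfl (fun i hi => ?_)
      rw [Finset.mem_Icc] at hi
      rw [hiter i (by omega), hgOne i (by omega) (by omega)]
    rw [hsum, alt_sum_stmt11 F (fun j => (X : Polynomial F) ^ (eFAux m p a b j)) (2*m - 3)
      (by omega), Even.neg_one_pow ⟨m - 2, by omega⟩, one_smul, hgOne0]
    exact add_comm _ _
  have hId2 : gTwo F m p (m - 1, a, b)
      = - ∑ i ∈ Finset.Icc 1 (2 * m - 3),
            gTwo F m p ((phiMap m p)^[i] (m - 1, a, b)) := by
    have hsum : ∑ i ∈ Finset.Icc 1 (2 * m - 3),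
        gTwo F m p ((phiMap m p)^[i] (m - 1, a, b))
        = ∑ i ∈ Finset.Icc 1 (2 * m - 3),
          ((X : Polynomial F) ^ (eFAux m p a b i) - X ^ (eFAux m p a b (i - 1))) := by
      refine Finset.sum_congr rfl (fun i hi => ?_)
      rw [Finset.mem_Icc] at hi
      rw [hiter i (by omega), hgTwo i (by omega) (by omega)]
    rw [hsum, tel_sum_stmt11 F (fun j => (X : Polynomial F) ^ (eFAux m p a b j)) (2*m - 3),
      hgTwo0, neg_sub]
  -- image of the loop
  have himg1 : gOne F m p '' loopY m p a b
      = insert (gOne F m p (m - 1, a, b))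
          (Set.range fun i : Fin (2*m - 3) => gOne F m p (orbAux m p a b ((i : ℕ) + 1))) := by
    ext q
    simp only [Set.mem_image, loopY, Set.mem_setOf_eq, Set.mem_insert_iff, Set.mem_range]
    constructor
    · rintro ⟨v, ⟨i, hi, rfl⟩, rfl⟩
      rcases Nat.eq_zero_or_pos i with rfl | hpos
      · left; rfl
      · right
        refine ⟨⟨i - 1, by omega⟩, ?_⟩
        have hcast : ((⟨i - 1, by omega⟩ : Fin (2*m - 3)) : ℕ) = i - 1 := rfl
        rw [hcast, show i - 1 + 1 = i by omega, hiter i (by omega)]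
    · rintro (rfl | ⟨i, rfl⟩)
      · exact ⟨(m - 1, a, b), ⟨0, by omega, rfl⟩, rfl⟩
      · have hlt := i.isLt
        exact ⟨orbAux m p a b ((i : ℕ) + 1), ⟨(i : ℕ) + 1, by omega,
          (hiter _ (by omega)).symm⟩, rfl⟩
  have himg2 : gTwo F m p '' loopY m p a b
      = insert (gTwo F m p (m - 1, a, b))
          (Set.range fun i : Fin (2*m - 3) => gTwo F m p (orbAux m p a b ((i : ℕ) + 1))) := by
    ext q
    simp only [Set.mem_image, loopY, Set.mem_setOf_eq, Set.mem_insert_iff, Set.mem_range]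
    constructor
    · rintro ⟨v, ⟨i, hi, rfl⟩, rfl⟩
      rcases Nat.eq_zero_or_pos i with rfl | hpos
      · left; rfl
      · right
        refine ⟨⟨i - 1, by omega⟩, ?_⟩
        have hcast : ((⟨i - 1, by omega⟩ : Fin (2*m - 3)) : ℕ) = i - 1 := rfl
        rw [hcast, show i - 1 + 1 = i by omega, hiter i (by omega)]
    · rintro (rfl | ⟨i, rfl⟩)
      · exact ⟨(m - 1, a, b), ⟨0, by omega, rfl⟩, rfl⟩
      · have hlt := i.isLt
        exact ⟨orbAux m p a b ((i : ℕ) + 1), ⟨(i : ℕ) + 1, by omega,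
          (hiter _ (by omega)).symm⟩, rfl⟩
  -- membership of the initial polynomial in the span
  have hmem1 : gOne F m p (m - 1, a, b) ∈ Submodule.span F
      (Set.range fun i : Fin (2*m - 3) => gOne F m p (orbAux m p a b ((i : ℕ) + 1))) := by
    rw [hId1]
    refine Submodule.sum_mem _ (fun i hi => ?_)
    rw [Finset.mem_Icc] at hi
    refine Submodule.smul_mem _ _ (Submodule.subset_span ?_)
    refine ⟨⟨i - 1, by omega⟩, ?_⟩
    show gOne F m p (orbAux m p a b (i - 1 + 1)) = _
    rw [show i - 1 + 1 = i by omega, hiter i (by omega)]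
  have hmem2 : gTwo F m p (m - 1, a, b) ∈ Submodule.span F
      (Set.range fun i : Fin (2*m - 3) => gTwo F m p (orbAux m p a b ((i : ℕ) + 1))) := by
    rw [hId2]
    refine Submodule.neg_mem _ (Submodule.sum_mem _ (fun i hi => ?_))
    rw [Finset.mem_Icc] at hi
    refine Submodule.subset_span ?_
    refine ⟨⟨i - 1, by omega⟩, ?_⟩
    show gTwo F m p (orbAux m p a b (i - 1 + 1)) = _
    rw [show i - 1 + 1 = i by omega, hiter i (by omega)]
  refine ⟨by rw [hfam1]; exact hli1, by rw [hfam2]; exact hli2, ?_, ?_, hId1, hId2⟩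
  · rw [himg1, Submodule.span_insert_eq_span hmem1, finrank_span_eq_card hli1,
      Fintype.card_fin]
  · rw [himg2, Submodule.span_insert_eq_span hmem2, finrank_span_eq_card hli2,
      Fintype.card_fin]
end
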